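/- arXiv:math/0504227 — 13 statements merged into one kernel-verified Lean document; each statement's English description precedes it below -/
import Mathlib

section
/- Let K be a field, A a unital K-algebra, and x ∈ A such that the left-multiplication operator l_x : a ↦ xa has finite-dimensional kernel and finite-dimensional cokernel (i.e., A/xA is finite-dimensional over K). Then there exists a K-linear endomorphism T of A such that: (i) for every s ∈ A the commutator T∘r_s − r_s∘T has finite rank; (ii) T∘l_x − id and l_x∘T − id have finite rank. In other words, the class of x is invertible in the Fredholm extension of A. -/
set_option linter.unnecessarySimpa false

private theorem fd_map {K V : Type*} [Field K] [AddCommGroup V] [Module K V]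
    (f : V →ₗ[K] V) (p : Submodule K V) [FiniteDimensional K p] :
    FiniteDimensional K (p.map f) := by
  have h : p.map f = LinearMap.range (f ∘ₗ p.subtype) := by
    rw [LinearMap.range_comp, Submodule.range_subtype]
  rw [h]
  infer_instance

/-- If `x ∈ A` is a Fredholm element (the left multiplication `l_x` has
finite-dimensional kernel and cokernel), then there is a linear endomorphism `T` of `A`
which almost commutes with all right multiplications and which inverts `l_x` modulo
finite-rank operators; i.e. the class of `x` is invertible in the Fredholm extension. -/
theorem fredholm_element_invertible
    (K A : Type*) [Field K] [Ring A] [Algebra K A] (x : A)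
    (hker : FiniteDimensional K (LinearMap.ker (LinearMap.mulLeft K x)))
    (hcoker : FiniteDimensional K (A ⧸ LinearMap.range (LinearMap.mulLeft K x))) :
    ∃ T : A →ₗ[K] A,
      (∀ s : A, FiniteDimensional K
        (LinearMap.range (T ∘ₗ LinearMap.mulRight K s - LinearMap.mulRight K s ∘ₗ T))) ∧
      FiniteDimensional K (LinearMap.range (T ∘ₗ LinearMap.mulLeft K x - LinearMap.id)) ∧
      FiniteDimensional K (LinearMap.range (LinearMap.mulLeft K x ∘ₗ T - LinearMap.id)) := by
  classical
  set L := LinearMap.mulLeft K x with hL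
  set N := LinearMap.ker L with hNdef
  set R := LinearMap.range L with hRdef
  obtain ⟨C, hC⟩ := Submodule.exists_isCompl N
  obtain ⟨F, hF⟩ := Submodule.exists_isCompl R
  haveI : FiniteDimensional K F :=
    (Submodule.quotientEquivOfIsCompl R F hF).finiteDimensional
  have hmem : ∀ a ∈ C, L a ∈ R := fun a _ => LinearMap.mem_range_self _ a
  let f : C →ₗ[K] R := L.restrict hmem
  let pN : A →ₗ[K] N := N.linearProjOfIsCompl C hC
  let pC : A →ₗ[K] C := C.linearProjOfIsCompl N hC.symm
  let pR : A →ₗ[K] R := R.linearProjOfIsCompl F hF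
  let pF : A →ₗ[K] F := F.linearProjOfIsCompl R hF.symm
  have hdecomp : ∀ a : A, (pN a : A) + (pC a : A) = a := fun a =>
    Submodule.projection_add_projection_eq_self hC a
  have hdecompR : ∀ a : A, (pR a : A) + (pF a : A) = a := fun a =>
    Submodule.projection_add_projection_eq_self hF a
  have hLpC : ∀ a : A, L (pC a : A) = L a := by
    intro a
    have hn : L (pN a : A) = 0 := (pN a).2
    calc L (pC a : A) = L ((pN a : A) + (pC a : A)) := by rw [map_add, hn, zero_add]
      _ = L a := by rw [hdecomp]
  have hf : Function.Bijective f := by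
    constructor
    · intro c₁ c₂ h
      have h' : ((c₁ : A) - c₂) ∈ N := by
        simp only [hNdef, LinearMap.mem_ker, map_sub]
        have := congrArg (Subtype.val) h
        simp only [f, LinearMap.restrict_apply] at this
        simp [sub_eq_zero, this]
      have h2 : ((c₁ : A) - c₂) ∈ C := sub_mem c₁.2 c₂.2
      have h3 : ((c₁ : A) - c₂) ∈ N ⊓ C := ⟨h', h2⟩
      rw [hC.inf_eq_bot] at h3
      exact Subtype.ext (sub_eq_zero.mp (by simpa using h3))
    · rintro ⟨r, a, rfl⟩
      exact ⟨pC a, Subtype.ext (by simpa [f, LinearMap.restrict_apply] using hLpC a)⟩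
  let e : C ≃ₗ[K] R := LinearEquiv.ofBijective f hf
  let T : A →ₗ[K] A := C.subtype ∘ₗ (e.symm : R →ₗ[K] C) ∘ₗ pR
  -- key identity 1 : T (L a) = pC a
  have key1 : ∀ a : A, T (L a) = (pC a : A) := by
    intro a
    have hLa : L a ∈ R := LinearMap.mem_range_self _ a
    have h1 : pR (L a) = ⟨L a, hLa⟩ :=
      Submodule.linearProjOfIsCompl_apply_left hF ⟨L a, hLa⟩
    have h2 : e (pC a) = ⟨L a, hLa⟩ := by
      apply Subtype.ext
      simpa [e, LinearEquiv.ofBijective_apply, f, LinearMap.restrict_apply] using hLpC a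
    simp only [T, LinearMap.coe_comp, Function.comp_apply, h1, ← h2,
      LinearEquiv.coe_coe, LinearEquiv.symm_apply_apply, Submodule.coe_subtype]
  -- key identity 2 : L (T a) = pR a
  have key2 : ∀ a : A, L (T a) = (pR a : A) := by
    intro a
    have h : f (e.symm (pR a)) = pR a := by
      have := e.apply_symm_apply (pR a)
      simpa [e, LinearEquiv.ofBijective_apply] using this
    have := congrArg Subtype.val h
    simpa [T, f, LinearMap.restrict_apply] using this
  refine ⟨T, ?_, ?_, ?_⟩
  · -- commutators with right multiplications
    intro s
    set D := T ∘ₗ LinearMap.mulRight K s - LinearMap.mulRight K s ∘ₗ T with hD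
    have hrange : LinearMap.range D = Submodule.map D R ⊔ Submodule.map D F := by
      rw [← Submodule.map_sup, hF.sup_eq_top, Submodule.map_top]
    have hDR : Submodule.map D R ≤ N ⊔ Submodule.map (LinearMap.mulRight K s) N := by
      rintro _ ⟨_, ⟨a, rfl⟩, rfl⟩
      have hcomm : L a * s = L (a * s) := by
        simp [hL, LinearMap.mulLeft_apply, mul_assoc]
      have hpCa : (pC a : A) = a - (pN a : A) := eq_sub_of_add_eq' (hdecomp a)
      have hpCas : (pC (a * s) : A) = a * s - (pN (a * s) : A) :=
        eq_sub_of_add_eq' (hdecomp (a * s))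
      have hDval : D (L a) = (-(pN (a * s) : A)) + (pN a : A) * s := by
        simp only [hD, LinearMap.sub_apply, LinearMap.coe_comp, Function.comp_apply,
          LinearMap.mulRight_apply, hcomm, key1, hpCa, hpCas, sub_mul]
        abel
      rw [hDval]
      refine Submodule.add_mem_sup (neg_mem (pN (a * s)).2) ?_
      exact Submodule.mem_map.mpr ⟨(pN a : A), (pN a).2, rfl⟩
    haveI : FiniteDimensional K ↥(N ⊔ Submodule.map (LinearMap.mulRight K s) N) := by
      haveI := fd_map (LinearMap.mulRight K s) N
      infer_instance
    haveI : FiniteDimensional K (Submodule.map D R) :=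
      Submodule.finiteDimensional_of_le hDR
    haveI : FiniteDimensional K (Submodule.map D F) := fd_map D F
    rw [hrange]
    infer_instance
  · -- T ∘ L - id
    refine Submodule.finiteDimensional_of_le (S₂ := N) ?_
    rintro _ ⟨a, rfl⟩
    simp only [LinearMap.sub_apply, LinearMap.coe_comp, Function.comp_apply,
      LinearMap.id_apply, key1]
    have h : (pC a : A) - a = -(pN a : A) := by
      rw [eq_sub_of_add_eq' (hdecomp a)]; abel
    rw [h]
    exact neg_mem (pN a).2
  · -- L ∘ T - id
    refine Submodule.finiteDimensional_of_le (S₂ := F) ?_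
    rintro _ ⟨a, rfl⟩
    simp only [LinearMap.sub_apply, LinearMap.coe_comp, Function.comp_apply,
      LinearMap.id_apply, key2]
    have h : (pR a : A) - a = -(pF a : A) := by
      rw [eq_sub_of_add_eq' (hdecompR a)]; abel
    rw [h]
    exact neg_mem (pF a).2
end

section
/- Let K be a field, A a unital K-algebra, and suppose A = V ⊕ W is a direct sum decomposition of A into two almost invariant K-linear subspaces. Then the projection π_V of A onto V along W is an idempotent endomorphism of A such that for every x ∈ A the commutator π_V∘r_x − r_x∘π_V has finite rank. -/
/-- A subspace `V` of a `K`-algebra `A` is almost invariant if for every `x ∈ A`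
the quotient `(V + Vx)/V` is finite-dimensional, i.e. the image of `Vx` in `A/V`
is finite-dimensional. -/
def AlmostInvariant (K : Type*) {A : Type*} [Field K] [Ring A] [Algebra K A]
    (V : Submodule K A) : Prop :=
  ∀ x : A, FiniteDimensional K ((V.map (LinearMap.mulRight K x)).map V.mkQ)

/-- If `A = V ⊕ W` with `V`, `W` almost invariant subspaces, then
the projection `π` onto `V` along `W` is idempotent and almost commutes with
every right multiplication `r_x`. -/
theorem projection_almost_commutes
    (K A : Type*) [Field K] [Ring A] [Algebra K A]
    (V W : Submodule K A) (hVW : IsCompl V W)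
    (hV : AlmostInvariant K V) (hW : AlmostInvariant K W)
    (π : A →ₗ[K] A) (hπV : ∀ v ∈ V, π v = v) (hπW : ∀ w ∈ W, π w = 0) :
    π ∘ₗ π = π ∧
    ∀ x : A, FiniteDimensional K
      (LinearMap.range (π ∘ₗ LinearMap.mulRight K x - LinearMap.mulRight K x ∘ₗ π)) := by
  have hsup : V ⊔ W = ⊤ := hVW.sup_eq_top
  have hdecomp : ∀ a : A, ∃ v ∈ V, ∃ w ∈ W, a = v + w := by
    intro a
    have : a ∈ V ⊔ W := by rw [hsup]; trivial
    obtain ⟨v, hv, w, hw, h⟩ := Submodule.mem_sup.mp this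
    exact ⟨v, hv, w, hw, h.symm⟩
  constructor
  · ext a
    obtain ⟨v, hv, w, hw, rfl⟩ := hdecomp a
    simp [map_add, hπV v hv, hπW w hw]
  · intro x
    set e : A →ₗ[K] A := LinearMap.id - π with he
    have heV : ∀ v ∈ V, e v = 0 := by
      intro v hv; simp [he, hπV v hv]
    -- e factors through A/V
    have hVker : V ≤ LinearMap.ker e := fun v hv => heV v hv
    have hWker : W ≤ LinearMap.ker π := fun w hw => hπW w hw
    set ebar := V.liftQ e hVker with hebar
    set pbar := W.liftQ π hWker with hpbar
    set S₁ := ((V.map (LinearMap.mulRight K x)).map V.mkQ).map ebar with hS₁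
    set S₂ := ((W.map (LinearMap.mulRight K x)).map W.mkQ).map pbar with hS₂
    have hfin₁ : FiniteDimensional K S₁ := by
      have := hV x
      exact Module.Finite.map _ ebar
    have hfin₂ : FiniteDimensional K S₂ := by
      have := hW x
      exact Module.Finite.map _ pbar
    have hle : LinearMap.range (π ∘ₗ LinearMap.mulRight K x - LinearMap.mulRight K x ∘ₗ π)
        ≤ S₁ ⊔ S₂ := by
      rintro _ ⟨a, rfl⟩
      obtain ⟨v, hv, w, hw, rfl⟩ := hdecomp a
      have hval : (π ∘ₗ LinearMap.mulRight K x - LinearMap.mulRight K x ∘ₗ π) (v + w)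
          = (-(e (v * x))) + π (w * x) := by
        simp only [LinearMap.sub_apply, LinearMap.comp_apply, LinearMap.mulRight_apply,
          map_add, add_mul, hπV v hv, hπW w hw, he, LinearMap.sub_apply, LinearMap.id_apply]
        simp
      rw [hval]
      apply Submodule.add_mem
      · apply Submodule.mem_sup_left
        apply Submodule.neg_mem
        exact ⟨V.mkQ (v * x), ⟨v * x, ⟨v, hv, rfl⟩, rfl⟩, by simp [hebar]⟩
      · apply Submodule.mem_sup_right
        exact ⟨W.mkQ (w * x), ⟨w * x, ⟨w, hw, rfl⟩, rfl⟩, by simp [hpbar]⟩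
    have : FiniteDimensional K (↥(S₁ ⊔ S₂)) := Submodule.finiteDimensional_sup S₁ S₂
    exact Submodule.finiteDimensional_of_le hle
end

section
/- Let K be a field, A a unital K-algebra, and P a K-linear endomorphism of A such that: P∘P − P has finite rank; for every x ∈ A the commutator P∘r_x − r_x∘P has finite rank; and P does not have finite rank. Then there exist almost invariant K-linear subspaces V and W of A with A = V ⊕ W, V infinite-dimensional, and such that the projection onto V along W differs from P by a finite-rank endomorphism. -/
open LinearMap Submodule

section Helpers

variable {K M : Type*} [Field K] [AddCommGroup M] [Module K M]

private lemma fr_add (f g : M →ₗ[K] M) (hf : FiniteDimensional K (range f))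
    (hg : FiniteDimensional K (range g)) :
    FiniteDimensional K (range (f + g)) := by
  have h : range (f + g) ≤ range f ⊔ range g := by
    rintro _ ⟨x, rfl⟩
    exact Submodule.add_mem_sup (mem_range_self f x) (mem_range_self g x)
  exact Submodule.finiteDimensional_of_le h

private lemma fr_neg (f : M →ₗ[K] M) (hf : FiniteDimensional K (range f)) :
    FiniteDimensional K (range (-f)) := by
  rwa [LinearMap.range_neg]

private lemma fr_sub (f g : M →ₗ[K] M) (hf : FiniteDimensional K (range f))
    (hg : FiniteDimensional K (range g)) :
    FiniteDimensional K (range (f - g)) := by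
  rw [sub_eq_add_neg]
  exact fr_add _ _ hf (fr_neg _ hg)

private lemma fr_compl (f g : M →ₗ[K] M) (hg : FiniteDimensional K (range g)) :
    FiniteDimensional K (range (f ∘ₗ g)) := by
  rw [LinearMap.range_comp]
  exact Module.Finite.map _ f

private lemma fr_compr (f g : M →ₗ[K] M) (hf : FiniteDimensional K (range f)) :
    FiniteDimensional K (range (f ∘ₗ g)) :=
  Submodule.finiteDimensional_of_le (LinearMap.range_comp_le_range g f)

private lemma fr_of_le_ker (S : Submodule K M) [FiniteDimensional K (M ⧸ S)]
    (f : M →ₗ[K] M) (h : S ≤ ker f) : FiniteDimensional K (range f) := by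
  rw [← Submodule.range_liftQ S f h]
  exact LinearMap.finiteDimensional_range _

end Helpers

/-- If `P` is an endomorphism of `A` which is idempotent modulo finite rank,
almost commutes with all right multiplications, and is not itself of finite rank, then
there is a decomposition `A = V ⊕ W` into almost invariant subspaces with `V`
infinite-dimensional such that the projection onto `V` along `W` differs from `P`
by a finite-rank operator. -/
theorem idempotent_gives_decomposition
    (K A : Type*) [Field K] [Ring A] [Algebra K A]
    (P : A →ₗ[K] A)
    (hidem : FiniteDimensional K (LinearMap.range (P ∘ₗ P - P)))
    (hcomm : ∀ x : A, FiniteDimensional K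
      (LinearMap.range (P ∘ₗ LinearMap.mulRight K x - LinearMap.mulRight K x ∘ₗ P)))
    (hrank : ¬ FiniteDimensional K (LinearMap.range P)) :
    ∃ V W : Submodule K A, IsCompl V W ∧
      AlmostInvariant K V ∧ AlmostInvariant K W ∧
      ¬ FiniteDimensional K V ∧
      ∃ π : A →ₗ[K] A, (∀ v ∈ V, π v = v) ∧ (∀ w ∈ W, π w = 0) ∧
        FiniteDimensional K (LinearMap.range (π - P)) := by
  set T : A →ₗ[K] A := P ∘ₗ P - P with hTdef
  set K0 : Submodule K A := LinearMap.ker T with hK0def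
  haveI hT : FiniteDimensional K (range T) := hidem
  haveI hK0fd : FiniteDimensional K (A ⧸ K0) :=
    FiniteDimensional.of_injective T.quotKerEquivRange.toLinearMap
      T.quotKerEquivRange.injective
  -- the subspace A0 of finite codimension where P behaves like an idempotent
  set f : A →ₗ[K] (A ⧸ K0) × (A ⧸ K0) := K0.mkQ.prod (K0.mkQ ∘ₗ P) with hfdef
  set A0 : Submodule K A := LinearMap.ker f with hA0def
  have hA0mem : ∀ y : A, y ∈ A0 ↔ y ∈ K0 ∧ P y ∈ K0 := by
    intro y
    simp [hA0def, hfdef, LinearMap.mem_ker, Prod.ext_iff, Submodule.Quotient.mk_eq_zero]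
  haveI hA0fd : FiniteDimensional K (A ⧸ A0) :=
    FiniteDimensional.of_injective f.quotKerEquivRange.toLinearMap
      f.quotKerEquivRange.injective
  set V : Submodule K A := A0.map P with hVdef
  set W0 : Submodule K A := LinearMap.ker P ⊓ A0 with hW0def
  -- P fixes V
  have hPV : ∀ v ∈ V, P v = v := by
    rintro _ ⟨y, hy, rfl⟩
    have h1 : T y = 0 := ((hA0mem y).1 hy).1
    have h2 : P (P y) - P y = 0 := h1
    exact sub_eq_zero.mp h2
  -- V meets ker P trivially
  have hVker : V ⊓ LinearMap.ker P = ⊥ := by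
    rw [eq_bot_iff]
    rintro z ⟨hzV, hzK⟩
    have := hPV z hzV
    rw [LinearMap.mem_ker.mp hzK] at this
    simp [← this]
  -- decomposition of A0
  have hA0le : ∀ y ∈ A0, P y ∈ V ∧ y - P y ∈ W0 := by
    intro y hy
    obtain ⟨h1, h2⟩ := (hA0mem y).1 hy
    refine ⟨Submodule.mem_map_of_mem hy, ?_⟩
    have hk : P (y - P y) = 0 := by
      have hT : T y = 0 := h1
      have : P (P y) - P y = 0 := hT
      rw [map_sub, sub_eq_zero.mp this, sub_self]
    exact ⟨LinearMap.mem_ker.mpr hk,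
      (hA0mem _).mpr ⟨Submodule.sub_mem K0 h1 h2, by rw [hk]; exact Submodule.zero_mem K0⟩⟩
  -- construct the complement W
  obtain ⟨C, hC⟩ := Submodule.exists_isCompl (V ⊔ W0)
  set W : Submodule K A := W0 ⊔ C with hWdef
  have hsup : V ⊔ W = ⊤ := by
    rw [hWdef, ← sup_assoc]
    exact hC.sup_eq_top
  have hinf : V ⊓ W = ⊥ := by
    rw [eq_bot_iff]
    intro z hz
    have hzV : z ∈ V := hz.1
    have hzW : z ∈ W0 ⊔ C := hz.2
    rw [Submodule.mem_sup] at hzW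
    obtain ⟨w, hw, c, hc, rfl⟩ := hzW
    have hcVW : c ∈ V ⊔ W0 := by
      have : c = (w + c) - w := by abel
      rw [this]
      exact Submodule.sub_mem _ (Submodule.mem_sup_left hzV) (Submodule.mem_sup_right hw)
    have hc0 : c = 0 := by
      have := hC.disjoint.le_bot ⟨hcVW, hc⟩
      simpa using this
    subst hc0
    rw [add_zero] at hzV ⊢
    have : w ∈ V ⊓ LinearMap.ker P := ⟨hzV, hw.1⟩
    rw [hVker] at this
    simpa using this
  have hcompl : IsCompl V W := ⟨disjoint_iff.mpr hinf, codisjoint_iff.mpr hsup⟩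
  -- the projection
  set pr := V.projectionOnto W hcompl with hprdef
  set π : A →ₗ[K] A := V.subtype ∘ₗ pr with hpidef
  have hpiV : ∀ v ∈ V, π v = v := by
    intro v hv
    have := Submodule.linearProjOfIsCompl_apply_left hcompl ⟨v, hv⟩
    simp [hpidef, hprdef, this]
  have hpiW : ∀ w ∈ W, π w = 0 := by
    intro w hw
    have := Submodule.linearProjOfIsCompl_apply_right hcompl ⟨w, hw⟩
    simp [hpidef, hprdef, this]
  have hpimem : ∀ y : A, π y ∈ V := fun y => (pr y).2
  have hpiker : ∀ y : A, y - π y ∈ W := by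
    intro y
    rw [← Submodule.linearProjOfIsCompl_apply_eq_zero_iff hcompl (q := W)]
    rw [map_sub]
    have h1 : (V.projectionOnto W hcompl) (π y) = pr y := by
      simp [hpidef]
    rw [h1]
    show pr y - pr y = 0
    exact sub_self _
  -- π - P has finite rank
  have hA0ker : A0 ≤ LinearMap.ker (π - P) := by
    intro y hy
    obtain ⟨h1, h2⟩ := hA0le y hy
    rw [LinearMap.mem_ker, LinearMap.sub_apply, sub_eq_zero]
    have heq : P y + (y - P y) = y := by abel
    have : π y = π (P y) + π (y - P y) := by rw [← map_add, heq]
    rw [this, hpiV _ h1, hpiW _ (Submodule.mem_sup_left h2), add_zero]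
  have hfrPi : FiniteDimensional K (range (π - P)) := fr_of_le_ker A0 (π - P) hA0ker
  -- V is infinite-dimensional
  have hVinf : ¬ FiniteDimensional K V := by
    intro hfd
    apply hrank
    have hrpi : FiniteDimensional K (range π) :=
      Submodule.finiteDimensional_of_le (S₂ := V) (fun z hz => by
        obtain ⟨y, rfl⟩ := hz; exact hpimem y)
    have : P = π - (π - P) := (sub_sub_cancel π P).symm
    rw [this]
    exact fr_sub _ _ hrpi hfrPi
  -- the commutator of π with right multiplication has finite rank
  have hcommPi : ∀ x : A, FiniteDimensional K
      (range (LinearMap.mulRight K x ∘ₗ π - π ∘ₗ LinearMap.mulRight K x)) := by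
    intro x
    set r := LinearMap.mulRight K x with hrdef
    have heq : r ∘ₗ π - π ∘ₗ r
        = (r ∘ₗ (π - P) - (π - P) ∘ₗ r) - (P ∘ₗ r - r ∘ₗ P) := by
      ext a
      simp [LinearMap.sub_apply, LinearMap.comp_apply, map_sub]
      abel
    rw [heq]
    exact fr_sub _ _ (fr_sub _ _ (fr_compl _ _ hfrPi) (fr_compr _ _ hfrPi)) (hcomm x)
  -- almost invariance of V
  have haiV : AlmostInvariant K V := by
    intro x
    set r := LinearMap.mulRight K x with hrdef
    set g := r ∘ₗ π - π ∘ₗ r with hgdef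
    haveI : FiniteDimensional K (range g) := hcommPi x
    haveI : FiniteDimensional K ((range g).map V.mkQ) := Module.Finite.map _ _
    refine Submodule.finiteDimensional_of_le (S₂ := (range g).map V.mkQ) ?_
    rintro _ ⟨_, ⟨v, hv, rfl⟩, rfl⟩
    refine ⟨g v, mem_range_self g v, ?_⟩
    rw [Submodule.mkQ_apply, Submodule.mkQ_apply, Submodule.Quotient.eq]
    have : g v - r v = -(π (r v)) := by
      simp [hgdef, LinearMap.sub_apply, LinearMap.comp_apply, hpiV v hv]
    rw [this]
    exact Submodule.neg_mem _ (hpimem (r v))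
  -- almost invariance of W
  have haiW : AlmostInvariant K W := by
    intro x
    set r := LinearMap.mulRight K x with hrdef
    set g := π ∘ₗ r - r ∘ₗ π with hgdef
    haveI : FiniteDimensional K (range g) := by
      have : g = -(r ∘ₗ π - π ∘ₗ r) := by rw [hgdef, neg_sub]
      rw [this]
      exact fr_neg _ (hcommPi x)
    haveI : FiniteDimensional K ((range g).map W.mkQ) := Module.Finite.map _ _
    refine Submodule.finiteDimensional_of_le (S₂ := (range g).map W.mkQ) ?_
    rintro _ ⟨_, ⟨w, hw, rfl⟩, rfl⟩
    refine ⟨g w, mem_range_self g w, ?_⟩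
    rw [Submodule.mkQ_apply, Submodule.mkQ_apply, Submodule.Quotient.eq]
    have : g w - r w = -(r w - π (r w)) := by
      simp [hgdef, LinearMap.sub_apply, LinearMap.comp_apply, hpiW w hw]
    rw [this]
    exact Submodule.neg_mem _ (hpiker (r w))
  exact ⟨V, W, hcompl, haiV, haiW, hVinf, π, hpiV, hpiW, hfrPi⟩
end

section
/- Let K be a field, A a unital K-algebra, and A = V ⊕ W a direct sum decomposition into two almost invariant K-linear subspaces, with associated symmetry F (F(v) = v for v ∈ V, F(w) = −w for w ∈ W). Then for every a ∈ A the commutator [F, r_a] = F∘r_a − r_a∘F has finite rank and Tr([F, r_a]) = 0. -/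
/-- The trace of a finite-rank endomorphism `T`: the trace of the restriction of `T`
to its range. -/
noncomputable def trOf {K M : Type*} [Field K] [AddCommGroup M] [Module K M]
    (T : M →ₗ[K] M) : K :=
  LinearMap.trace K (LinearMap.range T)
    (T.restrict (fun x _ => LinearMap.mem_range_self T x))

/-- For a decomposition `A = V ⊕ W` into almost invariant subspaces with
associated symmetry `F` (`F = id` on `V`, `F = -id` on `W`), for every `a ∈ A` the
commutator `[F, r_a]` has finite rank and `Tr([F, r_a]) = 0`. -/
theorem trace_commutator_symmetry_eq_zero
    (K A : Type*) [Field K] [Ring A] [Algebra K A]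
    (V W : Submodule K A) (hVW : IsCompl V W)
    (hV : AlmostInvariant K V) (hW : AlmostInvariant K W)
    (F : A →ₗ[K] A) (hFV : ∀ v ∈ V, F v = v) (hFW : ∀ w ∈ W, F w = -w) (a : A) :
    FiniteDimensional K (LinearMap.range
      (F ∘ₗ LinearMap.mulRight K a - LinearMap.mulRight K a ∘ₗ F)) ∧
    trOf (F ∘ₗ LinearMap.mulRight K a - LinearMap.mulRight K a ∘ₗ F) = 0 := by
  classical
  set r : A →ₗ[K] A := LinearMap.mulRight K a with hr
  set T : A →ₗ[K] A := F ∘ₗ r - r ∘ₗ F with hTdef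
  -- the projection onto V along W
  set π : A →ₗ[K] A := V.subtype ∘ₗ (V.linearProjOfIsCompl W hVW) with hπdef
  have hπmem : ∀ x : A, π x ∈ V := fun x => (V.linearProjOfIsCompl W hVW x).2
  have hπV : ∀ v ∈ V, π v = v := by
    intro v hv
    have h := Submodule.linearProjOfIsCompl_apply_left hVW (⟨v, hv⟩ : V)
    calc π v = ((V.linearProjOfIsCompl W hVW v : V) : A) := rfl
      _ = v := by exact congrArg Subtype.val h
  have hπW : ∀ w ∈ W, π w = 0 := by
    intro w hw
    have h := Submodule.linearProjOfIsCompl_apply_right hVW (⟨w, hw⟩ : W)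
    calc π w = ((V.linearProjOfIsCompl W hVW w : V) : A) := rfl
      _ = 0 := by exact congrArg Subtype.val h
  have hρW : ∀ x : A, x - π x ∈ W := by
    intro x
    have h0 : π (x - π x) = 0 := by
      rw [map_sub, hπV _ (hπmem x), sub_self]
    have : V.linearProjOfIsCompl W hVW (x - π x) = 0 := by
      have := h0
      rwa [hπdef, LinearMap.comp_apply, Submodule.subtype_apply,
        Submodule.coe_eq_zero] at this
    exact (Submodule.linearProjOfIsCompl_apply_eq_zero_iff hVW).1 this
  -- F = 2π - 1
  have hF : ∀ x : A, F x = π x + (π x - x) := by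
    intro x
    have h1 : F (π x) = π x := hFV _ (hπmem x)
    have h2 : F (x - π x) = -(x - π x) := hFW _ (hρW x)
    have hx : π x + (x - π x) = x := by abel
    calc F x = F (π x + (x - π x)) := by rw [hx]
      _ = F (π x) + F (x - π x) := map_add F _ _
      _ = π x + (π x - x) := by rw [h1, h2]; abel
  -- the commutator formula
  have hTg : ∀ x : A, T x = (π (r x) - r (π x)) + (π (r x) - r (π x)) := by
    intro x
    have : T x = F (r x) - r (F x) := rfl
    rw [this, hF (r x), hF x, map_add r, map_sub r]
    abel
  have hTV : ∀ v ∈ V, T v ∈ W := by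
    intro v hv
    rw [hTg]
    have h1 : π (r v) - r (π v) = -(r v - π (r v)) := by
      rw [hπV v hv]; abel
    rw [h1]
    exact add_mem (neg_mem (hρW (r v))) (neg_mem (hρW (r v)))
  have hTW : ∀ w ∈ W, T w ∈ V := by
    intro w hw
    rw [hTg]
    have h1 : π (r w) - r (π w) = π (r w) := by
      rw [hπW w hw, map_zero, sub_zero]
    rw [h1]
    exact add_mem (hπmem (r w)) (hπmem (r w))
  -- finite rank
  set ρ : A →ₗ[K] A := LinearMap.id - π with hρdef
  have hρapp : ∀ x : A, ρ x = x - π x := fun x => rfl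
  set S₁ : Submodule K A := Submodule.map ρ (V.map r) with hS₁def
  set S₂ : Submodule K A := Submodule.map π (W.map r) with hS₂def
  have hkerρ : V ≤ LinearMap.ker ρ := by
    intro v hv
    rw [LinearMap.mem_ker, hρapp, hπV v hv, sub_self]
  have hkerπ : W ≤ LinearMap.ker π := by
    intro w hw
    rw [LinearMap.mem_ker, hπW w hw]
  haveI : FiniteDimensional K S₁ := by
    have hmap : S₁ = Submodule.map (V.liftQ ρ hkerρ)
        (Submodule.map V.mkQ (Submodule.map r V)) := by
      rw [← Submodule.map_comp, V.liftQ_mkQ]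
    rw [hmap]
    haveI := hV a
    exact Module.Finite.map _ _
  haveI : FiniteDimensional K S₂ := by
    have hmap : S₂ = Submodule.map (W.liftQ π hkerπ)
        (Submodule.map W.mkQ (Submodule.map r W)) := by
      rw [← Submodule.map_comp, W.liftQ_mkQ]
    rw [hmap]
    haveI := hW a
    exact Module.Finite.map _ _
  have hrange : LinearMap.range T ≤ S₁ ⊔ S₂ := by
    rintro _ ⟨x, rfl⟩
    have h1 : T (π x) ∈ S₁ := by
      rw [hTg]
      have hv : π (π x) = π x := hπV _ (hπmem x)
      have he : π (r (π x)) - r (π (π x)) = -(ρ (r (π x))) := by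
        rw [hv, hρapp]; abel
      rw [he]
      have hmem : ρ (r (π x)) ∈ S₁ :=
        Submodule.mem_map_of_mem (Submodule.mem_map_of_mem (hπmem x))
      exact add_mem (neg_mem hmem) (neg_mem hmem)
    have h2 : T (x - π x) ∈ S₂ := by
      rw [hTg]
      have he : π (r (x - π x)) - r (π (x - π x)) = π (r (x - π x)) := by
        rw [map_sub π, hπV _ (hπmem x), sub_self, map_zero, sub_zero]
      rw [he]
      have hmem : π (r (x - π x)) ∈ S₂ :=
        Submodule.mem_map_of_mem (Submodule.mem_map_of_mem (hρW x))
      exact add_mem hmem hmem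
    have hx : T x = T (π x) + T (x - π x) := by
      rw [← map_add]; congr 1; abel
    rw [hx]
    exact Submodule.mem_sup.2 ⟨_, h1, _, h2, rfl⟩
  haveI hfinR : FiniteDimensional K (LinearMap.range T) :=
    Submodule.finiteDimensional_of_le hrange
  refine ⟨hfinR, ?_⟩
  -- trace part
  set R : Submodule K A := LinearMap.range T with hRdef
  have hπR : ∀ x ∈ R, π x ∈ R := by
    rintro _ ⟨y, rfl⟩
    have h1 : T y = T (π y) + T (y - π y) := by
      rw [← map_add]; congr 1; abel
    have h2 : π (T y) = T (y - π y) := by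
      rw [h1, map_add, hπW _ (hTV _ (hπmem y)), hπV _ (hTW _ (hρW y)), zero_add]
    rw [h2]
    exact LinearMap.mem_range_self T (y - π y)
  set π' : R →ₗ[K] R := π.restrict hπR with hπ'def
  set T' : R →ₗ[K] R := T.restrict (fun x _ => LinearMap.mem_range_self T x) with hT'def
  have hπ'coe : ∀ x : R, ((π' x : A)) = π (x : A) := fun x => rfl
  have hT'coe : ∀ x : R, ((T' x : A)) = T (x : A) := fun x => rfl
  have hidem : π' ∘ₗ π' = π' := by
    ext x
    show (π' (π' x) : A) = (π' x : A)
    rw [hπ'coe, hπ'coe]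
    exact hπV _ (hπmem _)
  have hdecomp : T' = π' ∘ₗ (T' ∘ₗ (LinearMap.id - π'))
      + (LinearMap.id - π') ∘ₗ (T' ∘ₗ π') := by
    refine LinearMap.ext fun x => Subtype.ext ?_
    have e1 : π (T ((x : A) - π (x : A))) = T ((x : A) - π (x : A)) :=
      hπV _ (hTW _ (hρW (x : A)))
    have e2 : π (T (π (x : A))) = 0 := hπW _ (hTV _ (hπmem (x : A)))
    have e3 : T (x : A) = T (π (x : A)) + T ((x : A) - π (x : A)) := by
      rw [← map_add]; congr 1; abel
    simp only [LinearMap.add_apply, LinearMap.comp_apply, LinearMap.sub_apply,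
      LinearMap.id_apply, Submodule.coe_add, Submodule.coe_sub, hπ'coe, hT'coe]
    rw [e1, e2, e3]
    abel
  have hz1 : (LinearMap.id - π') ∘ₗ π' = 0 := by
    rw [LinearMap.sub_comp, LinearMap.id_comp, hidem]; ext x; simp
  have hz2 : π' ∘ₗ (LinearMap.id - π') = 0 := by
    rw [LinearMap.comp_sub, LinearMap.comp_id, hidem]; ext x; simp
  have hmul1 : π' ∘ₗ (T' ∘ₗ (LinearMap.id - π')) = π' * (T' * (LinearMap.id - π')) := rfl
  have hmul2 : (LinearMap.id - π') ∘ₗ (T' ∘ₗ π') = (LinearMap.id - π') * (T' * π') := rfl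
  have key : LinearMap.trace K R T' = 0 := by
    rw [hdecomp, map_add, hmul1, hmul2, LinearMap.trace_mul_comm,
      LinearMap.trace_mul_comm K (LinearMap.id - π')]
    have e1 : T' * (LinearMap.id - π') * π' = T' * ((LinearMap.id - π') * π') :=
      mul_assoc _ _ _
    have e2 : T' * π' * (LinearMap.id - π') = T' * (π' * (LinearMap.id - π')) :=
      mul_assoc _ _ _
    rw [e1, e2, show (LinearMap.id - π') * π' = (LinearMap.id - π') ∘ₗ π' from rfl,
      show π' * (LinearMap.id - π') = π' ∘ₗ (LinearMap.id - π') from rfl,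
      hz1, hz2, mul_zero, map_zero, add_zero]
  exact key
end

section
/- Let K be a field, A a unital K-algebra, and A = V ⊕ W a direct sum decomposition into two almost invariant K-linear subspaces, with associated symmetry F. Define τ : A × A → K by τ(a, b) = Tr(r_a ∘ [F, r_b]), where [F, r_b] = F∘r_b − r_b∘F (a finite-rank operator). Then τ is a cyclic 1-cocycle: for all a, b, c ∈ A, τ(a, b) = −τ(b, a) and τ(ab, c) − τ(a, bc) + τ(ca, b) = 0. -/
section TraceLemmas
open LinearMap
variable {K M : Type*} [Field K] [AddCommGroup M] [Module K M]

lemma trOf_eq_trace_restrict (T : M →ₗ[K] M) (p : Submodule K M)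
    [FiniteDimensional K p] (hp : ∀ x, T x ∈ p) :
    trOf T = LinearMap.trace K p (T.restrict (fun x _ => hp x)) := by
  have hle : LinearMap.range T ≤ p := by
    rintro _ ⟨y, rfl⟩; exact hp y
  haveI : FiniteDimensional K (LinearMap.range T) :=
    Submodule.finiteDimensional_of_le hle
  set f : p →ₗ[K] LinearMap.range T :=
    LinearMap.codRestrict (LinearMap.range T) (T.domRestrict p)
      (fun c => LinearMap.mem_range_self T (c : M)) with hf
  set g : (LinearMap.range T : Submodule K M) →ₗ[K] p := Submodule.inclusion hle with hg
  have h1 : T.restrict (p := p) (q := p) (fun x _ => hp x) = g ∘ₗ f := by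
    ext x; rfl
  have h2 : T.restrict (p := LinearMap.range T) (q := LinearMap.range T)
      (fun x _ => LinearMap.mem_range_self T x) = f ∘ₗ g := by
    ext x; rfl
  rw [trOf, h2, h1, LinearMap.trace_comp_comm']

lemma trOf_zero : trOf (0 : M →ₗ[K] M) = 0 := by
  rw [trOf_eq_trace_restrict (0 : M →ₗ[K] M) ⊥ (fun x => by simp)]
  have h : (0 : M →ₗ[K] M).restrict (p := ⊥) (q := ⊥) (fun x _ => by simp) = 0 :=
    Subsingleton.elim _ _
  rw [h, map_zero]

lemma trOf_add (S T : M →ₗ[K] M) (hS : FiniteDimensional K (LinearMap.range S))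
    (hT : FiniteDimensional K (LinearMap.range T)) :
    trOf (S + T) = trOf S + trOf T := by
  haveI := hS; haveI := hT
  set p := LinearMap.range S ⊔ LinearMap.range T with hp
  have hSp : ∀ x, S x ∈ p := fun x => le_sup_left (α := Submodule K M) (mem_range_self S x)
  have hTp : ∀ x, T x ∈ p := fun x => le_sup_right (α := Submodule K M) (mem_range_self T x)
  have hSTp : ∀ x, (S + T) x ∈ p := fun x => by
    simpa using add_mem (hSp x) (hTp x)
  rw [trOf_eq_trace_restrict S p hSp, trOf_eq_trace_restrict T p hTp,
    trOf_eq_trace_restrict (S + T) p hSTp]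
  have h : (S + T).restrict (p := p) (q := p) (fun x _ => hSTp x)
      = S.restrict (p := p) (q := p) (fun x _ => hSp x)
        + T.restrict (p := p) (q := p) (fun x _ => hTp x) := by
    ext x; rfl
  rw [h, map_add]

lemma trOf_neg (T : M →ₗ[K] M) (hT : FiniteDimensional K (LinearMap.range T)) :
    trOf (-T) = - trOf T := by
  haveI := hT
  set p := LinearMap.range T with hp
  have hTp : ∀ x, T x ∈ p := fun x => mem_range_self T x
  have hTp' : ∀ x, (-T) x ∈ p := fun x => by simpa using neg_mem (hTp x)
  rw [trOf_eq_trace_restrict T p hTp, trOf_eq_trace_restrict (-T) p hTp']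
  have h : (-T).restrict (p := p) (q := p) (fun x _ => hTp' x)
      = - T.restrict (p := p) (q := p) (fun x _ => hTp x) := by
    ext x; rfl
  rw [h, map_neg]

lemma trOf_sub (S T : M →ₗ[K] M) (hS : FiniteDimensional K (LinearMap.range S))
    (hT : FiniteDimensional K (LinearMap.range T)) :
    trOf (S - T) = trOf S - trOf T := by
  have hT' : FiniteDimensional K (LinearMap.range (-T)) := by
    rw [LinearMap.range_neg]; exact hT
  rw [sub_eq_add_neg, trOf_add S (-T) hS hT', trOf_neg T hT, sub_eq_add_neg]

lemma trOf_comp_comm (S T : M →ₗ[K] M) (hS : FiniteDimensional K (LinearMap.range S)) :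
    trOf (T ∘ₗ S) = trOf (S ∘ₗ T) := by
  haveI := hS
  haveI : FiniteDimensional K (LinearMap.range (T ∘ₗ S)) := by
    rw [LinearMap.range_comp]; infer_instance
  set f : (LinearMap.range S : Submodule K M) →ₗ[K] LinearMap.range (T ∘ₗ S) :=
    LinearMap.codRestrict _ (T.domRestrict _)
      (fun c => by
        rw [LinearMap.range_comp]
        exact Submodule.mem_map_of_mem c.2) with hf
  set g : (LinearMap.range (T ∘ₗ S) : Submodule K M) →ₗ[K] LinearMap.range S :=
    LinearMap.codRestrict _ (S.domRestrict _)
      (fun c => LinearMap.mem_range_self S (c : M)) with hg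
  have hST : ∀ x, (S ∘ₗ T) x ∈ LinearMap.range S := fun x => mem_range_self S (T x)
  have hTS : ∀ x, (T ∘ₗ S) x ∈ LinearMap.range (T ∘ₗ S) := fun x => mem_range_self _ x
  rw [trOf_eq_trace_restrict (S ∘ₗ T) _ hST, trOf_eq_trace_restrict (T ∘ₗ S) _ hTS]
  have h1 : (S ∘ₗ T).restrict (p := LinearMap.range S) (q := LinearMap.range S)
      (fun x _ => hST x) = g ∘ₗ f := by ext x; rfl
  have h2 : (T ∘ₗ S).restrict (p := LinearMap.range (T ∘ₗ S)) (q := LinearMap.range (T ∘ₗ S))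
      (fun x _ => hTS x) = f ∘ₗ g := by ext x; rfl
  rw [h1, h2, LinearMap.trace_comp_comm']

lemma fd_range_comp_left (X S : M →ₗ[K] M) (hS : FiniteDimensional K (LinearMap.range S)) :
    FiniteDimensional K (LinearMap.range (X ∘ₗ S)) := by
  haveI := hS
  rw [LinearMap.range_comp]
  infer_instance

lemma fd_range_comp_right (S X : M →ₗ[K] M) (hS : FiniteDimensional K (LinearMap.range S)) :
    FiniteDimensional K (LinearMap.range (S ∘ₗ X)) := by
  haveI := hS
  exact Submodule.finiteDimensional_of_le (LinearMap.range_comp_le_range X S)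

lemma fd_range_add (S T : M →ₗ[K] M) (hS : FiniteDimensional K (LinearMap.range S))
    (hT : FiniteDimensional K (LinearMap.range T)) :
    FiniteDimensional K (LinearMap.range (S + T)) := by
  haveI := hS; haveI := hT
  have hle : LinearMap.range (S + T) ≤ LinearMap.range S ⊔ LinearMap.range T := by
    rintro _ ⟨x, rfl⟩
    exact add_mem (le_sup_left (α := Submodule K M) (LinearMap.mem_range_self S x))
      (le_sup_right (α := Submodule K M) (LinearMap.mem_range_self T x))
  exact Submodule.finiteDimensional_of_le hle

lemma fd_range_sub (S T : M →ₗ[K] M) (hS : FiniteDimensional K (LinearMap.range S))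
    (hT : FiniteDimensional K (LinearMap.range T)) :
    FiniteDimensional K (LinearMap.range (S - T)) := by
  have hT' : FiniteDimensional K (LinearMap.range (-T)) := by
    rw [LinearMap.range_neg]; exact hT
  rw [sub_eq_add_neg]
  exact fd_range_add S (-T) hS hT'

end TraceLemmas


/-- For a decomposition `A = V ⊕ W` into almost invariant subspaces with
associated symmetry `F`, the functional `τ(a,b) = Tr(r_a ∘ [F, r_b])` is a cyclic
1-cocycle: `τ(a,b) = -τ(b,a)` and `τ(ab,c) - τ(a,bc) + τ(ca,b) = 0`. -/
theorem tau_is_cyclic_cocycle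
    (K A : Type*) [Field K] [Ring A] [Algebra K A]
    (V W : Submodule K A) (hVW : IsCompl V W)
    (hV : AlmostInvariant K V) (hW : AlmostInvariant K W)
    (F : A →ₗ[K] A) (hFV : ∀ v ∈ V, F v = v) (hFW : ∀ w ∈ W, F w = -w)
    (τ : A → A → K)
    (hτ : ∀ a b : A, τ a b = trOf (LinearMap.mulRight K a ∘ₗ
      (F ∘ₗ LinearMap.mulRight K b - LinearMap.mulRight K b ∘ₗ F))) :
    (∀ a b : A, τ a b = - τ b a) ∧
    (∀ a b c : A, τ (a * b) c - τ a (b * c) + τ (c * a) b = 0) := by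
  -- projections
  set πV : A →ₗ[K] A := V.subtype ∘ₗ (V.linearProjOfIsCompl W hVW) with hπVdef
  set πW : A →ₗ[K] A := W.subtype ∘ₗ (W.linearProjOfIsCompl V hVW.symm) with hπWdef
  have hπVl : ∀ v ∈ V, πV v = v := fun v hv =>
    congrArg V.subtype (Submodule.linearProjOfIsCompl_apply_left hVW ⟨v, hv⟩)
  have hπV0 : ∀ w ∈ W, πV w = 0 := by
    intro w hw
    show V.subtype _ = 0
    exact (congrArg V.subtype (Submodule.projectionOnto_apply_of_mem_right hVW hw)).trans (map_zero _)
  have hπWl : ∀ w ∈ W, πW w = w := fun w hw =>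
    congrArg W.subtype (Submodule.linearProjOfIsCompl_apply_left hVW.symm ⟨w, hw⟩)
  have hπW0 : ∀ v ∈ V, πW v = 0 := by
    intro v hv
    show W.subtype _ = 0
    exact (congrArg W.subtype (Submodule.projectionOnto_apply_of_mem_right hVW.symm hv)).trans (map_zero _)
  have hdecomp : ∀ x : A, ∃ v ∈ V, ∃ w ∈ W, x = v + w := by
    intro x
    have hx : x ∈ V ⊔ W := by rw [hVW.sup_eq_top]; trivial
    obtain ⟨v, hv, w, hw, h⟩ := Submodule.mem_sup.1 hx
    exact ⟨v, hv, w, hw, h.symm⟩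
  have hone : πV + πW = (1 : A →ₗ[K] A) := by
    ext x
    obtain ⟨v, hv, w, hw, rfl⟩ := hdecomp x
    simp [map_add, hπVl v hv, hπV0 w hw, hπWl w hw, hπW0 v hv]
  have hFeq : F = πV - πW := by
    ext x
    obtain ⟨v, hv, w, hw, rfl⟩ := hdecomp x
    simp only [LinearMap.sub_apply, map_add, hFV v hv, hFW w hw,
      hπVl v hv, hπV0 w hw, hπWl w hw, hπW0 v hv]
    abel
  have hπWW : πW * πW = πW := by
    ext x; exact hπWl (πW x) (Submodule.coe_mem _)
  have hπWV : πW * πV = 0 := by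
    ext x; exact hπW0 (πV x) (Submodule.coe_mem _)
  have hπVW : πV * πW = 0 := by
    ext x; exact hπV0 (πW x) (Submodule.coe_mem _)
  have hπVV : πV * πV = πV := by
    ext x; exact hπVl (πV x) (Submodule.coe_mem _)
  -- abbreviations
  set r : A → (A →ₗ[K] A) := LinearMap.mulRight K with hrdef
  set S₁ : A → (A →ₗ[K] A) := fun b => πV * (r b * πW) with hS₁def
  set S₂ : A → (A →ₗ[K] A) := fun b => πW * (r b * πV) with hS₂def
  set D : A → (A →ₗ[K] A) := fun b => F * r b - r b * F with hDdef
  have hτ' : ∀ a b : A, τ a b = trOf (r a * D b) := hτ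
  -- key algebraic identity
  have hkey : ∀ b, D b = (S₁ b + S₁ b) - (S₂ b + S₂ b) := by
    intro b
    show F * r b - r b * F = (πV * (r b * πW) + πV * (r b * πW))
      - (πW * (r b * πV) + πW * (r b * πV))
    have h2 : F * r b - r b * F
        = (πV - πW) * r b * (πV + πW) - ((πV + πW) * r b) * (πV - πW) := by
      rw [hone, hFeq, mul_one, one_mul]
    rw [h2]
    simp only [mul_sub, sub_mul, mul_add, add_mul, mul_assoc]; abel
  -- finite rank of S₁ b
  have hWker : W ≤ LinearMap.ker πV := fun w hw => by
    rw [LinearMap.mem_ker]; exact hπV0 w hw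
  have hVker : V ≤ LinearMap.ker πW := fun v hv => by
    rw [LinearMap.mem_ker]; exact hπW0 v hv
  have fdS₁ : ∀ b, FiniteDimensional K (LinearMap.range (S₁ b)) := by
    intro b
    set e : (A ⧸ W) →ₗ[K] A := W.liftQ πV hWker with hedef
    have hle : LinearMap.range (S₁ b)
        ≤ Submodule.map e ((W.map (LinearMap.mulRight K b)).map W.mkQ) := by
      rintro _ ⟨x, rfl⟩
      have h1 : πW x ∈ W := Submodule.coe_mem _
      have h2 : (πW x) * b ∈ W.map (LinearMap.mulRight K b) :=
        ⟨πW x, h1, rfl⟩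
      refine ⟨W.mkQ ((πW x) * b), Submodule.mem_map_of_mem h2, ?_⟩
      show e (W.mkQ ((πW x) * b)) = (S₁ b) x
      have : e (W.mkQ ((πW x) * b)) = πV ((πW x) * b) := by
        rw [hedef]
        exact LinearMap.congr_fun (W.liftQ_mkQ πV hWker) _
      rw [this]
      rfl
    haveI : FiniteDimensional K ((W.map (LinearMap.mulRight K b)).map W.mkQ) := hW b
    haveI : FiniteDimensional K
        (Submodule.map e ((W.map (LinearMap.mulRight K b)).map W.mkQ)) :=
      Module.Finite.map _ e
    exact Submodule.finiteDimensional_of_le hle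
  have fdS₂ : ∀ b, FiniteDimensional K (LinearMap.range (S₂ b)) := by
    intro b
    set e : (A ⧸ V) →ₗ[K] A := V.liftQ πW hVker with hedef
    have hle : LinearMap.range (S₂ b)
        ≤ Submodule.map e ((V.map (LinearMap.mulRight K b)).map V.mkQ) := by
      rintro _ ⟨x, rfl⟩
      have h1 : πV x ∈ V := Submodule.coe_mem _
      have h2 : (πV x) * b ∈ V.map (LinearMap.mulRight K b) :=
        ⟨πV x, h1, rfl⟩
      refine ⟨V.mkQ ((πV x) * b), Submodule.mem_map_of_mem h2, ?_⟩
      show e (V.mkQ ((πV x) * b)) = (S₂ b) x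
      have : e (V.mkQ ((πV x) * b)) = πW ((πV x) * b) := by
        rw [hedef]
        exact LinearMap.congr_fun (V.liftQ_mkQ πW hVker) _
      rw [this]
      rfl
    haveI : FiniteDimensional K ((V.map (LinearMap.mulRight K b)).map V.mkQ) := hV b
    haveI : FiniteDimensional K
        (Submodule.map e ((V.map (LinearMap.mulRight K b)).map V.mkQ)) :=
      Module.Finite.map _ e
    exact Submodule.finiteDimensional_of_le hle
  -- finite rank of D b
  have fdD : ∀ b, FiniteDimensional K (LinearMap.range (D b)) := by
    intro b
    rw [hkey b]
    exact fd_range_sub _ _ (fd_range_add _ _ (fdS₁ b) (fdS₁ b))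
      (fd_range_add _ _ (fdS₂ b) (fdS₂ b))
  -- vanishing traces
  have htrS₁ : ∀ b, trOf (S₁ b) = 0 := by
    intro b
    have h1 : S₁ b = S₁ b * πW := by
      show πV * (r b * πW) = πV * (r b * πW) * πW
      rw [mul_assoc (πV) (r b * πW) πW, mul_assoc (r b) πW πW, hπWW]
    have h2 : πW * S₁ b = 0 := by
      show πW * (πV * (r b * πW)) = 0
      rw [← mul_assoc, hπWV, zero_mul]
    calc trOf (S₁ b) = trOf (S₁ b * πW) := by rw [← h1]
      _ = trOf (πW * S₁ b) := (trOf_comp_comm (S₁ b) πW (fdS₁ b)).symm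
      _ = 0 := by rw [h2]; exact trOf_zero
  have htrS₂ : ∀ b, trOf (S₂ b) = 0 := by
    intro b
    have h1 : S₂ b = S₂ b * πV := by
      show πW * (r b * πV) = πW * (r b * πV) * πV
      rw [mul_assoc (πW) (r b * πV) πV, mul_assoc (r b) πV πV, hπVV]
    have h2 : πV * S₂ b = 0 := by
      show πV * (πW * (r b * πV)) = 0
      rw [← mul_assoc, hπVW, zero_mul]
    calc trOf (S₂ b) = trOf (S₂ b * πV) := by rw [← h1]
      _ = trOf (πV * S₂ b) := (trOf_comp_comm (S₂ b) πV (fdS₂ b)).symm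
      _ = 0 := by rw [h2]; exact trOf_zero
  have htrD : ∀ b, trOf (D b) = 0 := by
    intro b
    rw [hkey b, trOf_sub _ _ (fd_range_add _ _ (fdS₁ b) (fdS₁ b))
        (fd_range_add _ _ (fdS₂ b) (fdS₂ b)),
      trOf_add _ _ (fdS₁ b) (fdS₁ b), trOf_add _ _ (fdS₂ b) (fdS₂ b),
      htrS₁ b, htrS₂ b]
    ring
  constructor
  · -- antisymmetry
    intro a b
    have e1 : τ a b = trOf (D b * r a) := by
      rw [hτ' a b]
      exact trOf_comp_comm (D b) (r a) (fdD b)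
    have e3 : D b * r a + r b * D a = D (a * b) := by
      show (F * r b - r b * F) * r a + r b * (F * r a - r a * F)
        = F * r (a * b) - r (a * b) * F
      have hmul : r (a * b) = r b * r a := LinearMap.mulRight_mul K A a b
      rw [hmul]
      simp only [mul_sub, sub_mul, mul_add, add_mul, mul_assoc]; abel
    have e4 : trOf (D b * r a) + trOf (r b * D a) = trOf (D (a * b)) := by
      rw [← trOf_add (D b * r a) (r b * D a) (fd_range_comp_right (D b) (r a) (fdD b))
          (fd_range_comp_left (r b) (D a) (fdD a)), e3]
    have e5 := htrD (a * b)
    rw [e1, hτ' b a]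
    linear_combination e4 + e5
  · -- cocycle identity
    intro a b c
    have fdraDc : FiniteDimensional K (LinearMap.range (r a * D c)) :=
      fd_range_comp_left (r a) (D c) (fdD c)
    have h1 : τ (a * b) c = trOf ((r a * D c) * r b) := by
      rw [hτ' (a * b) c]
      have hmul : r (a * b) * D c = r b * (r a * D c) := by
        have : r (a * b) = r b * r a := LinearMap.mulRight_mul K A a b
        rw [this, mul_assoc]
      rw [hmul]
      exact trOf_comp_comm (r a * D c) (r b) fdraDc
    have h2 : τ (c * a) b = trOf (r a * (r c * D b)) := by
      rw [hτ' (c * a) b]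
      congr 1
      have : r (c * a) = r a * r c := LinearMap.mulRight_mul K A c a
      rw [this, mul_assoc]
    have h3 : τ a (b * c) = trOf (r a * (D c * r b)) + trOf (r a * (r c * D b)) := by
      rw [hτ' a (b * c)]
      have hsplit : r a * D (b * c) = r a * (D c * r b) + r a * (r c * D b) := by
        show r a * (F * r (b * c) - r (b * c) * F)
          = r a * ((F * r c - r c * F) * r b) + r a * (r c * (F * r b - r b * F))
        have : r (b * c) = r c * r b := LinearMap.mulRight_mul K A b c
        rw [this]
        simp only [mul_sub, sub_mul, mul_add, add_mul, mul_assoc]; abel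
      rw [hsplit]
      exact trOf_add (r a * (D c * r b)) (r a * (r c * D b))
        (fd_range_comp_left (r a) (D c * r b)
          (fd_range_comp_right (D c) (r b) (fdD c)))
        (fd_range_comp_left (r a) (r c * D b)
          (fd_range_comp_left (r c) (D b) (fdD b)))
    have h4 : trOf ((r a * D c) * r b) = trOf (r a * (D c * r b)) := by
      rw [mul_assoc]
    rw [h1, h2, h3, h4]
    ring
end

section
/- Let K be a field and A a finitely generated unital K-algebra with filtration S₁ ⊆ S₂ ⊆ … (where S₁ is a finite-dimensional generating subspace containing 1, S_{n+1} = S_n·S₁, and ⋃ₙ Sₙ = A). If A = V ⊕ W is a direct sum decomposition into two almost invariant K-linear subspaces, then there exists an integer l > 0 such that for every n > 0, Sₙ ⊆ (V ∩ S_{n+l}) ⊕ (W ∩ S_{n+l}). -/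
open Submodule

section MainAux
variable {K A : Type*} [Field K] [Ring A] [Algebra K A]

lemma aux_sup_le (V U : Submodule K A)
    (h : FiniteDimensional K ((U.map V.mkQ))) :
    ∃ F : Submodule K A, FiniteDimensional K F ∧ U ≤ V ⊔ F := by
  classical
  obtain ⟨s, hs⟩ := (Submodule.fg_iff_finiteDimensional _).2 h
  have hch : ∀ y : {y : A ⧸ V // y ∈ s}, ∃ u, u ∈ U ∧ V.mkQ u = (y : A ⧸ V) := by
    rintro ⟨y, hy⟩
    have hmem : y ∈ U.map V.mkQ := hs ▸ subset_span hy
    obtain ⟨u, hu, hu2⟩ := Submodule.mem_map.1 hmem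
    exact ⟨u, hu, hu2⟩
  choose g hg1 hg2 using hch
  refine ⟨span K (Set.range g), FiniteDimensional.span_of_finite K (Set.finite_range g), ?_⟩
  intro u hu
  have h1 : V.mkQ u ∈ span K (s : Set (A ⧸ V)) := by
    rw [hs]; exact Submodule.mem_map_of_mem hu
  have h2 : span K (s : Set (A ⧸ V)) ≤ (span K (Set.range g)).map V.mkQ := by
    rw [Submodule.span_le]
    intro y hy
    exact ⟨g ⟨y, hy⟩, subset_span ⟨⟨y, hy⟩, rfl⟩, hg2 ⟨y, hy⟩⟩
  obtain ⟨f, hf, hf2⟩ := h2 h1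
  have huf : u - f ∈ V := by
    have : V.mkQ (u - f) = 0 := by rw [map_sub, hf2, sub_self]
    rwa [Submodule.mkQ_apply, Submodule.Quotient.mk_eq_zero] at this
  have hue : u = (u - f) + f := by abel
  rw [hue]
  exact Submodule.add_mem_sup huf hf

lemma aux_mul_le (V S₁ : Submodule K A) (hfd : FiniteDimensional K S₁)
    (hV : ∀ x : A, FiniteDimensional K ((V.map (LinearMap.mulRight K x)).map V.mkQ)) :
    ∃ F : Submodule K A, FiniteDimensional K F ∧ V * S₁ ≤ V ⊔ F := by
  classical
  obtain ⟨T, hT⟩ := (Submodule.fg_iff_finiteDimensional _).2 hfd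
  have hFt : ∀ t : A, ∃ F : Submodule K A, FiniteDimensional K F ∧
      V.map (LinearMap.mulRight K t) ≤ V ⊔ F :=
    fun t => aux_sup_le V _ (hV t)
  choose Ft hFt1 hFt2 using hFt
  haveI : ∀ t : A, FiniteDimensional K (Ft t) := hFt1
  refine ⟨T.sup Ft, Submodule.finiteDimensional_finset_sup T Ft, ?_⟩
  rw [Submodule.mul_le]
  intro v hv x hx
  rw [← hT] at hx
  have hle : span K (T : Set A) ≤ Submodule.comap (LinearMap.mulLeft K v) (V ⊔ T.sup Ft) := by
    rw [Submodule.span_le]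
    intro t ht
    have h1 : v * t ∈ V ⊔ Ft t := hFt2 t ⟨v, hv, rfl⟩
    exact sup_le_sup_left (Finset.le_sup ht) V h1
  exact hle hx

lemma aux_pow_mono (S₁ : Submodule K A) (hone : (1 : A) ∈ S₁) :
    Monotone (fun n : ℕ => S₁ ^ n) := by
  apply monotone_nat_of_le_succ
  intro n
  calc S₁ ^ n = S₁ ^ n * 1 := (mul_one _).symm
  _ ≤ S₁ ^ n * S₁ := mul_le_mul' le_rfl ((Submodule.one_le).2 hone)
  _ = S₁ ^ (n+1) := (pow_succ S₁ n).symm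

lemma aux_fin_le_pow (S₁ F : Submodule K A) (hone : (1 : A) ∈ S₁)
    (hgen : (⨆ n : ℕ, S₁ ^ n) = ⊤) (hF : FiniteDimensional K F) :
    ∃ n : ℕ, F ≤ S₁ ^ n := by
  classical
  have hmono := aux_pow_mono S₁ hone
  obtain ⟨T, hT⟩ := (Submodule.fg_iff_finiteDimensional _).2 hF
  have hmem : ∀ t : A, ∃ n : ℕ, t ∈ S₁ ^ n := by
    intro t
    have ht : t ∈ (⨆ n : ℕ, S₁ ^ n) := hgen ▸ Submodule.mem_top
    exact (Submodule.mem_iSup_of_directed _ hmono.directed_le).1 ht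
  choose idx hidx using hmem
  refine ⟨T.sup idx, ?_⟩
  rw [← hT, Submodule.span_le]
  intro t ht
  exact hmono (Finset.le_sup ht) (hidx t)

end MainAux

/-- Let `A` be a finitely generated algebra with filtration `Sₙ = S₁ⁿ`
(`S₁` a finite-dimensional generating subspace containing `1`). If `A = V ⊕ W` with
`V`, `W` almost invariant, then there is `l > 0` such that for all `n > 0`,
`Sₙ ⊆ (V ∩ S_{n+l}) ⊔ (W ∩ S_{n+l})`. -/
theorem filtration_decomposition
    (K A : Type*) [Field K] [Ring A] [Algebra K A]
    (S₁ : Submodule K A) (hone : (1 : A) ∈ S₁)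
    (hfd : FiniteDimensional K S₁) (hgen : (⨆ n : ℕ, S₁ ^ n) = ⊤)
    (V W : Submodule K A) (hVW : IsCompl V W)
    (hV : AlmostInvariant K V) (hW : AlmostInvariant K W) :
    ∃ l : ℕ, 0 < l ∧ ∀ n : ℕ, 0 < n →
      S₁ ^ n ≤ (V ⊓ S₁ ^ (n + l)) ⊔ (W ⊓ S₁ ^ (n + l)) := by
  classical
  have hmono := aux_pow_mono S₁ hone
  obtain ⟨FV, hFVfd, hFV⟩ := aux_mul_le V S₁ hfd hV
  obtain ⟨FW, hFWfd, hFW⟩ := aux_mul_le W S₁ hfd hW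
  set p : A →ₗ[K] A := V.subtype.comp (V.linearProjOfIsCompl W hVW) with hp
  have hpmem : ∀ a : A, p a ∈ V := fun a => (V.linearProjOfIsCompl W hVW a).2
  have hpV : ∀ v ∈ V, p v = v := by
    intro v hv
    have h := Submodule.linearProjOfIsCompl_apply_left hVW ⟨v, hv⟩
    simp only [hp, LinearMap.comp_apply, Submodule.subtype_apply]
    exact congrArg Subtype.val h
  have hpW : ∀ w ∈ W, p w = 0 := by
    intro w hw
    have h := Submodule.linearProjOfIsCompl_apply_right hVW ⟨w, hw⟩
    simp only [hp, LinearMap.comp_apply, Submodule.subtype_apply]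
    exact congrArg Subtype.val h
  have hsub : ∀ a : A, a - p a ∈ W := by
    intro a
    have h := Submodule.projection_add_projection_eq_self hVW a
    have heq : a - p a = ((W.linearProjOfIsCompl V hVW.symm) a : A) := by
      simp only [hp, LinearMap.comp_apply, Submodule.subtype_apply]
      exact sub_eq_of_eq_add' h.symm
    rw [heq]
    exact ((W.linearProjOfIsCompl V hVW.symm) a).2
  -- the big finite-dimensional space
  set G : Submodule K A := ((FV ⊔ FW) ⊔ ((FV ⊔ FW).map p)) ⊔ S₁.map p with hG
  have hGfd : FiniteDimensional K G := by
    have f1 := (Submodule.fg_iff_finiteDimensional FV).2 hFVfd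
    have f2 := (Submodule.fg_iff_finiteDimensional FW).2 hFWfd
    have f3 := (Submodule.fg_iff_finiteDimensional S₁).2 hfd
    exact (Submodule.fg_iff_finiteDimensional G).1
      (((f1.sup f2).sup ((f1.sup f2).map p)).sup (f3.map p))
  obtain ⟨l₀, hl₀⟩ := aux_fin_le_pow S₁ G hone hgen hGfd
  refine ⟨l₀ + 1, Nat.succ_pos _, ?_⟩
  set l := l₀ + 1 with hl
  have hGl : G ≤ S₁ ^ l := hl₀.trans (hmono (Nat.le_succ _))
  -- key claim: p maps S₁ ^ n into S₁ ^ (n + l)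
  have key : ∀ n : ℕ, 0 < n → (S₁ ^ n).map p ≤ S₁ ^ (n + l) := by
    intro n hn
    induction n with
    | zero => exact absurd hn (lt_irrefl 0)
    | succ n ih =>
      rcases Nat.eq_zero_or_pos n with h0 | hpos
      · subst h0
        rw [pow_one, Submodule.map_le_iff_le_comap]
        intro x hx
        have : p x ∈ G := le_sup_right (α := Submodule K A) (Submodule.mem_map_of_mem hx)
        exact Submodule.mem_comap.2 (hmono (Nat.le_add_left l 1) (hGl this))
      · have ihn := ih hpos
        rw [Submodule.map_le_iff_le_comap, pow_succ, Submodule.mul_le]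
        intro s hs x hx
        rw [Submodule.mem_comap]
        -- decompose s = p s + (s - p s)
        have hvS : p s ∈ S₁ ^ (n + l) := ihn (Submodule.mem_map_of_mem hs)
        have hw : s - p s ∈ W := hsub s
        have hwS : s - p s ∈ S₁ ^ (n + l) :=
          sub_mem (hmono (Nat.le_add_right n l) hs) hvS
        have h1 : (p s) * x ∈ V ⊔ FV := hFV (Submodule.mul_mem_mul (hpmem s) hx)
        obtain ⟨v', hv', f, hf, hvf⟩ := Submodule.mem_sup.1 h1
        have h2 : (s - p s) * x ∈ W ⊔ FW := hFW (Submodule.mul_mem_mul hw hx)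
        obtain ⟨w', hw', g, hg, hwg⟩ := Submodule.mem_sup.1 h2
        have hsx : s * x = (v' + f) + (w' + g) := by
          rw [hvf, hwg, sub_mul]; abel
        have hpsx : p (s * x) = v' + p f + p g := by
          rw [hsx, map_add, map_add, map_add, hpV v' hv', hpW w' hw']; abel
        rw [hpsx]
        -- memberships
        have hfG : f ∈ G := le_sup_left (α := Submodule K A)
          (le_sup_left (α := Submodule K A) (Submodule.mem_sup_left hf))
        have hv'S : v' ∈ S₁ ^ (n + 1 + l) := by
          have hpx : (p s) * x ∈ S₁ ^ (n + 1 + l) := by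
            have h3 := Submodule.mul_mem_mul hvS hx
            rw [← pow_succ, show n + l + 1 = n + 1 + l by omega] at h3
            exact h3
          have hfS : f ∈ S₁ ^ (n + 1 + l) :=
            hmono (by omega : l ≤ n + 1 + l) (hGl hfG)
          rw [eq_sub_of_add_eq hvf]; exact sub_mem hpx hfS
        have hpfG : p f ∈ G := le_sup_left (α := Submodule K A)
          (le_sup_right (α := Submodule K A)
            (Submodule.mem_map_of_mem (Submodule.mem_sup_left hf)))
        have hpgG : p g ∈ G := le_sup_left (α := Submodule K A)
          (le_sup_right (α := Submodule K A)
            (Submodule.mem_map_of_mem (Submodule.mem_sup_right hg)))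
        have hpfS : p f ∈ S₁ ^ (n + 1 + l) := hmono (by omega : l ≤ n + 1 + l) (hGl hpfG)
        have hpgS : p g ∈ S₁ ^ (n + 1 + l) := hmono (by omega : l ≤ n + 1 + l) (hGl hpgG)
        exact add_mem (add_mem hv'S hpfS) hpgS
  -- conclusion
  intro n hn a ha
  have h1 : p a ∈ V ⊓ S₁ ^ (n + l) :=
    ⟨hpmem a, key n hn (Submodule.mem_map_of_mem ha)⟩
  have h2 : a - p a ∈ W ⊓ S₁ ^ (n + l) :=
    ⟨hsub a, sub_mem (hmono (Nat.le_add_right n l) ha) h1.2⟩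
  exact Submodule.mem_sup.2 ⟨p a, h1, a - p a, h2, by abel⟩
end

section
/- Let K be a field and A a finitely generated unital K-algebra with filtration S₁ ⊆ S₂ ⊆ … as above, and suppose A = V ⊕ W is a direct sum decomposition into two almost invariant K-linear subspaces. If V is sparse, i.e., V ∩ S_m = V ∩ S_{m+1} for infinitely many integers m, then V is finite-dimensional. -/
/-- Let `A` be a finitely generated algebra with filtration `Sₙ = S₁ⁿ`
(`S₁` a finite-dimensional generating subspace containing `1`), and `A = V ⊕ W` a
decomposition into almost invariant subspaces. If `V` is sparse, i.e.
`V ∩ Sₘ = V ∩ S_{m+1}` for infinitely many `m`, then `V` is finite-dimensional. -/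
theorem sparse_almost_invariant_finite_dimensional
    (K A : Type*) [Field K] [Ring A] [Algebra K A]
    (S₁ : Submodule K A) (hone : (1 : A) ∈ S₁)
    (hfd : FiniteDimensional K S₁) (hgen : (⨆ n : ℕ, S₁ ^ n) = ⊤)
    (V W : Submodule K A) (hVW : IsCompl V W)
    (hV : AlmostInvariant K V) (hW : AlmostInvariant K W)
    (hsparse : ∀ N : ℕ, ∃ m : ℕ, N ≤ m ∧ V ⊓ S₁ ^ m = V ⊓ S₁ ^ (m + 1)) :
    FiniteDimensional K V := by
  classical
  -- the filtration is monotone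
  have hstep : ∀ n : ℕ, S₁ ^ n ≤ S₁ ^ (n + 1) := by
    intro n x hx
    rw [pow_succ]
    simpa using Submodule.mul_mem_mul hx hone
  have hmono : Monotone (fun n : ℕ => S₁ ^ n) := monotone_nat_of_le_succ hstep
  -- every element lies in some filtration level
  have hmem : ∀ a : A, ∃ n, a ∈ S₁ ^ n := by
    intro a
    have ha : a ∈ (⨆ n : ℕ, S₁ ^ n) := by rw [hgen]; trivial
    exact (Submodule.mem_iSup_of_directed _ hmono.directed_le).1 ha
  -- every finite-dimensional subspace lies in some filtration level
  have hfin : ∀ X : Submodule K A, FiniteDimensional K X → ∃ n, X ≤ S₁ ^ n := by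
    intro X hX
    have hfg : X.FG := (Submodule.fg_iff_finiteDimensional X).2 hX
    have hc := (Submodule.fg_iff_compact X).1 hfg
    rw [CompleteLattice.isCompactElement_iff_le_of_directed_sSup_le] at hc
    obtain ⟨Y, hYmem, hY⟩ := hc (Set.range fun n : ℕ => S₁ ^ n) ⟨S₁ ^ 0, ⟨0, rfl⟩⟩
      (directedOn_range.2 hmono.directed_le)
      (by rw [sSup_range, hgen]; exact le_top)
    obtain ⟨n, rfl⟩ := hYmem
    exact ⟨n, hY⟩
  -- the two projections associated with the direct sum decomposition
  set pV : A →ₗ[K] A := V.subtype.comp (V.linearProjOfIsCompl W hVW) with hpVdef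
  set pW : A →ₗ[K] A := W.subtype.comp (W.linearProjOfIsCompl V hVW.symm) with hpWdef
  have hadd : ∀ a : A, pV a + pW a = a := fun a =>
    Submodule.projection_add_projection_eq_self hVW a
  have hpVmem : ∀ a : A, pV a ∈ V := fun a => (V.linearProjOfIsCompl W hVW a).2
  have hpWmem : ∀ a : A, pW a ∈ W := fun a => (W.linearProjOfIsCompl V hVW.symm a).2
  have hpV0 : ∀ w ∈ W, pV w = 0 := by
    intro w hw
    have : V.linearProjOfIsCompl W hVW w = 0 :=
      Submodule.projectionOnto_apply_of_mem_right hVW hw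
    simp [hpVdef, this]
  have hpW0 : ∀ v ∈ V, pW v = 0 := by
    intro v hv
    have : W.linearProjOfIsCompl V hVW.symm v = 0 :=
      Submodule.projectionOnto_apply_of_mem_right hVW.symm hv
    simp [hpWdef, this]
  have hVker : V ≤ LinearMap.ker pW := fun v hv => LinearMap.mem_ker.2 (hpW0 v hv)
  have hWker : W ≤ LinearMap.ker pV := fun w hw => LinearMap.mem_ker.2 (hpV0 w hw)
  -- the error spaces are finite-dimensional
  have hfinDW : ∀ t : A, FiniteDimensional K ((V.map (LinearMap.mulRight K t)).map pW) := by
    intro t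
    have h1 : pW = (V.liftQ pW hVker).comp V.mkQ := (Submodule.liftQ_mkQ (p := V) pW hVker).symm
    rw [h1, Submodule.map_comp]
    haveI := hV t
    exact Module.Finite.map ((V.map (LinearMap.mulRight K t)).map V.mkQ) (V.liftQ pW hVker)
  have hfinCV : ∀ t : A, FiniteDimensional K ((W.map (LinearMap.mulRight K t)).map pV) := by
    intro t
    have h1 : pV = (W.liftQ pV hWker).comp W.mkQ := (Submodule.liftQ_mkQ (p := W) pV hWker).symm
    rw [h1, Submodule.map_comp]
    haveI := hW t
    exact Module.Finite.map ((W.map (LinearMap.mulRight K t)).map W.mkQ) (W.liftQ pV hWker)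
  -- a finite generating set for S₁
  obtain ⟨T, hT⟩ : S₁.FG := (Submodule.fg_iff_finiteDimensional S₁).2 hfd
  -- levels capturing the error spaces
  have hlev : ∀ t : A, ∃ n : ℕ, ((V.map (LinearMap.mulRight K t)).map pW ≤ S₁ ^ n) ∧
      ((W.map (LinearMap.mulRight K t)).map pV ≤ S₁ ^ n) := by
    intro t
    obtain ⟨n1, h1⟩ := hfin _ (hfinDW t)
    obtain ⟨n2, h2⟩ := hfin _ (hfinCV t)
    exact ⟨max n1 n2, h1.trans (hmono (le_max_left _ _)),
      h2.trans (hmono (le_max_right _ _))⟩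
  choose lev hlevDW hlevCV using hlev
  obtain ⟨r, hr⟩ := hmem (pV 1)
  set p : ℕ := max (T.sup lev) r with hpdef
  -- pick a sparse level above p
  obtain ⟨m, hm1, hm2⟩ := hsparse (p + 1)
  have hpm : p ≤ m := le_trans (Nat.le_succ p) hm1
  have hlevm : ∀ t ∈ T, lev t ≤ m + 1 :=
    fun t ht => le_trans (le_trans (Finset.le_sup ht) (le_max_left _ _))
      (le_trans hpm (Nat.le_succ m))
  have hlevm' : ∀ t ∈ T, lev t ≤ m :=
    fun t ht => le_trans (le_trans (Finset.le_sup ht) (le_max_left _ _)) hpm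
  -- key multiplication lemma for V ⊓ S₁ ^ m
  have keyV : ∀ v ∈ V ⊓ S₁ ^ m, ∀ x ∈ S₁, v * x ∈ (V ⊓ S₁ ^ m) ⊔ W := by
    intro v hv x hx
    rw [← hT] at hx
    induction hx using Submodule.span_induction with
    | mem t ht =>
      have htS : t ∈ S₁ := by rw [← hT]; exact Submodule.subset_span ht
      have hvt : v * t ∈ S₁ ^ (m + 1) := by
        rw [pow_succ]
        exact Submodule.mul_mem_mul hv.2 htS
      have hWmem' : pW (v * t) ∈ W := hpWmem _
      have hWmap : pW (v * t) ∈ (V.map (LinearMap.mulRight K t)).map pW := by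
        refine Submodule.mem_map_of_mem ?_
        refine ⟨v, hv.1, ?_⟩
        simp [LinearMap.mulRight_apply]
      have hWlev : pW (v * t) ∈ S₁ ^ (m + 1) :=
        hmono (hlevm t ht) (hlevDW t hWmap)
      have hVpart : pV (v * t) ∈ V ⊓ S₁ ^ (m + 1) := by
        refine ⟨hpVmem _, ?_⟩
        have heq : pV (v * t) = v * t - pW (v * t) := eq_sub_of_add_eq (hadd _)
        rw [heq]
        exact Submodule.sub_mem _ hvt hWlev
      rw [← hm2] at hVpart
      have heq2 : v * t = pV (v * t) + pW (v * t) := (hadd _).symm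
      rw [heq2]
      exact Submodule.add_mem_sup hVpart hWmem'
    | zero => simp
    | add x y hx' hy' ihx ihy =>
      rw [mul_add]
      exact Submodule.add_mem _ ihx ihy
    | smul a x hx' ih =>
      rw [mul_smul_comm]
      exact Submodule.smul_mem _ a ih
  -- key multiplication lemma for W
  have keyW : ∀ w ∈ W, ∀ x ∈ S₁, w * x ∈ (V ⊓ S₁ ^ m) ⊔ W := by
    intro w hw x hx
    rw [← hT] at hx
    induction hx using Submodule.span_induction with
    | mem t ht =>
      have hVmap : pV (w * t) ∈ (W.map (LinearMap.mulRight K t)).map pV := by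
        refine Submodule.mem_map_of_mem ?_
        refine ⟨w, hw, ?_⟩
        simp [LinearMap.mulRight_apply]
      have hVpart : pV (w * t) ∈ V ⊓ S₁ ^ m :=
        ⟨hpVmem _, hmono (hlevm' t ht) (hlevCV t hVmap)⟩
      have heq2 : w * t = pV (w * t) + pW (w * t) := (hadd _).symm
      rw [heq2]
      exact Submodule.add_mem_sup hVpart (hpWmem _)
    | zero => simp
    | add x y hx' hy' ihx ihy =>
      rw [mul_add]
      exact Submodule.add_mem _ ihx ihy
    | smul a x hx' ih =>
      rw [mul_smul_comm]
      exact Submodule.smul_mem _ a ih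
  -- U is closed under right multiplication and contains 1
  set U : Submodule K A := (V ⊓ S₁ ^ m) ⊔ W with hUdef
  have hUone : (1 : A) ∈ U := by
    have h1 : pV 1 ∈ V ⊓ S₁ ^ m :=
      ⟨hpVmem 1, hmono (le_trans (le_max_right _ _) hpm) hr⟩
    have heq : (1 : A) = pV 1 + pW 1 := (hadd 1).symm
    rw [heq]
    exact Submodule.add_mem_sup h1 (hpWmem 1)
  have hUpow : ∀ n : ℕ, S₁ ^ n ≤ U := by
    intro n
    induction n with
    | zero =>
      rw [pow_zero, Submodule.one_eq_span, Submodule.span_le, Set.singleton_subset_iff]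
      exact hUone
    | succ n ih =>
      rw [pow_succ]
      refine Submodule.mul_le.2 fun a ha x hx => ?_
      obtain ⟨b, hb, c, hc, hbc⟩ := Submodule.mem_sup.1 (ih ha)
      rw [← hbc, add_mul]
      exact Submodule.add_mem _ (keyV b hb x hx) (keyW c hc x hx)
  have hUtop : U = ⊤ := by
    rw [eq_top_iff, ← hgen]
    exact iSup_le hUpow
  -- conclude V ≤ S₁ ^ m
  have hVle : V ≤ S₁ ^ m := by
    intro v hv
    have hvU : v ∈ U := by rw [hUtop]; trivial
    obtain ⟨b, hb, c, hc, hbc⟩ := Submodule.mem_sup.1 hvU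
    have hcV : c ∈ V := by
      have hc' : c = v - b := by rw [← hbc, add_sub_cancel_left]
      rw [hc']
      exact Submodule.sub_mem V hv hb.1
    have hc0 : c = 0 := Submodule.disjoint_def.1 hVW.disjoint c hcV hc
    have : v = b := by rw [← hbc, hc0, add_zero]
    rw [this]
    exact hb.2
  haveI : FiniteDimensional K (S₁ ^ m : Submodule K A) :=
    (Submodule.fg_iff_finiteDimensional _).1
      (Submodule.FG.pow ((Submodule.fg_iff_finiteDimensional _).2 hfd) m)
  exact Submodule.finiteDimensional_of_le hVle
end

section
/- Let K be a field and A a finitely generated unital K-algebra with filtration S₁ ⊆ S₂ ⊆ … as above, and suppose there is a constant C > 0 such that dim_K Sₙ ≤ C·n for all n ≥ 1 (linear growth). If A = V₁ ⊕ V₂ ⊕ … ⊕ V_k is a direct sum decomposition into infinite-dimensional almost invariant K-linear subspaces, then k ≤ C. In particular, a finitely generated algebra of linear growth (equivalently, of Gelfand–Kirillov dimension 1) has only finitely many ends. -/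
section Aux

variable {K A : Type*} [Field K] [Ring A] [Algebra K A]

lemma pow_mono_of_one_mem (S : Submodule K A) (h : (1:A) ∈ S)
    {m n : ℕ} (hmn : m ≤ n) : S ^ m ≤ S ^ n := by
  induction n with
  | zero => simp [Nat.le_zero.mp hmn]
  | succ n ih =>
    rcases Nat.lt_or_ge m (n+1) with h' | h'
    · refine le_trans (ih (Nat.lt_succ_iff.mp h')) ?_
      calc S ^ n = S ^ n * 1 := by rw [mul_one]
      _ ≤ S ^ n * S := by gcongr; exact (Submodule.one_le).mpr h
      _ = S ^ (n+1) := (pow_succ S n).symm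
    · have : m = n+1 := le_antisymm hmn h'
      simp [this]

lemma fd_pow (S : Submodule K A) (hfd : FiniteDimensional K S) (n : ℕ) :
    FiniteDimensional K (S ^ n : Submodule K A) :=
  (Submodule.fg_iff_finiteDimensional _).mp
    (((Submodule.fg_iff_finiteDimensional S).mpr hfd).pow n)

lemma fg_le_pow (S : Submodule K A) (h1 : (1:A) ∈ S) (hgen : (⨆ n : ℕ, S ^ n) = ⊤)
    {H : Submodule K A} (hH : H.FG) : ∃ N : ℕ, 1 ≤ N ∧ H ≤ S ^ N := by
  obtain ⟨T, hT⟩ := hH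
  have hmem : ∀ x : A, ∃ n, x ∈ S ^ n := by
    intro x
    have hx : x ∈ (⨆ n : ℕ, S ^ n) := by rw [hgen]; exact Submodule.mem_top
    exact (Submodule.mem_iSup_of_chain
      ⟨fun n => S ^ n, fun m n hmn => pow_mono_of_one_mem S h1 hmn⟩ x).mp hx
  choose f hf using hmem
  refine ⟨(T.sup f) + 1, le_add_self, ?_⟩
  rw [← hT, Submodule.span_le]
  intro x hx
  exact pow_mono_of_one_mem S h1
    (Nat.le_succ_of_le (Finset.le_sup (f := f) hx)) (hf x)

lemma fin_quotient_lift (V : Submodule K A) {Q : Submodule K (A ⧸ V)} (hQ : Q.FG) :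
    ∃ G : Submodule K A, G.FG ∧ Q ≤ Submodule.map V.mkQ G := by
  obtain ⟨s, hs, hspan⟩ := Submodule.fg_def.mp hQ
  set l : (A ⧸ V) → A := Function.surjInv V.mkQ_surjective with hl
  refine ⟨Submodule.span K (l '' s), Submodule.fg_span (hs.image l), ?_⟩
  rw [Submodule.map_span, Set.image_image]
  have : ∀ x : A ⧸ V, V.mkQ (l x) = x := fun x =>
    Function.surjInv_eq V.mkQ_surjective x
  simp only [this]
  simp [hspan]

lemma almost_inv_bound (S : Submodule K A) (hS : FiniteDimensional K S)
    (V : Submodule K A) (hV : AlmostInvariant K V) :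
    ∃ G : Submodule K A, G.FG ∧ V * S ≤ V ⊔ G := by
  obtain ⟨b, hb⟩ := (Submodule.fg_iff_finiteDimensional S).mpr hS
  set Qbig : Submodule K (A ⧸ V) :=
    ⨆ x : {x : A // x ∈ b}, Submodule.map V.mkQ (V.map (LinearMap.mulRight K ↑x)) with hQbig
  set F : Submodule K A :=
    V ⊔ ⨆ x : {x : A // x ∈ b}, V.map (LinearMap.mulRight K ↑x) with hF
  have hVS : V * S ≤ F := by
    rw [Submodule.mul_le]
    intro v hv t ht
    have hsub : S ≤ Submodule.comap (LinearMap.mulLeft K v) F := by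
      rw [← hb, Submodule.span_le]
      intro x hx
      simp only [SetLike.mem_coe, Submodule.mem_comap, LinearMap.mulLeft_apply]
      have h1 : v * x ∈ V.map (LinearMap.mulRight K x) :=
        ⟨v, hv, rfl⟩
      have h2 : V.map (LinearMap.mulRight K x) ≤ F :=
        le_trans (le_iSup (fun y : {x : A // x ∈ b} =>
          V.map (LinearMap.mulRight K (y : A))) ⟨x, hx⟩) le_sup_right
      exact h2 h1
    exact hsub ht
  have hQ : Submodule.map V.mkQ (V * S) ≤ Qbig := by
    refine le_trans (Submodule.map_mono hVS) ?_
    rw [hF, Submodule.map_sup, Submodule.map_iSup]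
    have h1 : Submodule.map V.mkQ V = ⊥ := by
      rw [Submodule.eq_bot_iff]
      rintro y ⟨a, ha, rfl⟩
      simpa [Submodule.Quotient.mk_eq_zero] using ha
    rw [h1, bot_sup_eq]
  have hQbigFG : Qbig.FG := by
    refine Submodule.fg_iSup _ (fun x => ?_)
    exact (Submodule.fg_iff_finiteDimensional _).mpr (hV x)
  haveI : FiniteDimensional K Qbig :=
    (Submodule.fg_iff_finiteDimensional _).mp hQbigFG
  have hQFG : (Submodule.map V.mkQ (V * S)).FG :=
    (Submodule.fg_iff_finiteDimensional _).mpr (Submodule.finiteDimensional_of_le hQ)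
  obtain ⟨G, hGfg, hGle⟩ := fin_quotient_lift V hQFG
  refine ⟨G, hGfg, ?_⟩
  have := (LinearMap.map_le_map_iff V.mkQ (p := V * S) (p' := G)).mp
    (le_trans le_rfl hGle)
  rw [Submodule.ker_mkQ] at this
  rwa [sup_comm] at this

end Aux
set_option maxHeartbeats 1000000

/-- If `A` is a finitely generated algebra of linear growth
(`dim Sₙ ≤ C·n` for all `n ≥ 1`, where `Sₙ = S₁ⁿ`), and
`A = V₁ ⊕ ⋯ ⊕ V_k` is a direct sum of infinite-dimensional almost invariant
subspaces, then `k ≤ C`. In particular such an algebra has finitely many ends. -/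
theorem linear_growth_finitely_many_ends
    (K A : Type*) [Field K] [Ring A] [Algebra K A]
    (S₁ : Submodule K A) (hone : (1 : A) ∈ S₁)
    (hfd : FiniteDimensional K S₁) (hgen : (⨆ n : ℕ, S₁ ^ n) = ⊤)
    (C : ℝ) (hC : 0 < C)
    (hgrowth : ∀ n : ℕ, 1 ≤ n → (Module.finrank K (S₁ ^ n : Submodule K A) : ℝ) ≤ C * n)
    (k : ℕ) (V : Fin k → Submodule K A)
    (hAI : ∀ i, AlmostInvariant K (V i))
    (hinf : ∀ i, ¬ FiniteDimensional K (V i))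
    (hdirect : ∀ f : Fin k → A, (∀ i, f i ∈ V i) → (∑ i, f i) = 0 → ∀ i, f i = 0)
    (hsum : (⨆ i, V i) = ⊤) :
    (k : ℝ) ≤ C := by
  classical
  set σ : (∀ i, V i) →ₗ[K] A := ∑ i, (V i).subtype ∘ₗ LinearMap.proj i with hσ
  have hσ_apply : ∀ f : ∀ i, V i, σ f = ∑ i, ((f i : A)) := by
    intro f; simp [hσ, LinearMap.sum_apply]
  have hσ_single : ∀ (i : Fin k) (x : V i), σ (Pi.single i x) = (x : A) := by
    intro i x
    rw [hσ_apply, Finset.sum_eq_single i]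
    · simp
    · intro j _ hji; rw [Pi.single_eq_of_ne hji]; simp
    · intro h; exact absurd (Finset.mem_univ i) h
  have hinj : Function.Injective σ := by
    rw [← LinearMap.ker_eq_bot, Submodule.eq_bot_iff]
    intro f hf
    have h0 : ∀ i, ((f i : A)) = 0 := hdirect (fun i => (f i : A)) (fun i => (f i).2)
      (by rw [← hσ_apply]; exact hf)
    funext i; exact Subtype.ext (h0 i)
  have hsurj : Function.Surjective σ := by
    rw [← LinearMap.range_eq_top, eq_top_iff, ← hsum]
    refine iSup_le fun i v hv => ?_
    exact ⟨Pi.single i ⟨v, hv⟩, hσ_single i ⟨v, hv⟩⟩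
  set E : (∀ i, V i) ≃ₗ[K] A := LinearEquiv.ofBijective σ ⟨hinj, hsurj⟩ with hE
  have hE_apply : ∀ f, E f = σ f := fun f => rfl
  set p : Fin k → (A →ₗ[K] A) := fun i =>
    (V i).subtype ∘ₗ (LinearMap.proj i) ∘ₗ (E.symm : A →ₗ[K] ∀ i, V i) with hp
  have hp_apply : ∀ i a, p i a = ((E.symm a) i : A) := fun i a => rfl
  have hp_mem : ∀ i a, p i a ∈ V i := fun i a => ((E.symm a) i).2
  have hp_sum : ∀ a, ∑ i, p i a = a := by
    intro a
    have h1 : σ (E.symm a) = a := by rw [← hE_apply]; exact E.apply_symm_apply a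
    conv_rhs => rw [← h1, hσ_apply]
    exact Finset.sum_congr rfl fun i _ => hp_apply i a
  have hp_single : ∀ (j : Fin k) (v : A) (hv : v ∈ V j),
      E.symm v = Pi.single j ⟨v, hv⟩ := by
    intro j v hv
    rw [LinearEquiv.symm_apply_eq, hE_apply]
    exact (hσ_single j ⟨v, hv⟩).symm
  have hp_self : ∀ (j : Fin k) (v : A), v ∈ V j → p j v = v := by
    intro j v hv
    rw [hp_apply, hp_single j v hv, Pi.single_eq_same]
  have hp_kill : ∀ (i j : Fin k), i ≠ j → ∀ v ∈ V j, p i v = 0 := by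
    intro i j hij v hv
    rw [hp_apply, hp_single j v hv, Pi.single_eq_of_ne hij]
    rfl
  -- correction spaces from almost invariance
  have hG : ∀ i, ∃ G : Submodule K A, G.FG ∧ V i * S₁ ≤ V i ⊔ G :=
    fun i => almost_inv_bound S₁ hfd (V i) (hAI i)
  choose G hGfg hGle using hG
  have hS₁fg : S₁.FG := (Submodule.fg_iff_finiteDimensional S₁).mpr hfd
  set H : Submodule K A :=
    S₁ ⊔ (⨆ i, G i) ⊔ (⨆ i, ⨆ j, (G i).map (p j)) ⊔ (⨆ j, S₁.map (p j)) with hH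
  have hHfg : H.FG := by
    have h1 : (⨆ i : Fin k, G i).FG := Submodule.fg_iSup _ hGfg
    have h2 : (⨆ i : Fin k, ⨆ j : Fin k, (G i).map (p j)).FG :=
      Submodule.fg_iSup _ (fun i => Submodule.fg_iSup _ (fun j => (hGfg i).map _))
    have h3 : (⨆ j : Fin k, S₁.map (p j)).FG :=
      Submodule.fg_iSup _ (fun j => hS₁fg.map _)
    exact ((hS₁fg.sup h1).sup h2).sup h3
  obtain ⟨N, hN1, hHN⟩ := fg_le_pow S₁ hone hgen hHfg
  have hS1N : S₁ ≤ S₁ ^ N := by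
    refine le_trans ?_ hHN
    rw [hH]
    exact le_sup_of_le_left (le_sup_of_le_left le_sup_left)
  have hGN : ∀ i, G i ≤ S₁ ^ N := by
    intro i
    refine le_trans ?_ hHN
    rw [hH]
    exact le_sup_of_le_left (le_sup_of_le_left (le_sup_of_le_right (le_iSup G i)))
  have hpGN : ∀ i j, (G i).map (p j) ≤ S₁ ^ N := by
    intro i j
    refine le_trans ?_ hHN
    rw [hH]
    refine le_sup_of_le_left (le_sup_of_le_right ?_)
    exact le_trans (le_iSup (fun j => (G i).map (p j)) j)
      (le_iSup (fun i => ⨆ j, (G i).map (p j)) i)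
  have hpS1N : ∀ j, S₁.map (p j) ≤ S₁ ^ N := by
    intro j
    refine le_trans ?_ hHN
    rw [hH]
    exact le_sup_of_le_right (le_iSup (fun j => S₁.map (p j)) j)
  have hmul : ∀ n : ℕ, S₁ ^ n * S₁ = S₁ ^ (n+1) := fun n => (pow_succ S₁ n).symm
  have hprojlem : ∀ n : ℕ, 1 ≤ n → ∀ j, (S₁ ^ n).map (p j) ≤ S₁ ^ (n + N) := by
    intro n
    induction n with
    | zero => omega
    | succ n ih =>
      intro _ j
      rcases Nat.eq_zero_or_pos n with hn0 | hn0
      · subst hn0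
        have hb : (S₁ ^ (0+1)).map (p j) ≤ S₁ ^ N := by
          rw [zero_add, pow_one]; exact hpS1N j
        exact le_trans hb (pow_mono_of_one_mem S₁ hone (by omega))
      · rw [Submodule.map_le_iff_le_comap, pow_succ, Submodule.mul_le]
        intro u hu t ht
        simp only [Submodule.mem_comap]
        have hdecomp : u * t = ∑ i, (p i u) * t := by
          rw [← Finset.sum_mul, hp_sum u]
        rw [hdecomp, map_sum]
        refine Submodule.sum_mem _ (fun i _ => ?_)
        have h1 : p i u ∈ S₁ ^ (n+N) := ih hn0 i ⟨u, hu, rfl⟩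
        have h2 : (p i u) * t ∈ V i ⊔ G i :=
          hGle i (Submodule.mul_mem_mul (hp_mem i u) ht)
        obtain ⟨v, hv, g, hg, hvg⟩ := Submodule.mem_sup.mp h2
        have h3 : (p i u) * t ∈ S₁ ^ (n+N+1) := by
          rw [← hmul]; exact Submodule.mul_mem_mul h1 ht
        have hvS : v ∈ S₁ ^ (n+N+1) := by
          have hv' : v = (p i u) * t - g := by rw [← hvg, add_sub_cancel_right]
          rw [hv']
          exact sub_mem h3 (pow_mono_of_one_mem S₁ hone (by omega) (hGN i hg))
        have hsplit : p j ((p i u) * t) = p j v + p j g := by rw [← hvg, map_add]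
        rw [hsplit]
        refine add_mem ?_ ?_
        · rcases eq_or_ne j i with rfl | hne
          · rw [hp_self j v hv]
            exact pow_mono_of_one_mem S₁ hone (by omega) hvS
          · rw [hp_kill j i hne v hv]; exact zero_mem _
        · exact pow_mono_of_one_mem S₁ hone (by omega) (hpGN i j ⟨g, hg, rfl⟩)
  set P : Fin k → ℕ → Submodule K A := fun j n => (S₁ ^ n).map (p j) with hPdef
  have hfdpow : ∀ m, FiniteDimensional K (S₁ ^ m : Submodule K A) := fd_pow S₁ hfd
  have hPfd : ∀ j n, FiniteDimensional K (P j n) := by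
    intro j n
    haveI := hfdpow n
    infer_instance
  have hPmono : ∀ j (m n : ℕ), m ≤ n → P j m ≤ P j n := fun j m n h =>
    Submodule.map_mono (pow_mono_of_one_mem S₁ hone h)
  have hPleV : ∀ j n, P j n ≤ V j := by
    rintro j n x ⟨s, hs, rfl⟩
    exact hp_mem j s
  have hstrict : ∀ j, ∀ n, N ≤ n → P j n ≠ P j (n+1) := by
    intro j n hNn heq
    set W : Submodule K A := ⨆ i : {i : Fin k // i ≠ j}, V i.1 with hW
    have hVleW : ∀ i, i ≠ j → V i ≤ W := fun i hij =>
      le_iSup (fun i : {i : Fin k // i ≠ j} => V i.1) ⟨i, hij⟩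
    have hrest : ∀ a : A, a - p j a ∈ W := by
      intro a
      have h1 : p j a + ∑ i ∈ Finset.univ.erase j, p i a = ∑ i, p i a :=
        Finset.add_sum_erase Finset.univ (fun i => (p i) a) (Finset.mem_univ j)
      have h2 : a - p j a = ∑ i ∈ Finset.univ.erase j, p i a := by
        have h3 : p j a + ∑ i ∈ Finset.univ.erase j, p i a = a := by
          rw [h1, hp_sum a]
        rw [sub_eq_iff_eq_add']
        exact h3.symm
      rw [h2]
      refine Submodule.sum_mem _ (fun i hi => ?_)
      exact hVleW i (Finset.mem_erase.mp hi).1 (hp_mem i a)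
    set U : Submodule K A := P j n ⊔ W with hU
    have hSU : ∀ a : A, a ∈ S₁ ^ (n+1) → a ∈ U := by
      intro a ha
      have h1 : p j a ∈ P j n := by
        have : p j a ∈ P j (n+1) := ⟨a, ha, rfl⟩
        rwa [← heq] at this
      have h3 : a = p j a + (a - p j a) := by abel
      rw [h3]
      exact Submodule.add_mem _ (Submodule.mem_sup_left h1)
        (Submodule.mem_sup_right (hrest a))
    have hSU' : ∀ m : ℕ, m ≤ n+1 → S₁ ^ m ≤ U := fun m hm x hx =>
      hSU x (pow_mono_of_one_mem S₁ hone hm hx)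
    have hWS : W * S₁ ≤ U := by
      rw [hW, Submodule.iSup_mul]
      refine iSup_le fun i => ?_
      refine le_trans (hGle i.1) (sup_le ?_ ?_)
      · exact le_trans (hVleW i.1 i.2) le_sup_right
      · exact le_trans (hGN i.1) (hSU' N (by omega))
    have hUS : U * S₁ ≤ U := by
      rw [hU, Submodule.sup_mul]
      refine sup_le ?_ hWS
      rw [Submodule.mul_le]
      rintro w ⟨s, hs, rfl⟩ t ht
      have hsplit : (p j s) * t = s * t - (s - p j s) * t := by
        rw [sub_mul]; abel
      rw [hsplit]
      refine Submodule.sub_mem _ ?_ ?_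
      · refine hSU' (n+1) le_rfl ?_
        rw [← hmul n]
        exact Submodule.mul_mem_mul hs ht
      · exact hWS (Submodule.mul_mem_mul (hrest s) ht)
    have hallm : ∀ m : ℕ, S₁ ^ m ≤ U := by
      intro m
      induction m with
      | zero => exact le_trans (pow_mono_of_one_mem S₁ hone (Nat.zero_le (n+1))) (hSU' (n+1) le_rfl)
      | succ m ih =>
        rw [← hmul m]
        exact le_trans (Submodule.mul_le.mpr
          (fun a ha b hb => hUS (Submodule.mul_mem_mul (ih ha) hb))) le_rfl
    have hUtop : U = ⊤ := by
      rw [eq_top_iff, ← hgen]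
      exact iSup_le hallm
    have hVj : V j ≤ P j n := by
      intro v hv
      have h1 : v ∈ Submodule.map (p j) U := by
        rw [hUtop]
        exact ⟨v, trivial, hp_self j v hv⟩
      rw [hU, Submodule.map_sup] at h1
      rcases Submodule.mem_sup.mp h1 with ⟨x, hx, y, hy, hxy⟩
      have hx' : x ∈ P j n := by
        rcases hx with ⟨z, hz, rfl⟩
        rcases hz with ⟨s, hs, rfl⟩
        rw [hp_self j (p j s) (hp_mem j s)]
        exact ⟨s, hs, rfl⟩
      have hy' : y = 0 := by
        rcases hy with ⟨z, hz, rfl⟩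
        have hker : W ≤ LinearMap.ker (p j) := by
          rw [hW]
          refine iSup_le fun i => ?_
          intro w hw
          exact LinearMap.mem_ker.mpr (hp_kill j i.1 (Ne.symm i.2) w hw)
        exact hker hz
      rw [← hxy, hy', add_zero]
      exact hx'
    haveI := hPfd j n
    exact hinf j (Submodule.finiteDimensional_of_le hVj)
  have hrank : ∀ (j : Fin k) (m : ℕ), m ≤ Module.finrank K (P j (N + m)) := by
    intro j m
    induction m with
    | zero => exact Nat.zero_le _
    | succ m ih =>
      have hlt : P j (N+m) < P j (N+m+1) :=
        lt_of_le_of_ne (hPmono j _ _ (Nat.le_succ _)) (hstrict j (N+m) (by omega))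
      haveI := hPfd j (N+m+1)
      have h2 := Submodule.finrank_lt_finrank_of_lt hlt
      have h3 : N + (m+1) = N + m + 1 := by omega
      rw [h3]
      omega
  have hsumrank : ∀ n : ℕ, 1 ≤ n →
      ∑ j, Module.finrank K (P j n) ≤ Module.finrank K (S₁ ^ (n+N) : Submodule K A) := by
    intro n hn
    haveI := fun j => hPfd j n
    haveI := hfdpow (n+N)
    set τ : (∀ j, P j n) →ₗ[K] A := ∑ j, (P j n).subtype ∘ₗ LinearMap.proj j with hτ
    have hτ_apply : ∀ f : ∀ j, P j n, τ f = ∑ j, ((f j : A)) := by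
      intro f; simp [hτ, LinearMap.sum_apply]
    have hτrange : ∀ f : ∀ j, P j n, τ f ∈ S₁ ^ (n+N) := by
      intro f
      rw [hτ_apply]
      exact Submodule.sum_mem _ fun j _ => hprojlem n hn j (f j).2
    set τ' : (∀ j, P j n) →ₗ[K] (S₁ ^ (n+N) : Submodule K A) :=
      τ.codRestrict _ hτrange with hτ'
    have hτinj : Function.Injective τ' := by
      rw [← LinearMap.ker_eq_bot, Submodule.eq_bot_iff]
      intro f hf
      have h0 : τ f = 0 := by
        have h1 := LinearMap.mem_ker.mp hf
        have h2 := congrArg (Subtype.val) h1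
        simpa [hτ'] using h2
      have h3 := hdirect (fun j => (f j : A)) (fun j => hPleV j n (f j).2)
        (by rw [← hτ_apply]; exact h0)
      funext j
      exact Subtype.ext (h3 j)
    have h4 := LinearMap.finrank_le_finrank_of_injective hτinj
    have h6 : Module.finrank K (∀ j, P j n) = ∑ j, Module.finrank K (P j n) :=
      Module.finrank_pi_fintype K
    rw [h6] at h4
    exact h4
  have hkey : ∀ m : ℕ, (k : ℝ) * m ≤ C * (2*(N:ℝ) + m) := by
    intro m
    have h2 : k * m ≤ ∑ j, Module.finrank K (P j (N+m)) := by
      calc k * m = ∑ _j : Fin k, m := by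
            rw [Finset.sum_const, Finset.card_univ, Fintype.card_fin, smul_eq_mul]
      _ ≤ _ := Finset.sum_le_sum (fun j _ => hrank j m)
    have h3 := hsumrank (N+m) (by omega)
    have h4 := hgrowth (N+m+N) (by omega)
    have h5 : (k*m : ℕ) ≤ Module.finrank K (S₁ ^ (N+m+N) : Submodule K A) := le_trans h2 h3
    calc (k:ℝ) * m = ((k*m : ℕ) : ℝ) := by push_cast; ring
    _ ≤ (Module.finrank K (S₁ ^ (N+m+N) : Submodule K A) : ℝ) := by exact_mod_cast h5
    _ ≤ C * ((N+m+N : ℕ) : ℝ) := h4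
    _ = C * (2*(N:ℝ) + m) := by push_cast; ring
  by_contra hlt
  push_neg at hlt
  have hkC : (0:ℝ) < (k:ℝ) - C := by linarith
  obtain ⟨m, hm⟩ := exists_nat_gt ((C * (2*(N:ℝ))) / ((k:ℝ) - C))
  have h5 := hkey m
  have h6 : ((k:ℝ) - C) * m ≤ C * (2*(N:ℝ)) := by nlinarith
  have h7 : C * (2*(N:ℝ)) < ((k:ℝ) - C) * m := by
    have h8 := (div_lt_iff₀ hkC).mp hm
    linarith [mul_comm ((k:ℝ) - C) (m:ℝ)]
  linarith
end

section
/- Let K be a field, n ≥ 2, and V an infinite-dimensional almost invariant K-linear subspace of the group algebra K[ℤⁿ]. Then there exists d₀ such that for every integer d ≥ d₀ there is an element Q ∈ V whose leading term (the lexicographically largest element of its support) is the constant vector (d, d, …, d) ∈ ℤⁿ. -/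
open AddMonoidAlgebra

namespace AIproofAux

/-- The set of leading terms of nonzero elements of `V`. -/
def LTset (K : Type*) [Field K] (n : ℕ) (V : Submodule K (AddMonoidAlgebra K (Fin n → ℤ))) :
    Set (Fin n → ℤ) :=
  {w | ∃ Q ∈ V, w ∈ Q.coeff.support ∧ ∀ u ∈ Q.coeff.support, toLex u ≤ toLex w}


lemma lex_total {n : ℕ} (a b : Lex (Fin n → ℤ)) : a ≤ b ∨ b ≤ a := by
  have wf : WellFounded ((· < ·) : Fin n → Fin n → Prop) :=
    (Finite.to_wellFoundedLT (α := Fin n)).wf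
  have tri := @trichotomous _ _
    (Pi.trichotomous_lex (β := fun _ : Fin n => ℤ) (s := @fun _ => (· < ·)) (r := (· < ·)) wf)
    (ofLex a) (ofLex b)
  rcases tri with h | h | h
  · exact Or.inl (le_of_lt h)
  · exact Or.inl (le_of_eq (congrArg toLex h))
  · exact Or.inr (le_of_lt h)

lemma exists_max_of_total {α β : Type*} [PartialOrder α]
    (total : ∀ a b : α, a ≤ b ∨ b ≤ a) (s : Finset β) (f : β → α) (hs : s.Nonempty) :
    ∃ x ∈ s, ∀ y ∈ s, f y ≤ f x := by
  classical
  induction s using Finset.induction_on with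
  | empty => exact absurd hs (by simp)
  | insert _ _ ha ih =>
      rename_i a s
      rcases s.eq_empty_or_nonempty with rfl | hs'
      · exact ⟨a, by simp, by simp⟩
      · obtain ⟨x, hxs, hx⟩ := ih hs'
        rcases total (f a) (f x) with h | h
        · exact ⟨x, Finset.mem_insert_of_mem hxs, fun y hy => by
            rcases Finset.mem_insert.mp hy with rfl | hy
            · exact h
            · exact hx y hy⟩
        · exact ⟨a, Finset.mem_insert_self a s, fun y hy => by
            rcases Finset.mem_insert.mp hy with rfl | hy
            · exact le_rfl
            · exact le_trans (hx y hy) h⟩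

variable {K : Type*} [Field K] {n : ℕ}

lemma comb (T : Finset (Fin n → ℤ)) (Q : (Fin n → ℤ) → AddMonoidAlgebra K (Fin n → ℤ))
    (hQ : ∀ w ∈ T, w ∈ (Q w).coeff.support ∧ ∀ u ∈ (Q w).coeff.support, toLex u ≤ toLex w)
    (c : (Fin n → ℤ) → K) (w0 : Fin n → ℤ) (hw0T : w0 ∈ T) (hw0 : c w0 ≠ 0) :
    ∃ w ∈ T, c w ≠ 0 ∧ w ∈ (∑ x ∈ T, c x • Q x).coeff.support ∧
      ∀ z ∈ (∑ x ∈ T, c x • Q x).coeff.support, toLex z ≤ toLex w := by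
  classical
  set u : AddMonoidAlgebra K (Fin n → ℤ) := ∑ x ∈ T, c x • Q x with hu
  have happ : ∀ z, u.coeff z = ∑ x ∈ T, c x * (Q x).coeff z := by
    intro z
    rw [hu, AddMonoidAlgebra.coeff_sum, Finsupp.finset_sum_apply]
    exact Finset.sum_congr rfl fun x _ => by rw [AddMonoidAlgebra.coeff_smul, Finsupp.smul_apply, smul_eq_mul]
  set T' : Finset (Fin n → ℤ) := T.filter (fun w => c w ≠ 0) with hT'
  obtain ⟨w, hwT', hwmax⟩ := exists_max_of_total lex_total T' toLex
    ⟨w0, Finset.mem_filter.mpr ⟨hw0T, hw0⟩⟩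
  obtain ⟨hwT, hcw⟩ := Finset.mem_filter.mp hwT'
  refine ⟨w, hwT, hcw, ?_, ?_⟩
  · rw [Finsupp.mem_support_iff, happ]
    have hz : ∀ x ∈ T, x ≠ w → c x * (Q x).coeff w = 0 := by
      intro x hxT hxw
      by_cases hcx : c x = 0
      · rw [hcx, zero_mul]
      · by_cases hsupp : w ∈ (Q x).coeff.support
        · exfalso
          have h1 : toLex w ≤ toLex x := (hQ x hxT).2 w hsupp
          have h2 : toLex x ≤ toLex w := hwmax x (Finset.mem_filter.mpr ⟨hxT, hcx⟩)
          exact hxw (toLex.injective (le_antisymm h2 h1))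
        · rw [Finsupp.notMem_support_iff.mp hsupp, mul_zero]
    rw [Finset.sum_eq_single_of_mem w hwT hz]
    exact mul_ne_zero hcw (Finsupp.mem_support_iff.mp (hQ w hwT).1)
  · intro z hz
    rw [Finsupp.mem_support_iff, happ] at hz
    obtain ⟨x, hxT, hx⟩ := Finset.exists_ne_zero_of_sum_ne_zero hz
    have hcx : c x ≠ 0 := fun h => hx (by rw [h, zero_mul])
    have hzx : z ∈ (Q x).coeff.support := Finsupp.mem_support_iff.mpr
      (fun h => hx (by rw [h, mul_zero]))
    exact le_trans ((hQ x hxT).2 z hzx) (hwmax x (Finset.mem_filter.mpr ⟨hxT, hcx⟩))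


lemma lead_mem {V : Submodule K (AddMonoidAlgebra K (Fin n → ℤ))}
    {Q : AddMonoidAlgebra K (Fin n → ℤ)} (hQV : Q ∈ V) (hQ : Q ≠ 0) :
    ∃ w ∈ Q.coeff.support, w ∈ LTset K n V ∧ ∀ u ∈ Q.coeff.support, toLex u ≤ toLex w := by
  obtain ⟨w, hw, hmax⟩ := exists_max_of_total lex_total Q.coeff.support toLex
    (Finsupp.support_nonempty_iff.mpr fun h => hQ (AddMonoidAlgebra.coeff_injective (by rw [h]; rfl)))
  exact ⟨w, hw, ⟨Q, hQV, hw, hmax⟩, hmax⟩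

lemma LTset_infinite (V : Submodule K (AddMonoidAlgebra K (Fin n → ℤ)))
    (hinf : ¬ FiniteDimensional K V) : (LTset K n V).Infinite := by
  by_contra h
  rw [Set.not_infinite] at h
  apply hinf
  letI : Fintype ↥(h.toFinset : Set (Fin n → ℤ)) := FinsetCoe.fintype _
  let φ : V →ₗ[K] (↥(h.toFinset : Set (Fin n → ℤ)) → K) :=
    LinearMap.pi (fun w => (Finsupp.lapply (w : Fin n → ℤ)).comp ((AddMonoidAlgebra.coeffLinearEquiv K).toLinearMap.comp V.subtype))
  have hker : ∀ Q : V, φ Q = 0 → Q = 0 := by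
    intro Q hQ0
    by_contra hQ
    have hQne : (Q : AddMonoidAlgebra K (Fin n → ℤ)) ≠ 0 := by
      simpa using fun hh => hQ (Subtype.ext hh)
    obtain ⟨w, hw, hwL, _⟩ := lead_mem Q.2 hQne
    have hwF : w ∈ h.toFinset := h.mem_toFinset.mpr hwL
    have := congrFun hQ0 ⟨w, by simpa using hwF⟩
    simp only [φ, LinearMap.pi_apply, LinearMap.comp_apply, LinearEquiv.coe_coe, Submodule.subtype_apply,
      Finsupp.lapply_apply, Pi.zero_apply] at this
    exact Finsupp.mem_support_iff.mp hw this
  exact FiniteDimensional.of_injective φ (LinearMap.ker_eq_bot.mp (LinearMap.ker_eq_bot'.mpr hker))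

lemma translate_finite (V : Submodule K (AddMonoidAlgebra K (Fin n → ℤ)))
    (hAI : AlmostInvariant K V) (v : Fin n → ℤ) :
    (((· + v) '' LTset K n V) \ LTset K n V).Finite := by
  classical
  by_contra hSfin
  have hSinf : (((· + v) '' LTset K n V) \ LTset K n V).Infinite := hSfin
  set S := ((· + v) '' LTset K n V) \ LTset K n V with hSdef
  set x : AddMonoidAlgebra K (Fin n → ℤ) := AddMonoidAlgebra.single v (1:K) with hx
  haveI hfd := hAI x
  set W := (V.map (LinearMap.mulRight K x)).map V.mkQ with hW
  obtain ⟨T, hTS, hTcard⟩ := hSinf.exists_subset_card_eq (Module.finrank K W + 1)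
  have hEx : ∀ w : Fin n → ℤ, ∃ R : AddMonoidAlgebra K (Fin n → ℤ),
      w ∈ S → R ∈ V.map (LinearMap.mulRight K x) ∧ w ∈ R.coeff.support ∧
        ∀ u ∈ R.coeff.support, toLex u ≤ toLex w := by
    intro w
    by_cases hw : w ∈ S
    · obtain ⟨⟨ω, hωL, hωeq⟩, -⟩ := hw
      obtain ⟨Q, hQV, hQsupp, hQmax⟩ := hωL
      have hsupp : (Q * x).coeff.support = Q.coeff.support.map (addRightEmbedding v) :=
        AddMonoidAlgebra.support_coeff_mul_single Q 1 (fun y => by simp) v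
      refine ⟨Q * x, fun _ => ⟨⟨Q, hQV, by rw [LinearMap.mulRight_apply]⟩, ?_, ?_⟩⟩
      · rw [hsupp, Finset.mem_map]
        exact ⟨ω, hQsupp, by simpa using hωeq⟩
      · intro u hu
        rw [hsupp, Finset.mem_map] at hu
        obtain ⟨u', hu', rfl⟩ := hu
        have : toLex u' ≤ toLex ω := hQmax u' hu'
        have h2 : toLex u' + toLex v ≤ toLex ω + toLex v := add_le_add_left this _
        rw [← hωeq]
        simpa [← toLex_add, addRightEmbedding] using h2
    · exact ⟨0, fun h => absurd h hw⟩
  choose R hR using hEx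
  have hmem : ∀ i : {y // y ∈ T}, V.mkQ (R i) ∈ W := fun i =>
    Submodule.mem_map_of_mem ((hR i (hTS i.2)).1)
  set f : {y // y ∈ T} → W := fun i => ⟨V.mkQ (R i), hmem i⟩ with hf
  have hindep : LinearIndependent K f := by
    rw [Fintype.linearIndependent_iff]
    intro g hg
    by_contra hgne
    push_neg at hgne
    obtain ⟨i0, hi0⟩ := hgne
    set c : (Fin n → ℤ) → K := fun w => if h : w ∈ T then g ⟨w, h⟩ else 0 with hc
    have hcoe : ∀ i : {y // y ∈ T}, c (i : Fin n → ℤ) = g i := by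
      intro i; rw [hc]; simp only [dif_pos i.2]
    have h2 : (∑ i : {y // y ∈ T}, g i • V.mkQ (R (i : Fin n → ℤ))) = 0 := by
      have h3 := congrArg W.subtype hg
      rw [map_sum, map_zero] at h3
      simpa only [map_smul, hf, Submodule.coe_subtype] using h3
    have hsumV : (∑ w ∈ T, c w • R w) ∈ V := by
      have h4 : V.mkQ (∑ w ∈ T, c w • R w) = 0 := by
        rw [map_sum]
        simp only [map_smul]
        rw [← Finset.sum_coe_sort T (fun w => c w • V.mkQ (R w))]
        rw [← h2]
        exact Finset.sum_congr rfl (fun i _ => by rw [hcoe i])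
      rwa [Submodule.mkQ_apply, Submodule.Quotient.mk_eq_zero] at h4
    obtain ⟨wst, hwstT, hcwst, hwsupp, hwmax⟩ := comb T R
      (fun w hw => ⟨(hR w (hTS hw)).2.1, (hR w (hTS hw)).2.2⟩) c i0
      i0.2 (by rw [hcoe i0]; exact hi0)
    have : wst ∈ LTset K n V := ⟨_, hsumV, hwsupp, hwmax⟩
    exact (hTS hwstT).2 this
  have hcard := hindep.fintype_card_le_finrank
  rw [Fintype.card_coe, hTcard] at hcard
  omega

lemma ends (hn : 2 ≤ n) (L : Set (Fin n → ℤ)) (hLinf : L.Infinite)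
    (hfin : ∀ v : Fin n → ℤ, (((· + v) '' L) \ L).Finite) :
    ∃ N : ℤ, 1 ≤ N ∧ ∀ x : Fin n → ℤ, (∃ k, N ≤ |x k|) → x ∈ L := by
  classical
  set bad : Set (Fin n → ℤ) :=
    ⋃ j : Fin n, ((((· + Pi.single j (1:ℤ)) '' L) \ L) ∪
      (((· + (-(Pi.single j (1:ℤ)))) '' L) \ L)) with hbaddef
  have hbad : bad.Finite := Set.finite_iUnion (fun j => ((hfin _).union (hfin _)))
  have step : ∀ (z : Fin n → ℤ) (j : Fin n), z ∉ bad → z + Pi.single j 1 ∉ bad →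
      (z ∈ L ↔ z + Pi.single j 1 ∈ L) := by
    intro z j hz hz'
    constructor
    · intro hzL
      by_contra hne
      exact hz' (Set.mem_iUnion.mpr ⟨j, Or.inl ⟨⟨z, hzL, rfl⟩, hne⟩⟩)
    · intro hzL
      by_contra hne
      refine hz (Set.mem_iUnion.mpr ⟨j, Or.inr ⟨⟨z + Pi.single j 1, hzL, ?_⟩, hne⟩⟩)
      simp [add_assoc]
  obtain ⟨N, hN1, hNbad⟩ : ∃ N : ℤ, 1 ≤ N ∧ ∀ y ∈ bad, ∀ j, |y j| < N := by
    refine ⟨((hbad.toFinset.sup fun y => Finset.univ.sup fun j => (y j).natAbs : ℕ) : ℤ) + 1,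
      le_add_of_nonneg_left (Int.natCast_nonneg _), ?_⟩
    intro y hy j
    have h1 : (y j).natAbs ≤ hbad.toFinset.sup fun y => Finset.univ.sup fun j => (y j).natAbs :=
      le_trans (Finset.le_sup (f := fun j => (y j).natAbs) (Finset.mem_univ j))
        (Finset.le_sup (f := fun y => Finset.univ.sup fun j => (y j).natAbs)
          (hbad.mem_toFinset.mpr hy))
    rw [Int.abs_eq_natAbs]
    exact Int.lt_add_one_iff.mpr (by exact_mod_cast h1)
  have hgood : ∀ z : Fin n → ℤ, (∃ k, N ≤ |z k|) → z ∉ bad := by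
    rintro z ⟨k, hk⟩ hz
    exact absurd hk (not_le.mpr (hNbad z hz k))
  have line : ∀ (x : Fin n → ℤ) (j k : Fin n), j ≠ k → N ≤ |x k| →
      ∀ a b : ℤ, (Function.update x j a ∈ L ↔ Function.update x j b ∈ L) := by
    intro x j k hjk hk
    have hgoodu : ∀ t : ℤ, Function.update x j t ∉ bad := by
      intro t
      exact hgood _ ⟨k, by rwa [Function.update_of_ne (Ne.symm hjk)]⟩
    have keystep : ∀ t : ℤ,
        (Function.update x j t ∈ L ↔ Function.update x j (t+1) ∈ L) := by
      intro t
      have heq : Function.update x j t + Pi.single j 1 = Function.update x j (t+1) := by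
        funext i
        by_cases hij : i = j
        · subst hij; simp [Function.update_self]
        · simp [Function.update_of_ne hij, Pi.single_eq_of_ne hij]
      rw [← heq]
      exact step _ j (hgoodu t) (heq ▸ hgoodu (t+1))
    have chainup : ∀ (a : ℤ) (d : ℕ),
        (Function.update x j a ∈ L ↔ Function.update x j (a + d) ∈ L) := by
      intro a d
      induction d with
      | zero => simp
      | succ d ih =>
          refine ih.trans ?_
          have h := keystep (a + d)
          rwa [show a + (d:ℤ) + 1 = a + ((d:ℕ)+1 : ℕ) by push_cast; ring] at h
    intro a b
    rcases le_total a b with hab | hab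
    · have h := chainup a (b - a).toNat
      rwa [show a + ((b-a).toNat : ℤ) = b by rw [Int.toNat_of_nonneg (by omega)]; ring] at h
    · have h := chainup b (a - b).toNat
      rw [show b + ((a-b).toNat : ℤ) = a by rw [Int.toNat_of_nonneg (by omega)]; ring] at h
      exact h.symm
  have chain : ∀ (j : Fin n) (y : Fin n → ℤ), y j = N →
      ∀ s : Finset (Fin n), (y ∈ L ↔ (fun i => if i ∈ s then N else y i) ∈ L) := by
    intro j y hyj s
    induction s using Finset.induction_on with
    | empty => simp
    | insert _ _ ha ih =>
        rename_i a s
        set y' : Fin n → ℤ := fun i => if i ∈ s then N else y i with hy'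
        have hy'j : y' j = N := by by_cases h : j ∈ s <;> simp [hy', h, hyj]
        have heq : (fun i => if i ∈ insert a s then N else y i) = Function.update y' a N := by
          funext i
          by_cases hia : i = a
          · subst hia; simp [Function.update_self]
          · simp [Function.update_of_ne hia, hy', Finset.mem_insert, hia]
        rw [heq]
        refine ih.trans ?_
        by_cases haj : a = j
        · subst haj
          rw [show N = y' a from hy'j.symm, Function.update_eq_self]
        · have hNy : N ≤ |y' j| := by rw [hy'j, abs_of_pos (by omega)]
          have hl := line y' a j haj hNy (y' a) N
          rwa [Function.update_eq_self] at hl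
  have hsame : ∀ x : Fin n → ℤ, (∃ k, N ≤ |x k|) → (x ∈ L ↔ (fun _ => N) ∈ L) := by
    rintro x ⟨k, hk⟩
    haveI : Nontrivial (Fin n) := ⟨⟨⟨0, by omega⟩, ⟨1, by omega⟩, by simp [Fin.ext_iff]⟩⟩
    obtain ⟨j, hjk⟩ := exists_ne k
    have h1 : x ∈ L ↔ Function.update x j N ∈ L := by
      have h := line x j k hjk hk (x j) N
      rwa [Function.update_eq_self] at h
    have h2 := chain j (Function.update x j N) (Function.update_self j N x) Finset.univ
    have h3 : (fun i => if i ∈ (Finset.univ : Finset (Fin n)) then N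
        else Function.update x j N i) = (fun _ => N) := by
      funext i; simp
    rw [h3] at h2
    exact h1.trans h2
  have hbox : ({x : Fin n → ℤ | ∀ k, |x k| < N}).Finite := by
    apply Set.Finite.subset (Set.Finite.pi (fun _ : Fin n => Set.finite_Ioo (-N) N))
    intro x hx
    rw [Set.mem_univ_pi]
    intro i
    rw [Set.mem_Ioo, ← abs_lt]
    exact hx i
  obtain ⟨x0, x0L, hx0out⟩ := (hLinf.diff hbox).nonempty
  have hx0' : ∃ k, N ≤ |x0 k| := by
    by_contra h
    push_neg at h
    exact hx0out h
  have hconstN : (fun _ : Fin n => N) ∈ L := (hsame x0 hx0').mp x0L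
  exact ⟨N, hN1, fun x hx => (hsame x hx).mpr hconstN⟩

end AIproofAux

/-- If `V` is an infinite-dimensional almost invariant subspace of the
group algebra `K[ℤⁿ]` (`n ≥ 2`), then for all sufficiently large `d` there is `Q ∈ V`
whose leading term (the lexicographically largest element of its support) is the
constant vector `(d, d, …, d)`. -/
theorem exists_leading_term_constant_vector
    (K : Type*) [Field K] (n : ℕ) (hn : 2 ≤ n)
    (V : Submodule K (AddMonoidAlgebra K (Fin n → ℤ)))
    (hAI : AlmostInvariant K V) (hinf : ¬ FiniteDimensional K V) :
    ∃ d₀ : ℤ, ∀ d : ℤ, d₀ ≤ d →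
      ∃ Q ∈ V, (fun _ : Fin n => d) ∈ Q.coeff.support ∧
        ∀ w ∈ Q.coeff.support, toLex w ≤ toLex (fun _ : Fin n => d) := by
  obtain ⟨N, hN1, hN⟩ := AIproofAux.ends hn (AIproofAux.LTset K n V)
    (AIproofAux.LTset_infinite V hinf) (AIproofAux.translate_finite V hAI)
  refine ⟨N, fun d hd => ?_⟩
  have hk : (0 : ℕ) < n := by omega
  have hmem : (fun _ : Fin n => d) ∈ AIproofAux.LTset K n V := by
    refine hN _ ⟨⟨0, hk⟩, ?_⟩
    have h0 : (0:ℤ) ≤ d := le_trans (by omega) hd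
    simpa [abs_of_nonneg h0] using hd
  exact hmem
end

section
/- Let K be a field and n ≥ 2. If the group algebra K[ℤⁿ] is decomposed as a direct sum K[ℤⁿ] = V ⊕ W of two almost invariant K-linear subspaces, then V or W is finite-dimensional. That is, K[ℤⁿ] has only one end. -/
namespace OneEndAux

variable {n : ℕ} {α : Type*}

lemma int_const (k : ℤ → α) (hk : ∀ v, k (v + 1) = k v) (v w : ℤ) : k v = k w := by
  suffices H : ∀ (u : ℤ) (m : ℕ), k (u + m) = k u by
    rcases le_total v w with h | h
    · obtain ⟨m, rfl⟩ : ∃ m : ℕ, w = v + m := ⟨(w - v).toNat, by omega⟩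
      exact (H v m).symm
    · obtain ⟨m, rfl⟩ : ∃ m : ℕ, v = w + m := ⟨(v - w).toNat, by omega⟩
      exact H w m
  intro u m
  induction m with
  | zero => simp
  | succ m ih =>
    have : (u + ((m : ℤ) + 1)) = (u + m) + 1 := by ring
    rw [show ((m + 1 : ℕ) : ℤ) = (m : ℤ) + 1 by push_cast; ring, this, hk, ih]

lemma update_const (R : ℕ) (h : (Fin n → ℤ) → α)
    (hstep : ∀ (c : Fin n → ℤ) (i : Fin n), (∃ j, (R : ℤ) < |(c + (Pi.single i 1 : Fin n → ℤ)) j|) →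
      h (c + Pi.single i 1) = h c)
    (c : Fin n → ℤ) (i j : Fin n) (hij : j ≠ i) (hj : (R : ℤ) < |c j|) (v : ℤ) :
    h (Function.update c i v) = h c := by
  classical
  have key : ∀ w : ℤ, h (Function.update c i (w + 1)) = h (Function.update c i w) := by
    intro w
    have e : Function.update c i (w + 1) = Function.update c i w + Pi.single i 1 := by
      funext l
      by_cases hl : l = i
      · subst hl; simp
      · simp [Function.update_of_ne hl, Pi.single_eq_of_ne hl]
    rw [e]
    refine hstep _ i ⟨j, ?_⟩
    rw [← e, Function.update_of_ne hij]
    exact hj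
  have := int_const (fun w => h (Function.update c i w)) key v (c i)
  simpa using this

lemma to_corner (R : ℕ) (h : (Fin n → ℤ) → α)
    (hstep : ∀ (c : Fin n → ℤ) (i : Fin n), (∃ j, (R : ℤ) < |(c + (Pi.single i 1 : Fin n → ℤ)) j|) →
      h (c + Pi.single i 1) = h c) :
    ∀ (N : ℕ) (c : Fin n → ℤ), (Finset.univ.filter fun k => c k ≠ (R : ℤ) + 1).card ≤ N →
      (∃ j, c j = (R : ℤ) + 1) → h c = h (fun _ => (R : ℤ) + 1) := by
  classical
  intro N
  induction N with
  | zero =>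
    intro c hc _
    have hall : ∀ k, c k = (R : ℤ) + 1 := by
      intro k
      by_contra hk
      have hmem : k ∈ Finset.univ.filter (fun k => c k ≠ (R : ℤ) + 1) := by simp [hk]
      have := Finset.card_pos.mpr ⟨k, hmem⟩
      omega
    exact congrArg h (funext hall)
  | succ N ih =>
    intro c hc hj
    by_cases hall : ∀ k, c k = (R : ℤ) + 1
    · exact congrArg h (funext hall)
    · push_neg at hall
      obtain ⟨k, hk⟩ := hall
      obtain ⟨j, hj⟩ := hj
      have hjk : j ≠ k := fun e => hk (e ▸ hj)
      have hRj : (R : ℤ) < |c j| := by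
        rw [hj]
        have : (0 : ℤ) ≤ R := Int.natCast_nonneg R
        rw [abs_of_nonneg (by omega)]
        omega
      have h1 : h (Function.update c k ((R : ℤ) + 1)) = h c :=
        update_const R h hstep c k j hjk hRj _
      have hsub : (Finset.univ.filter fun l => Function.update c k ((R : ℤ) + 1) l ≠ (R : ℤ) + 1)
          ⊆ (Finset.univ.filter fun l => c l ≠ (R : ℤ) + 1).erase k := by
        intro l hl
        simp only [Finset.mem_filter, Finset.mem_univ, true_and] at hl
        have hlk : l ≠ k := by rintro rfl; simp at hl
        rw [Function.update_of_ne hlk] at hl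
        simp [Finset.mem_erase, hlk, hl]
      have hkmem : k ∈ Finset.univ.filter (fun l => c l ≠ (R : ℤ) + 1) := by simp [hk]
      have hcard : ((Finset.univ.filter fun l => Function.update c k ((R : ℤ) + 1) l ≠ (R : ℤ) + 1)).card ≤ N := by
        have h2 := Finset.card_le_card hsub
        have h3 := Finset.card_erase_of_mem hkmem
        have h4 := Finset.card_pos.mpr ⟨k, hkmem⟩
        omega
      have h2 := ih (Function.update c k ((R : ℤ) + 1)) hcard ⟨k, by simp⟩
      rw [← h1]; exact h2

lemma outside_const (hn : 2 ≤ n) (R : ℕ) (h : (Fin n → ℤ) → α)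
    (hstep : ∀ (c : Fin n → ℤ) (i : Fin n), (∃ j, (R : ℤ) < |(c + (Pi.single i 1 : Fin n → ℤ)) j|) →
      h (c + Pi.single i 1) = h c)
    (c : Fin n → ℤ) (hc : ∃ j, (R : ℤ) < |c j|) :
    h c = h (fun _ => (R : ℤ) + 1) := by
  classical
  obtain ⟨i₀, hi₀⟩ := hc
  haveI : Nontrivial (Fin n) := Fin.nontrivial_iff_two_le.mpr hn
  obtain ⟨j, hji₀⟩ := exists_ne i₀
  have s1 : h (Function.update c j ((R : ℤ) + 1)) = h c :=
    update_const R h hstep c j i₀ (Ne.symm hji₀) hi₀ _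
  have hc1j : Function.update c j ((R : ℤ) + 1) j = (R : ℤ) + 1 := by simp
  have s2 := to_corner R h hstep
    ((Finset.univ.filter fun k => Function.update c j ((R : ℤ) + 1) k ≠ (R : ℤ) + 1).card)
    (Function.update c j ((R : ℤ) + 1)) le_rfl ⟨j, hc1j⟩
  rw [← s1]; exact s2

end OneEndAux


/-- For `n ≥ 2`, the group algebra `K[ℤⁿ]` has only one end: in any
direct sum decomposition `K[ℤⁿ] = V ⊕ W` into almost invariant subspaces, `V` or `W`
is finite-dimensional. -/
theorem group_algebra_Zn_one_end
    (K : Type*) [Field K] (n : ℕ) (hn : 2 ≤ n)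
    (V W : Submodule K (AddMonoidAlgebra K (Fin n → ℤ)))
    (hVW : IsCompl V W)
    (hV : AlmostInvariant K V) (hW : AlmostInvariant K W) :
    FiniteDimensional K V ∨ FiniteDimensional K W := by
  classical
  haveI : Nonempty (Fin n) := ⟨⟨0, by omega⟩⟩
  by_cases hfinA : FiniteDimensional K (AddMonoidAlgebra K (Fin n → ℤ))
  · haveI := hfinA
    exact Or.inl inferInstance
  set A := AddMonoidAlgebra K (Fin n → ℤ) with hA
  -- the projection onto V along W
  set P : A →ₗ[K] A := V.subtype ∘ₗ (V.projectionOnto W hVW) with hPdef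
  have hPV : ∀ v ∈ V, P v = v := by
    intro v hv
    have h1 := Submodule.linearProjOfIsCompl_apply_left hVW ⟨v, hv⟩
    simp only [hPdef, LinearMap.comp_apply]
    rw [h1]; rfl
  have hPW : ∀ w ∈ W, P w = 0 := by
    intro w hw
    have h1 := Submodule.linearProjOfIsCompl_apply_right hVW ⟨w, hw⟩
    simp only [hPdef, LinearMap.comp_apply]
    rw [h1]; rfl
  have hPmem : ∀ a, P a ∈ V := fun a => (V.projectionOnto W hVW a).2
  have hPP : ∀ a, P (P a) = P a := fun a => hPV _ (hPmem a)
  have hsub : ∀ a, a - P a ∈ W := by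
    intro a
    obtain ⟨v, w, hv, hw, hvw⟩ := Submodule.codisjoint_iff_exists_add_eq.mp hVW.codisjoint a
    have hPa : P a = v := by rw [← hvw, map_add, hPV v hv, hPW w hw, add_zero]
    rw [hPa, ← hvw]
    simpa using hw
  -- finite rank commutators
  have hcomm : ∀ x : A, FiniteDimensional K
      (LinearMap.range (P ∘ₗ LinearMap.mulRight K x - LinearMap.mulRight K x ∘ₗ P)) := by
    intro x
    set Rx := LinearMap.mulRight K x with hRx
    set Q : A →ₗ[K] A := LinearMap.id - P with hQdef
    have hQ : ∀ y, Q y = y - P y := fun y => rfl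
    have hVker : V ≤ LinearMap.ker Q := by
      intro v hv
      simp [LinearMap.mem_ker, hQ, hPV v hv]
    have hWker : W ≤ LinearMap.ker P := fun w hw => by simp [LinearMap.mem_ker, hPW w hw]
    set e1 := V.liftQ Q hVker with he1
    set e2 := W.liftQ P hWker with he2
    haveI := hV x
    haveI := hW x
    haveI h1 : FiniteDimensional K ((((V.map Rx).map V.mkQ)).map e1) := Module.Finite.map _ _
    haveI h2 : FiniteDimensional K ((((W.map Rx).map W.mkQ)).map e2) := Module.Finite.map _ _
    haveI := Submodule.finiteDimensional_sup ((((V.map Rx).map V.mkQ)).map e1)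
      ((((W.map Rx).map W.mkQ)).map e2)
    apply Submodule.finiteDimensional_of_le (S₂ := ((((V.map Rx).map V.mkQ)).map e1) ⊔
      ((((W.map Rx).map W.mkQ)).map e2))
    rintro _ ⟨a, rfl⟩
    have hda : (P ∘ₗ Rx - Rx ∘ₗ P) a = P ((a - P a) * x) - Q ((P a) * x) := by
      have hsm : (a - P a) * x = a * x - (P a) * x := sub_mul _ _ _
      rw [hsm, map_sub, hQ]
      simp only [LinearMap.sub_apply, LinearMap.comp_apply,
        LinearMap.mulRight_apply, hRx]
      abel
    rw [hda]
    have m2 : P ((a - P a) * x) ∈ (((W.map Rx).map W.mkQ)).map e2 := by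
      have hmem : (a - P a) * x ∈ W.map Rx := ⟨a - P a, hsub a, rfl⟩
      have h' : e2 (W.mkQ ((a - P a) * x)) = P ((a - P a) * x) :=
        LinearMap.congr_fun (W.liftQ_mkQ P hWker) _
      exact h' ▸ Submodule.mem_map_of_mem (Submodule.mem_map_of_mem hmem)
    have m1 : Q ((P a) * x) ∈ (((V.map Rx).map V.mkQ)).map e1 := by
      have hmem : (P a) * x ∈ V.map Rx := ⟨P a, hPmem a, rfl⟩
      have h' : e1 (V.mkQ ((P a) * x)) = Q ((P a) * x) :=
        LinearMap.congr_fun (V.liftQ_mkQ _ hVker) _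
      exact h' ▸ Submodule.mem_map_of_mem (Submodule.mem_map_of_mem hmem)
    exact Submodule.sub_mem _ (Submodule.mem_sup_right m2) (Submodule.mem_sup_left m1)
    -- directional commutators and their common support
  set sg : (Fin n → ℤ) → A := fun b => AddMonoidAlgebra.single b (1 : K) with hsg
  set D : Fin n → (A →ₗ[K] A) := fun i =>
    P ∘ₗ LinearMap.mulRight K (sg (Pi.single i 1)) -
      LinearMap.mulRight K (sg (Pi.single i 1)) ∘ₗ P with hD
  haveI hDfin : ∀ i, FiniteDimensional K (LinearMap.range (D i)) := fun i => hcomm _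
  set U : Submodule K A := ⨆ i, LinearMap.range (D i) with hU
  haveI : FiniteDimensional K U := Submodule.finiteDimensional_iSup _
  obtain ⟨s, hs⟩ := (Submodule.fg_iff_finiteDimensional U).mpr ‹_›
  set S : Finset (Fin n → ℤ) := s.sup fun f => f.coeff.support with hS
  have hUsupp : ∀ f ∈ U, ∀ a, a ∉ S → f.coeff a = 0 := by
    have hle : U ≤ AddMonoidAlgebra.supported K K (↑S : Set (Fin n → ℤ)) := by
      rw [← hs]
      refine Submodule.span_le.mpr fun f hf => ?_
      refine AddMonoidAlgebra.mem_supported.mpr ?_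
      have hsub : f.coeff.support ⊆ S := Finset.le_iff_subset.mp
        (Finset.le_sup (f := fun g : A => g.coeff.support) hf)
      exact Finset.coe_subset.mpr hsub
    intro f hf a haS
    by_contra h0
    exact haS ((AddMonoidAlgebra.mem_supported.mp (hle hf)) (Finsupp.mem_support_iff.mpr h0))
  have key : ∀ (a b : Fin n → ℤ) (i : Fin n), a ∉ S →
      (P (sg (b + Pi.single i 1))).coeff a = (P (sg b)).coeff (a - Pi.single i 1) := by
    intro a b i ha
    have hm : D i (sg b) ∈ U :=
      le_iSup (fun i => LinearMap.range (D i)) i ⟨sg b, rfl⟩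
    have h0 : (D i (sg b)).coeff a = 0 := hUsupp _ hm a ha
    have e1 : (sg b) * (sg (Pi.single i 1)) = sg (b + Pi.single i 1) := by
      rw [hsg]; dsimp only
      rw [AddMonoidAlgebra.single_mul_single, mul_one]
    have e2 : (P (sg b) * sg (Pi.single i 1)).coeff a = (P (sg b)).coeff (a - Pi.single i 1) := by
      rw [hsg]; dsimp only
      rw [AddMonoidAlgebra.coeff_mul_single_apply, mul_one, sub_eq_add_neg]
    have e3 : D i (sg b) = P (sg (b + Pi.single i 1)) - P (sg b) * sg (Pi.single i 1) := by
      rw [hD]; dsimp only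
      simp only [LinearMap.sub_apply, LinearMap.comp_apply, LinearMap.mulRight_apply]
      rw [e1]
    rw [e3, AddMonoidAlgebra.coeff_sub, Finsupp.sub_apply, e2] at h0
    exact sub_eq_zero.mp h0
  -- the radius
  set R : ℕ := S.sup fun v => Finset.univ.sup fun j => (v j).natAbs with hR
  have hSR : ∀ a : Fin n → ℤ, (∃ j, (R : ℤ) < |a j|) → a ∉ S := by
    rintro a ⟨j, hj⟩ haS
    have h1 : (a j).natAbs ≤ Finset.univ.sup fun j => (a j).natAbs :=
      Finset.le_sup (f := fun j => (a j).natAbs) (Finset.mem_univ j)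
    have h2 : (Finset.univ.sup fun j => (a j).natAbs) ≤ R :=
      Finset.le_sup (f := fun v => Finset.univ.sup fun j => (v j).natAbs) haS
    rw [Int.abs_eq_natAbs] at hj
    exact absurd hj (not_lt.mpr (by exact_mod_cast le_trans h1 h2))
  set q : Fin n → ℤ := fun _ => (R : ℤ) + 1 with hq
  set lam : (Fin n → ℤ) → K := fun d => (P (sg (q - d))).coeff q with hlam
  have hconst : ∀ a b : Fin n → ℤ, (∃ j, (R : ℤ) < |a j|) → (P (sg b)).coeff a = lam (a - b) := by
    intro a b hout
    have hmain := OneEndAux.outside_const hn R (fun c => (P (sg (c - (a - b)))).coeff c) ?_ a hout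
    · have hm2 : (P (sg (a - (a - b)))).coeff a = (P (sg (q - (a - b)))).coeff q := hmain
      rw [sub_sub_cancel] at hm2
      exact hm2
    · intro c i hOut
      show (P (sg ((c + Pi.single i 1) - (a - b)))).coeff (c + Pi.single i 1) = (P (sg (c - (a - b)))).coeff c
      have e : (c + Pi.single i 1) - (a - b) = (c - (a - b)) + Pi.single i 1 := by abel
      have e' : (c + Pi.single i 1) - Pi.single i 1 = c := by abel
      rw [e, key _ _ i (hSR _ hOut), e']
  -- lam has finite support; build μ
  set F0 : Finset (Fin n → ℤ) := (P (sg 0)).coeff.support with hF0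
  have hlam0 : ∀ d, d ∉ F0 → (∃ j, (R : ℤ) < |d j|) → lam d = 0 := by
    intro d hd hout
    have h1 := hconst d 0 hout
    rw [sub_zero] at h1
    rw [← h1]
    exact Finsupp.notMem_support_iff.mp hd
  set box : Finset (Fin n → ℤ) := Fintype.piFinset fun _ => Finset.Icc (-(R : ℤ)) (R : ℤ)
    with hbox
  have hboxout : ∀ d : Fin n → ℤ, d ∉ box → ∃ j, (R : ℤ) < |d j| := by
    intro d hd
    rw [hbox, Fintype.mem_piFinset] at hd
    push_neg at hd
    obtain ⟨j, hj⟩ := hd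
    rw [Finset.mem_Icc] at hj
    refine ⟨j, ?_⟩
    have hor : (R : ℤ) < d j ∨ d j < -(R : ℤ) := by
      by_contra hcon
      push_neg at hcon
      exact hj ⟨hcon.2, hcon.1⟩
    rcases hor with h | h
    · exact lt_of_lt_of_le h (le_abs_self _)
    · exact lt_of_lt_of_le (by linarith : (R : ℤ) < -(d j)) (neg_le_abs _)
  set T : Finset (Fin n → ℤ) := F0 ∪ box with hT
  set μ : A := ∑ d ∈ T, lam d • sg d with hmudef
  have hmu : ∀ d, μ.coeff d = lam d := by
    intro d
    have hsum : μ.coeff d = ∑ e ∈ T, (lam e • sg e).coeff d := by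
      rw [hmudef, AddMonoidAlgebra.coeff_sum]; exact Finsupp.finset_sum_apply T _ d
    by_cases hd : d ∈ T
    · rw [hsum, Finset.sum_eq_single d
        (fun e _ hne => by
          rw [AddMonoidAlgebra.coeff_smul_apply, hsg]; dsimp only
          rw [AddMonoidAlgebra.coeff_single_apply, if_neg hne, smul_zero])
        (fun h => absurd hd h)]
      rw [AddMonoidAlgebra.coeff_smul_apply, hsg]; dsimp only
      rw [AddMonoidAlgebra.coeff_single_apply, if_pos rfl, smul_eq_mul, mul_one]
    · have h1 : μ.coeff d = 0 := by
        rw [hsum]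
        refine Finset.sum_eq_zero fun e he => ?_
        have hne : e ≠ d := fun h => hd (h ▸ he)
        rw [AddMonoidAlgebra.coeff_smul_apply, hsg]; dsimp only
        rw [AddMonoidAlgebra.coeff_single_apply, if_neg hne, smul_zero]
      have h2 : lam d = 0 := hlam0 d (fun h => hd (Finset.mem_union_left _ h))
        (hboxout d (fun h => hd (Finset.mem_union_right _ h)))
      rw [h1, h2]
  -- the finite rank operator F = P - mulRight μ
  set Fm : A →ₗ[K] A := P - LinearMap.mulRight K μ with hFm
  have hFapply : ∀ x : A, Fm x = P x - x * μ := fun x => by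
    rw [hFm]; simp only [LinearMap.sub_apply, LinearMap.mulRight_apply]
  have hFsupp : ∀ (x : A) (a : Fin n → ℤ), a ∉ box → (Fm x).coeff a = 0 := by
    intro x
    induction x using AddMonoidAlgebra.induction_linear with
    | zero => intro a _; rw [map_zero]; rfl
    | add f g hf hg => intro a ha; rw [map_add, AddMonoidAlgebra.coeff_add, Finsupp.add_apply, hf a ha, hg a ha, add_zero]
    | single b r =>
      intro a ha
      have hout : ∃ j, (R : ℤ) < |a j| := hboxout a ha
      have hone : (Fm (sg b)).coeff a = 0 := by
        rw [hFapply, AddMonoidAlgebra.coeff_sub, Finsupp.sub_apply]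
        have hx : (sg b * μ).coeff a = lam (a - b) := by
          rw [hsg]; dsimp only
          rw [AddMonoidAlgebra.coeff_single_mul_apply, one_mul, hmu, neg_add_eq_sub]
        rw [hx, hconst a b hout, sub_self]
      have hsingle_eq : (AddMonoidAlgebra.single b r : A) = r • sg b := by
        rw [hsg]; dsimp only
        rw [AddMonoidAlgebra.smul_single, smul_eq_mul, mul_one]
      rw [hsingle_eq, map_smul, AddMonoidAlgebra.coeff_smul_apply, hone, smul_zero]
  haveI hspanfin : FiniteDimensional K (Submodule.span K (sg '' ↑box)) :=
    FiniteDimensional.span_of_finite K (box.finite_toSet.image _)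
  have hFrange : LinearMap.range Fm ≤ Submodule.span K (sg '' ↑box) := by
    rintro _ ⟨x, rfl⟩
    have hsupp : ↑(Fm x).coeff.support ⊆ (↑box : Set (Fin n → ℤ)) := by
      intro a ha
      by_contra hnot
      exact (Finsupp.mem_support_iff.mp ha) (hFsupp x a hnot)
    have hf_eq : Fm x = ∑ d ∈ (Fm x).coeff.support, (Fm x).coeff d • sg d := by
      conv_lhs => rw [← AddMonoidAlgebra.sum_coeff_single (Fm x)]
      rw [Finsupp.sum]
      refine Finset.sum_congr rfl fun d hd => ?_
      rw [hsg]; dsimp only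
      rw [AddMonoidAlgebra.smul_single, smul_eq_mul, mul_one]
    rw [hf_eq]
    exact Submodule.sum_mem _ fun d hd => Submodule.smul_mem _ _
      (Submodule.subset_span ⟨d, hsupp hd, rfl⟩)
  haveI hFfin : FiniteDimensional K (LinearMap.range Fm) :=
    Submodule.finiteDimensional_of_le hFrange
  -- μ * μ = μ
  set nu : A := μ * μ - μ with hnu
  have hnurange : LinearMap.range (LinearMap.mulRight K nu) ≤
      LinearMap.range Fm ⊔ (LinearMap.range Fm).map P := by
    rintro _ ⟨x, rfl⟩
    have hid : LinearMap.mulRight K nu x = (Fm (Fm x) - Fm (P x) + Fm x) - P (Fm x) := by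
      rw [LinearMap.mulRight_apply, hnu]
      simp only [hFapply, map_sub, hPP]
      ring
    rw [hid]
    refine Submodule.sub_mem _ ?_
      (Submodule.mem_sup_right (Submodule.mem_map_of_mem ⟨x, rfl⟩))
    exact Submodule.add_mem _ (Submodule.sub_mem _ (Submodule.mem_sup_left ⟨Fm x, rfl⟩)
      (Submodule.mem_sup_left ⟨P x, rfl⟩)) (Submodule.mem_sup_left ⟨x, rfl⟩)
  haveI : FiniteDimensional K ((LinearMap.range Fm).map P) := Module.Finite.map _ _
  haveI := Submodule.finiteDimensional_sup (LinearMap.range Fm) ((LinearMap.range Fm).map P)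
  haveI hnufin : FiniteDimensional K (LinearMap.range (LinearMap.mulRight K nu)) :=
    Submodule.finiteDimensional_of_le hnurange
  have hAinf : ¬ FiniteDimensional K A := hfinA
  have hnu0 : nu = 0 := by
    by_contra hne
    have hinj : Function.Injective (LinearMap.mulRight K nu) := by
      intro x y hxy
      simp only [LinearMap.mulRight_apply] at hxy
      have hz : (x - y) * nu = 0 := by rw [sub_mul, hxy, sub_self]
      rcases mul_eq_zero.mp hz with h | h
      · exact sub_eq_zero.mp h
      · exact absurd h hne
    exact hAinf (LinearEquiv.finiteDimensional (LinearEquiv.ofInjective _ hinj).symm)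
  have hcases : μ = 0 ∨ μ = 1 := by
    have hmm : μ * (μ - 1) = 0 := by rw [mul_sub, mul_one, ← hnu]; exact hnu0
    rcases mul_eq_zero.mp hmm with h | h
    · exact Or.inl h
    · exact Or.inr (sub_eq_zero.mp h)
  rcases hcases with h0 | h1
  · left
    have hVle : V ≤ LinearMap.range Fm := by
      intro v hv
      refine ⟨v, ?_⟩
      rw [hFapply, h0, mul_zero, sub_zero, hPV v hv]
    exact Submodule.finiteDimensional_of_le hVle
  · right
    have hWle : W ≤ LinearMap.range Fm := by
      intro w hw
      refine ⟨-w, ?_⟩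
      rw [hFapply, map_neg, hPW w hw, neg_zero, h1, mul_one, zero_sub, neg_neg]
    exact Submodule.finiteDimensional_of_le hWle
end

section
/- Let K be a field and K[x] the polynomial algebra in one variable. Every infinite-dimensional almost invariant K-linear subspace S of K[x] has finite codimension in K[x]. Consequently, K[x] cannot be written as the direct sum of two infinite-dimensional almost invariant subspaces, i.e., K[x] has one end. -/
open Polynomial

namespace PolyOneEnd

variable {K : Type*} [Field K]

/-- The set of degrees of nonzero elements of a submodule of `K[X]`. -/
def degSet (S : Submodule K K[X]) : Set ℕ := {n | ∃ p ∈ S, p ≠ 0 ∧ p.natDegree = n}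

lemma finiteDimensional_of_degSet_finite {S : Submodule K K[X]}
    (h : (degSet S).Finite) : FiniteDimensional K S := by
  obtain ⟨N, hN⟩ := h.bddAbove
  have hle : S ≤ degreeLT K (N + 1) := by
    intro p hp
    rw [Polynomial.mem_degreeLT]
    rcases eq_or_ne p 0 with rfl | hp0
    · rw [degree_zero]; exact WithBot.bot_lt_coe _
    · have hmem : p.natDegree ∈ degSet S := ⟨p, hp, hp0, rfl⟩
      have h1 : p.natDegree ≤ N := hN hmem
      calc p.degree ≤ (p.natDegree : WithBot ℕ) := degree_le_natDegree
        _ < ((N + 1 : ℕ) : WithBot ℕ) := by exact_mod_cast Nat.lt_succ_of_le h1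
  haveI : FiniteDimensional K (degreeLT K (N + 1)) :=
    (degreeLTEquiv K (N + 1)).symm.finiteDimensional
  exact Submodule.finiteDimensional_of_le hle

/-- Key step: almost invariance under `X` shows that for large `n` in the degree set,
`n + 1` is also in the degree set. -/
lemma step {S : Submodule K K[X]}
    (h : FiniteDimensional K ((S.map (LinearMap.mulRight K (X : K[X]))).map S.mkQ)) :
    ∃ N, ∀ n ∈ degSet S, N ≤ n → n + 1 ∈ degSet S := by
  set Q : Submodule K (K[X] ⧸ S) := (S.map (LinearMap.mulRight K (X : K[X]))).map S.mkQ with hQ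
  have hfg : Q.FG := (Submodule.fg_iff_finiteDimensional _).mpr h
  obtain ⟨T, hT⟩ := hfg
  -- lift the generators
  have hlift : ∀ t : T, ∃ g : K[X], S.mkQ g = (t : K[X] ⧸ S) := by
    intro ⟨t, ht⟩
    have htQ : t ∈ Q := hT ▸ Submodule.subset_span ht
    obtain ⟨g, _, hg⟩ := htQ
    exact ⟨g, hg⟩
  choose f hf using hlift
  classical
  set N : ℕ := Finset.univ.sup (fun t : T => (f t).natDegree) with hNdef
  refine ⟨N, ?_⟩
  rintro n ⟨s, hsS, hs0, rfl⟩ hn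
  -- `mkQ (s * X)` lies in `Q = span T`
  have hsx : S.mkQ (s * X) ∈ Q := by
    refine Submodule.mem_map_of_mem ?_
    refine ⟨s, hsS, ?_⟩
    simp [LinearMap.mulRight_apply]
  -- `span T = map mkQ (span (range f))`
  have hTimg : (T : Set (K[X] ⧸ S)) = S.mkQ '' (Set.range f) := by
    ext t
    constructor
    · intro ht
      exact ⟨f ⟨t, ht⟩, Set.mem_range_self _, hf ⟨t, ht⟩⟩
    · rintro ⟨g, ⟨u, rfl⟩, rfl⟩
      rw [hf u]
      exact u.2
  have hspan : Q = Submodule.map S.mkQ (Submodule.span K (Set.range f)) := by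
    rw [← hT, hTimg, Submodule.span_image]
  obtain ⟨g, hgspan, hg⟩ : ∃ g ∈ Submodule.span K (Set.range f),
      S.mkQ g = S.mkQ (s * X) := by
    have := hspan ▸ hsx
    exact this
  -- degree bound on g
  have hgdeg : g.degree ≤ (N : WithBot ℕ) := by
    have hsub : Submodule.span K (Set.range f) ≤ degreeLE K (N : WithBot ℕ) := by
      rw [Submodule.span_le]
      rintro _ ⟨u, rfl⟩
      rw [SetLike.mem_coe, Polynomial.mem_degreeLE]
      calc (f u).degree ≤ ((f u).natDegree : WithBot ℕ) := degree_le_natDegree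
        _ ≤ (N : WithBot ℕ) := by
          exact_mod_cast Finset.le_sup (f := fun t : T => (f t).natDegree)
            (Finset.mem_univ u)
    exact Polynomial.mem_degreeLE.mp (hsub hgspan)
  -- the element s*X - g lies in S and has degree n+1
  have hsx0 : s * X ≠ 0 := mul_ne_zero hs0 X_ne_zero
  have hsxdeg : (s * X).degree = ((s.natDegree + 1 : ℕ) : WithBot ℕ) := by
    rw [degree_eq_natDegree hsx0, natDegree_mul_X hs0]
  have hlt : g.degree < (s * X).degree := by
    rw [hsxdeg]
    calc g.degree ≤ (N : WithBot ℕ) := hgdeg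
      _ ≤ (s.natDegree : WithBot ℕ) := by exact_mod_cast hn
      _ < ((s.natDegree + 1 : ℕ) : WithBot ℕ) := by exact_mod_cast Nat.lt_succ_self _
  have hdeg : (s * X - g).degree = ((s.natDegree + 1 : ℕ) : WithBot ℕ) := by
    rw [degree_sub_eq_left_of_degree_lt hlt, hsxdeg]
  have hne : s * X - g ≠ 0 := by
    intro h0
    rw [h0, degree_zero] at hdeg
    exact WithBot.bot_ne_coe hdeg
  have hmemS : s * X - g ∈ S := by
    rw [Submodule.mkQ_apply, Submodule.mkQ_apply] at hg
    exact (Submodule.Quotient.eq S).mp hg.symm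
  exact ⟨s * X - g, hmemS, hne, natDegree_eq_of_degree_eq_some hdeg⟩

lemma eventually_mem {S : Submodule K K[X]} (hinf : (degSet S).Infinite)
    {N : ℕ} (hstep : ∀ n ∈ degSet S, N ≤ n → n + 1 ∈ degSet S) :
    ∃ M, ∀ n, M ≤ n → n ∈ degSet S := by
  obtain ⟨d, hd, hNd⟩ : ∃ d ∈ degSet S, N ≤ d := by
    by_contra hc
    push_neg at hc
    exact hinf (Set.Finite.subset (Set.finite_Iio N) (fun n hn => hc n hn))
  refine ⟨d, ?_⟩
  have key : ∀ k, d + k ∈ degSet S := by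
    intro k
    induction k with
    | zero => simpa using hd
    | succ k ih => exact hstep (d + k) ih (le_trans hNd (Nat.le_add_right _ _))
  intro n hn
  obtain ⟨k, rfl⟩ := Nat.exists_eq_add_of_le hn
  exact key k

lemma quotient_finiteDimensional {S : Submodule K K[X]} {M : ℕ}
    (hM : ∀ n, M ≤ n → n ∈ degSet S) : FiniteDimensional K (K[X] ⧸ S) := by
  have key : ∀ n (p : K[X]), p.natDegree < n →
      ∃ q ∈ degreeLT K M, S.mkQ p = S.mkQ q := by
    intro n
    induction n with
    | zero => intro p hp; omega
    | succ n ih =>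
      intro p hp
      rcases eq_or_ne p 0 with rfl | hp0
      · exact ⟨0, by simp [Polynomial.mem_degreeLT, WithBot.bot_lt_coe], rfl⟩
      by_cases hdM : p.natDegree < M
      · refine ⟨p, ?_, rfl⟩
        rw [Polynomial.mem_degreeLT, degree_eq_natDegree hp0]
        exact_mod_cast hdM
      · push_neg at hdM
        obtain ⟨s, hsS, hs0, hsd⟩ := hM p.natDegree hdM
        set c : K := p.leadingCoeff / s.leadingCoeff with hc
        have hc0 : c ≠ 0 := div_ne_zero (leadingCoeff_ne_zero.mpr hp0)
          (leadingCoeff_ne_zero.mpr hs0)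
        set r : K[X] := p - C c * s with hr
        have hCsS : C c * s ∈ S := by
          rw [← Polynomial.smul_eq_C_mul]
          exact S.smul_mem c hsS
        have hmk : S.mkQ p = S.mkQ r := by
          have : S.mkQ (C c * s) = 0 := by
            simpa [Submodule.mkQ_apply, Submodule.Quotient.mk_eq_zero] using hCsS
          rw [hr, map_sub, this, sub_zero]
        rcases eq_or_ne r 0 with hr0 | hr0
        · refine ⟨0, by simp [Polynomial.mem_degreeLT, WithBot.bot_lt_coe], ?_⟩
          rw [hmk, hr0]
        · have hdegeq : p.degree = (C c * s).degree := by
            rw [degree_C_mul hc0, degree_eq_natDegree hp0, degree_eq_natDegree hs0, hsd]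
          have hlc : p.leadingCoeff = (C c * s).leadingCoeff := by
            rw [leadingCoeff_mul, leadingCoeff_C, hc,
              div_mul_cancel₀ _ (leadingCoeff_ne_zero.mpr hs0)]
          have hlt : r.degree < p.degree := degree_sub_lt hdegeq hp0 hlc
          have hnlt : r.natDegree < p.natDegree := natDegree_lt_natDegree hr0 hlt
          obtain ⟨q, hq, hmk2⟩ := ih r (by omega)
          exact ⟨q, hq, hmk.trans hmk2⟩
  -- surjection from degreeLT K M onto the quotient
  haveI : FiniteDimensional K (degreeLT K M) := (degreeLTEquiv K M).symm.finiteDimensional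
  have hsurj : Function.Surjective (S.mkQ.comp (degreeLT K M).subtype) := by
    intro y
    obtain ⟨p, rfl⟩ := S.mkQ_surjective y
    obtain ⟨q, hq, hmk⟩ := key (p.natDegree + 1) p (Nat.lt_succ_self _)
    exact ⟨⟨q, hq⟩, hmk.symm⟩
  exact Module.Finite.of_surjective _ hsurj

end PolyOneEnd

/-- Every infinite-dimensional almost invariant subspace of `K[x]` has
finite codimension; consequently `K[x]` is not a direct sum of two infinite-dimensional
almost invariant subspaces, i.e. `K[x]` has one end. -/
theorem polynomial_algebra_one_end (K : Type*) [Field K] :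
    (∀ S : Submodule K (Polynomial K), AlmostInvariant K S →
      ¬ FiniteDimensional K S → FiniteDimensional K (Polynomial K ⧸ S)) ∧
    ¬ ∃ V W : Submodule K (Polynomial K), IsCompl V W ∧
      AlmostInvariant K V ∧ AlmostInvariant K W ∧
      ¬ FiniteDimensional K V ∧ ¬ FiniteDimensional K W := by
  have part1 : ∀ S : Submodule K (Polynomial K), AlmostInvariant K S →
      ¬ FiniteDimensional K S → FiniteDimensional K (Polynomial K ⧸ S) := by
    intro S hAI hS
    have hinf : (PolyOneEnd.degSet S).Infinite := by
      intro hfin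
      exact hS (PolyOneEnd.finiteDimensional_of_degSet_finite hfin)
    obtain ⟨N, hN⟩ := PolyOneEnd.step (hAI Polynomial.X)
    obtain ⟨M, hM⟩ := PolyOneEnd.eventually_mem hinf hN
    exact PolyOneEnd.quotient_finiteDimensional hM
  refine ⟨part1, ?_⟩
  rintro ⟨V, W, hc, hV, _, hVfd, hWfd⟩
  haveI := part1 V hV hVfd
  exact hWfd (Submodule.quotientEquivOfIsCompl V W hc).finiteDimensional
end

section
/- Let K be a field and K[x, x⁻¹] the Laurent polynomial algebra in one variable. If K[x, x⁻¹] = V₁ ⊕ V₂ ⊕ V₃ is a direct sum decomposition into three almost invariant K-linear subspaces, then at least one of V₁, V₂, V₃ is finite-dimensional. Moreover, K[x, x⁻¹] is the direct sum of the two infinite-dimensional almost invariant subspaces span_K{xᵏ : k ≥ 0} and span_K{xᵏ : k < 0}; hence K[x, x⁻¹] has exactly two ends. -/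
open LaurentPolynomial Finsupp Set Pointwise

section Helpers

variable {K : Type*} [Field K]

/-- Coefficient view of a Laurent polynomial. -/
def co {K : Type*} [Field K] (f : LaurentPolynomial K) : ℤ →₀ K := f.coeff

/-- The subspace of Laurent polynomials supported on a set of exponents. -/
noncomputable def SP (K : Type*) [Field K] (s : Set ℤ) : Submodule K (LaurentPolynomial K) :=
  AddMonoidAlgebra.supported K K s

theorem mem_SP {s : Set ℤ} {f : LaurentPolynomial K} : f ∈ SP K s ↔ ∀ i, co f i ≠ 0 → i ∈ s := by
  rw [SP, AddMonoidAlgebra.mem_supported]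
  constructor
  · intro h i hi
    exact h (Finsupp.mem_support_iff.mpr hi)
  · intro h i hi
    exact h i (Finsupp.mem_support_iff.mp hi)

theorem co_sub (f g : LaurentPolynomial K) (i : ℤ) : co (f - g) i = co f i - co g i := rfl
theorem co_smul (c : K) (f : LaurentPolynomial K) (i : ℤ) : co (c • f) i = c * co f i := rfl

theorem mulT_apply (f : LaurentPolynomial K) (d z : ℤ) : co (f * T d) z = co f (z - d) := by
  have h : (T d : LaurentPolynomial K) = AddMonoidAlgebra.single d 1 := rfl
  show (f * T d).coeff z = f.coeff (z - d)
  rw [h, AddMonoidAlgebra.coeff_mul_single_apply, mul_one, sub_eq_add_neg]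

theorem SP_fd {s : Set ℤ} (hs : s.Finite) : FiniteDimensional K (SP K s) := by
  haveI := hs.to_subtype
  have e1 : SP K s ≃ₗ[K] (s →₀ K) := AddMonoidAlgebra.supportedEquivFinsupp s
  exact Module.Finite.equiv e1.symm

theorem SP_union (s t : Set ℤ) : SP K (s ∪ t) = SP K s ⊔ SP K t := by
  simp only [SP, AddMonoidAlgebra.supported_eq_map, Finsupp.supported_union, Submodule.map_sup]

theorem SP_mono {s t : Set ℤ} (h : s ⊆ t) : SP K s ≤ SP K t := AddMonoidAlgebra.supported_mono h

theorem exists_Icc_of_fd (F : Submodule K (LaurentPolynomial K)) (hF : FiniteDimensional K F) :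
    ∃ a b : ℤ, F ≤ SP K (Set.Icc a b) := by
  obtain ⟨t, ht⟩ := Module.Finite.iff_fg.mp hF
  set u : Finset ℤ := t.sup (fun f => (co f).support) with hu
  obtain ⟨b, hb⟩ := u.finite_toSet.bddAbove
  obtain ⟨a, ha⟩ := u.finite_toSet.bddBelow
  refine ⟨a, b, ?_⟩
  rw [← ht, Submodule.span_le]
  intro f hf
  rw [SetLike.mem_coe, mem_SP]
  intro i hi
  have hsub : (co f).support ⊆ u := Finset.le_sup (f := fun f => (co f).support) hf
  have hiu : i ∈ u := hsub (Finsupp.mem_support_iff.mpr hi)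
  exact ⟨ha (Finset.mem_coe.mpr hiu), hb (Finset.mem_coe.mpr hiu)⟩

theorem aleq_of_fd_map {M : Type*} [AddCommGroup M] [Module K M] {X W : Submodule K M}
    (h : FiniteDimensional K (X.map W.mkQ)) :
    ∃ F : Submodule K M, FiniteDimensional K F ∧ X ≤ W ⊔ F := by
  obtain ⟨t, ht⟩ := Module.Finite.iff_fg.mp h
  choose g hg using W.mkQ_surjective
  refine ⟨Submodule.span K (g '' ↑t), ?_, ?_⟩
  · exact FiniteDimensional.span_of_finite K ((t.finite_toSet).image g)
  · intro x hx
    have hmk : W.mkQ x ∈ Submodule.span K (↑t : Set (M ⧸ W)) := by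
      rw [ht]; exact Submodule.mem_map_of_mem hx
    have hle : Submodule.span K (↑t : Set (M ⧸ W)) ≤
        (Submodule.span K (g '' ↑t)).map W.mkQ := by
      rw [Submodule.span_le]
      intro y hy
      exact ⟨g y, Submodule.subset_span ⟨y, hy, rfl⟩, hg y⟩
    obtain ⟨f, hf, hfx⟩ := hle hmk
    have hw : x - f ∈ W := by
      rw [← Submodule.ker_mkQ W, LinearMap.mem_ker, map_sub, hfx, sub_self]
    have hxe : x = (x - f) + f := by abel
    rw [hxe]
    exact Submodule.add_mem_sup hw hf

theorem map_self_mkQ_eq_bot {M : Type*} [AddCommGroup M] [Module K M] (W : Submodule K M) :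
    W.map W.mkQ = ⊥ := by
  rw [eq_bot_iff]
  rintro - ⟨x, hx, rfl⟩
  simpa using (Submodule.Quotient.mk_eq_zero W).mpr hx

theorem fd_map_of_aleq {M : Type*} [AddCommGroup M] [Module K M] {X W F : Submodule K M}
    (hF : FiniteDimensional K F) (h : X ≤ W ⊔ F) : FiniteDimensional K (X.map W.mkQ) := by
  have h1 : X.map W.mkQ ≤ F.map W.mkQ := by
    refine le_trans (Submodule.map_mono h) ?_
    rw [Submodule.map_sup, map_self_mkQ_eq_bot, bot_sup_eq]
  haveI : FiniteDimensional K (F.map W.mkQ) := Module.Finite.map F W.mkQ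
  exact Submodule.finiteDimensional_of_le h1

theorem fd_of_two {M : Type*} [AddCommGroup M] [Module K M] {X W₁ W₂ F₁ F₂ : Submodule K M}
    (hf₁ : FiniteDimensional K F₁)
    (hf₂ : FiniteDimensional K F₂) (h₁ : X ≤ W₁ ⊔ F₁) (h₂ : X ≤ W₂ ⊔ F₂)
    (hW : W₁ ⊓ W₂ = ⊥) : FiniteDimensional K X := by
  set φ : M →ₗ[K] (M ⧸ W₁) × (M ⧸ W₂) := (W₁.mkQ).prod (W₂.mkQ) with hφ
  have hker : LinearMap.ker φ = ⊥ := by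
    rw [hφ, LinearMap.ker_prod, Submodule.ker_mkQ, Submodule.ker_mkQ, hW]
  have hinj : Function.Injective φ := LinearMap.ker_eq_bot.mp hker
  have hle : X.map φ ≤ (F₁.map W₁.mkQ).prod (F₂.map W₂.mkQ) := by
    rintro - ⟨x, hx, rfl⟩
    constructor
    · obtain ⟨w, hw, f, hf, rfl⟩ := Submodule.mem_sup.mp (h₁ hx)
      refine ⟨f, hf, ?_⟩
      show W₁.mkQ f = W₁.mkQ (w + f)
      have hz : W₁.mkQ w = 0 := (Submodule.Quotient.mk_eq_zero W₁).mpr hw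
      rw [map_add, hz, zero_add]
    · obtain ⟨w, hw, f, hf, rfl⟩ := Submodule.mem_sup.mp (h₂ hx)
      refine ⟨f, hf, ?_⟩
      show W₂.mkQ f = W₂.mkQ (w + f)
      have hz : W₂.mkQ w = 0 := (Submodule.Quotient.mk_eq_zero W₂).mpr hw
      rw [map_add, hz, zero_add]
  haveI : FiniteDimensional K (F₁.map W₁.mkQ) := Module.Finite.map F₁ W₁.mkQ
  haveI : FiniteDimensional K (F₂.map W₂.mkQ) := Module.Finite.map F₂ W₂.mkQ
  haveI : FiniteDimensional K ((F₁.map W₁.mkQ).prod (F₂.map W₂.mkQ)) := by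
    rw [LinearMap.prod_eq_sup_map]
    haveI := Module.Finite.map (F₁.map W₁.mkQ) (LinearMap.inl K (M ⧸ W₁) (M ⧸ W₂))
    haveI := Module.Finite.map (F₂.map W₂.mkQ) (LinearMap.inr K (M ⧸ W₁) (M ⧸ W₂))
    infer_instance
  haveI : FiniteDimensional K (X.map φ) := Submodule.finiteDimensional_of_le hle
  exact Module.Finite.equiv (Submodule.equivMapOfInjective φ hinj X).symm

theorem co_mul_support (f g : LaurentPolynomial K) (i : ℤ) (h : co (f * g) i ≠ 0) :
    ∃ j l : ℤ, co f j ≠ 0 ∧ co g l ≠ 0 ∧ j + l = i := by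
  classical
  have hmem : i ∈ (co (f * g)).support := Finsupp.mem_support_iff.mpr h
  have hsub : (co (f * g)).support ⊆ (co f).support + (co g).support :=
    AddMonoidAlgebra.support_coeff_mul_subset f g
  obtain ⟨j, hj, l, hl, hjl⟩ := Finset.mem_add.mp (hsub hmem)
  exact ⟨j, l, Finsupp.mem_support_iff.mp hj, Finsupp.mem_support_iff.mp hl, hjl⟩

theorem not_fd_SP {s : Set ℤ} (hs : s.Infinite) : ¬ FiniteDimensional K (SP K s) := by
  intro h
  haveI := hs.to_subtype
  have e1 : SP K s ≃ₗ[K] (s →₀ K) := AddMonoidAlgebra.supportedEquivFinsupp s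
  haveI : FiniteDimensional K (s →₀ K) := Module.Finite.equiv e1
  have li : LinearIndependent K (fun i : s => Finsupp.single (α := s) (M := K) i 1) :=
    Finsupp.basisSingleOne.linearIndependent
  exact Module.Finite.not_linearIndependent_of_infinite _ li

theorem spanP_eq : Submodule.span K {p | ∃ k : ℤ, 0 ≤ k ∧ p = LaurentPolynomial.T (R := K) k}
    = SP K (Set.Ici 0) := by
  rw [SP, AddMonoidAlgebra.supported_eq_span_single]
  congr 1
  ext p
  constructor
  · rintro ⟨k, hk, rfl⟩; exact ⟨k, hk, rfl⟩
  · rintro ⟨k, hk, rfl⟩; exact ⟨k, hk, rfl⟩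

theorem spanN_eq : Submodule.span K {p | ∃ k : ℤ, k < 0 ∧ p = LaurentPolynomial.T (R := K) k}
    = SP K (Set.Iio 0) := by
  rw [SP, AddMonoidAlgebra.supported_eq_span_single]
  congr 1
  ext p
  constructor
  · rintro ⟨k, hk, rfl⟩; exact ⟨k, hk, rfl⟩
  · rintro ⟨k, hk, rfl⟩; exact ⟨k, hk, rfl⟩

theorem isCompl_PN : IsCompl (SP K (Set.Ici 0)) (SP K (Set.Iio 0)) := by
  constructor
  · rw [SP, SP, AddMonoidAlgebra.supported_eq_map, AddMonoidAlgebra.supported_eq_map]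
    refine Submodule.disjoint_map (AddMonoidAlgebra.coeffLinearEquiv K).symm.injective ?_
    refine Finsupp.disjoint_supported_supported ?_
    rw [Set.disjoint_left]
    intro i hi h2
    rw [Set.mem_Ici] at hi
    rw [Set.mem_Iio] at h2
    omega
  · rw [codisjoint_iff, ← SP_union]
    have : Set.Ici (0:ℤ) ∪ Set.Iio 0 = Set.univ := by
      ext i; simp only [Set.mem_union, Set.mem_Ici, Set.mem_Iio, Set.mem_univ, iff_true]; omega
    rw [this, SP]
    exact eq_top_iff.mpr fun x _ => AddMonoidAlgebra.mem_supported.mpr (Set.subset_univ _)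

end Helpers

section Cores
variable {K : Type*} [Field K]

theorem core_pos (V : Submodule K (LaurentPolynomial K)) (hV : AlmostInvariant K V) :
    (∃ F : Submodule K (LaurentPolynomial K), FiniteDimensional K F ∧ SP K (Set.Ici 0) ≤ V ⊔ F) ∨
    (∃ F : Submodule K (LaurentPolynomial K), FiniteDimensional K F ∧ V ≤ SP K (Set.Iio 0) ⊔ F) := by
  obtain ⟨F₀, hF₀, hVx₀⟩ := aleq_of_fd_map (hV (T 1))
  obtain ⟨a₀, b₀, hF₀le⟩ := exists_Icc_of_fd F₀ hF₀
  set a : ℤ := min a₀ (-1) with ha_def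
  set b : ℤ := max b₀ 0 with hb_def
  have ha : a ≤ -1 := min_le_right _ _
  have hb : 0 ≤ b := le_max_right _ _
  have hVx : V.map (LinearMap.mulRight K (T 1)) ≤ V ⊔ SP K (Set.Icc a b) :=
    hVx₀.trans (sup_le_sup le_rfl (hF₀le.trans (SP_mono
      (Set.Icc_subset_Icc (min_le_left _ _) (le_max_left _ _)))))
  by_cases hcase : V ≤ SP K (Set.Iic b)
  · right
    refine ⟨SP K (Set.Icc 0 b), SP_fd (Set.finite_Icc 0 b), ?_⟩
    have hset : Set.Iic b = Set.Iio 0 ∪ Set.Icc 0 b := by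
      ext i; simp only [Set.mem_Iic, Set.mem_union, Set.mem_Iio, Set.mem_Icc]; omega
    calc V ≤ SP K (Set.Iic b) := hcase
      _ = SP K (Set.Iio 0) ⊔ SP K (Set.Icc 0 b) := by rw [hset, SP_union]
  · left
    rw [SetLike.le_def] at hcase
    push_neg at hcase
    obtain ⟨v₀, hv₀V, hv₀n⟩ := hcase
    rw [mem_SP] at hv₀n
    push_neg at hv₀n
    obtain ⟨j, hj0, hjb⟩ := hv₀n
    rw [Set.mem_Iic] at hjb
    have hne : (co v₀).support.Nonempty := ⟨j, Finsupp.mem_support_iff.mpr hj0⟩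
    set n₀ : ℤ := (co v₀).support.max' hne with hn₀_def
    have hn₀b : b < n₀ := lt_of_not_ge (fun h => hjb ((Finset.le_max' _ j
      (Finsupp.mem_support_iff.mpr hj0)).trans h))
    set β : ℤ := min a ((co v₀).support.min' hne) with hβ_def
    have hβa : β ≤ a := min_le_left _ _
    have hv₀supp : ∀ i, co v₀ i ≠ 0 → β ≤ i ∧ i ≤ n₀ := by
      intro i hi
      have hm := Finsupp.mem_support_iff.mpr hi
      exact ⟨le_trans (min_le_right _ _) (Finset.min'_le _ i hm), Finset.le_max' _ i hm⟩
    have hv₀top : co v₀ n₀ ≠ 0 := Finsupp.mem_support_iff.mp ((co v₀).support.max'_mem hne)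
    -- the sequence of elements of V with prescribed top degree
    have seq : ∀ n : ℤ, n₀ ≤ n →
        ∃ v, v ∈ V ∧ (∀ i, co v i ≠ 0 → β ≤ i ∧ i ≤ n) ∧ co v n ≠ 0 := by
      refine Int.le_induction ?_ ?_
      · exact ⟨v₀, hv₀V, hv₀supp, hv₀top⟩
      · intro n hn ih
        obtain ⟨v, hvV, hvs, hvt⟩ := ih
        have hmem : v * T 1 ∈ V ⊔ SP K (Set.Icc a b) := by
          apply hVx
          exact ⟨v, hvV, rfl⟩
        obtain ⟨w, hw, f, hf, hsum⟩ := Submodule.mem_sup.mp hmem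
        have hwe : w = v * T 1 - f := by rw [← hsum]; abel
        have hco : ∀ i, co w i = co v (i - 1) - co f i := by
          intro i; rw [hwe, co_sub, mulT_apply]
        have hfIcc : ∀ i, co f i ≠ 0 → a ≤ i ∧ i ≤ b := by
          intro i hi
          have := mem_SP.mp hf i hi
          rwa [Set.mem_Icc] at this
        refine ⟨w, hw, ?_, ?_⟩
        · intro i hi
          rw [hco] at hi
          by_cases hv1 : co v (i - 1) ≠ 0
          · have := hvs _ hv1; omega
          · push_neg at hv1
            rw [hv1, zero_sub, neg_ne_zero] at hi
            have := hfIcc _ hi; omega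
        · rw [hco]
          have hf0 : co f (n + 1) = 0 := by
            by_contra hc
            have := hfIcc _ hc; omega
          rw [hf0, sub_zero]
          simpa using hvt
    -- spanning
    have hspan : ∀ n : ℤ, n₀ ≤ n → ∀ p : LaurentPolynomial K,
        (∀ i, co p i ≠ 0 → β ≤ i ∧ i ≤ n) → p ∈ V ⊔ SP K (Set.Icc β n₀) := by
      refine Int.le_induction ?_ ?_
      · intro p hp
        exact Submodule.mem_sup_right (mem_SP.mpr fun i hi => Set.mem_Icc.mpr (hp i hi))
      · intro n hn ih p hp
        obtain ⟨v, hvV, hvs, hvt⟩ := seq (n + 1) (by omega)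
        set d : K := co p (n + 1) / co v (n + 1) with hd_def
        set q : LaurentPolynomial K := p - d • v with hq_def
        have hq_supp : ∀ i, co q i ≠ 0 → β ≤ i ∧ i ≤ n := by
          intro i hi
          have hqi : co q i = co p i - d * co v i := by rw [hq_def, co_sub, co_smul]
          by_cases hie : i = n + 1
          · exfalso
            rw [hqi, hie, hd_def, div_mul_cancel₀ _ hvt, sub_self] at hi
            exact hi rfl
          · rw [hqi] at hi
            have h1 : co p i ≠ 0 ∨ co v i ≠ 0 := by
              by_contra hc
              push_neg at hc
              rw [hc.1, hc.2, mul_zero, sub_zero] at hi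
              exact hi rfl
            rcases h1 with h1 | h1
            · have := hp i h1; omega
            · have := hvs i h1; omega
        have hpe : p = q + d • v := by rw [hq_def]; abel
        rw [hpe]
        exact add_mem (ih q hq_supp) (Submodule.mem_sup_left (Submodule.smul_mem V d hvV))
    refine ⟨SP K (Set.Icc β n₀), SP_fd (Set.finite_Icc β n₀), ?_⟩
    intro p hp
    obtain ⟨c, hc⟩ := ((co p).support).finite_toSet.bddAbove
    apply hspan (max n₀ c) (le_max_left _ _) p
    intro i hi
    have h0 : 0 ≤ i := mem_SP.mp hp i hi
    have hic : i ≤ c := hc (Finset.mem_coe.mpr (Finsupp.mem_support_iff.mpr hi))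
    constructor
    · omega
    · exact le_trans hic (le_max_right _ _)

theorem core_neg (V : Submodule K (LaurentPolynomial K)) (hV : AlmostInvariant K V) :
    (∃ F : Submodule K (LaurentPolynomial K), FiniteDimensional K F ∧ SP K (Set.Iio 0) ≤ V ⊔ F) ∨
    (∃ F : Submodule K (LaurentPolynomial K), FiniteDimensional K F ∧ V ≤ SP K (Set.Ici 0) ⊔ F) := by
  obtain ⟨F₀, hF₀, hVx₀⟩ := aleq_of_fd_map (hV (T (-1)))
  obtain ⟨a₀, b₀, hF₀le⟩ := exists_Icc_of_fd F₀ hF₀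
  set a : ℤ := min a₀ (-1) with ha_def
  set b : ℤ := max b₀ 0 with hb_def
  have ha : a ≤ -1 := min_le_right _ _
  have hb : 0 ≤ b := le_max_right _ _
  have hVx : V.map (LinearMap.mulRight K (T (-1))) ≤ V ⊔ SP K (Set.Icc a b) :=
    hVx₀.trans (sup_le_sup le_rfl (hF₀le.trans (SP_mono
      (Set.Icc_subset_Icc (min_le_left _ _) (le_max_left _ _)))))
  by_cases hcase : V ≤ SP K (Set.Ici a)
  · right
    refine ⟨SP K (Set.Icc a (-1)), SP_fd (Set.finite_Icc a (-1)), ?_⟩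
    have hset : Set.Ici a = Set.Ici 0 ∪ Set.Icc a (-1) := by
      ext i; simp only [Set.mem_Ici, Set.mem_union, Set.mem_Icc]; omega
    calc V ≤ SP K (Set.Ici a) := hcase
      _ = SP K (Set.Ici 0) ⊔ SP K (Set.Icc a (-1)) := by rw [hset, SP_union]
  · left
    rw [SetLike.le_def] at hcase
    push_neg at hcase
    obtain ⟨v₀, hv₀V, hv₀n⟩ := hcase
    rw [mem_SP] at hv₀n
    push_neg at hv₀n
    obtain ⟨j, hj0, hja⟩ := hv₀n
    rw [Set.mem_Ici] at hja
    have hne : (co v₀).support.Nonempty := ⟨j, Finsupp.mem_support_iff.mpr hj0⟩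
    set n₀ : ℤ := (co v₀).support.min' hne with hn₀_def
    have hn₀a : n₀ < a := lt_of_le_of_lt (Finset.min'_le _ j
      (Finsupp.mem_support_iff.mpr hj0)) (by omega)
    set β : ℤ := max b ((co v₀).support.max' hne) with hβ_def
    have hβb : b ≤ β := le_max_left _ _
    have hv₀supp : ∀ i, co v₀ i ≠ 0 → n₀ ≤ i ∧ i ≤ β := by
      intro i hi
      have hm := Finsupp.mem_support_iff.mpr hi
      exact ⟨Finset.min'_le _ i hm, le_trans (Finset.le_max' _ i hm) (le_max_right _ _)⟩
    have hv₀bot : co v₀ n₀ ≠ 0 := Finsupp.mem_support_iff.mp ((co v₀).support.min'_mem hne)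
    have seq : ∀ n : ℤ, n ≤ n₀ →
        ∃ v, v ∈ V ∧ (∀ i, co v i ≠ 0 → n ≤ i ∧ i ≤ β) ∧ co v n ≠ 0 := by
      refine Int.le_induction_down ?_ ?_
      · exact ⟨v₀, hv₀V, hv₀supp, hv₀bot⟩
      · intro n hn ih
        obtain ⟨v, hvV, hvs, hvt⟩ := ih
        have hmem : v * T (-1) ∈ V ⊔ SP K (Set.Icc a b) := by
          apply hVx
          exact ⟨v, hvV, rfl⟩
        obtain ⟨w, hw, f, hf, hsum⟩ := Submodule.mem_sup.mp hmem
        have hwe : w = v * T (-1) - f := by rw [← hsum]; abel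
        have hco : ∀ i, co w i = co v (i + 1) - co f i := by
          intro i
          rw [hwe, co_sub, mulT_apply]
          norm_num
        have hfIcc : ∀ i, co f i ≠ 0 → a ≤ i ∧ i ≤ b := by
          intro i hi
          have := mem_SP.mp hf i hi
          rwa [Set.mem_Icc] at this
        refine ⟨w, hw, ?_, ?_⟩
        · intro i hi
          rw [hco] at hi
          by_cases hv1 : co v (i + 1) ≠ 0
          · have := hvs _ hv1; omega
          · push_neg at hv1
            rw [hv1, zero_sub, neg_ne_zero] at hi
            have := hfIcc _ hi; omega
        · rw [hco]
          have hf0 : co f (n - 1) = 0 := by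
            by_contra hc
            have := hfIcc _ hc; omega
          rw [hf0, sub_zero]
          simpa using hvt
    have hspan : ∀ n : ℤ, n ≤ n₀ → ∀ p : LaurentPolynomial K,
        (∀ i, co p i ≠ 0 → n ≤ i ∧ i ≤ β) → p ∈ V ⊔ SP K (Set.Icc n₀ β) := by
      refine Int.le_induction_down ?_ ?_
      · intro p hp
        exact Submodule.mem_sup_right (mem_SP.mpr fun i hi => Set.mem_Icc.mpr (hp i hi))
      · intro n hn ih p hp
        obtain ⟨v, hvV, hvs, hvt⟩ := seq (n - 1) (by omega)
        set d : K := co p (n - 1) / co v (n - 1) with hd_def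
        set q : LaurentPolynomial K := p - d • v with hq_def
        have hq_supp : ∀ i, co q i ≠ 0 → n ≤ i ∧ i ≤ β := by
          intro i hi
          have hqi : co q i = co p i - d * co v i := by rw [hq_def, co_sub, co_smul]
          by_cases hie : i = n - 1
          · exfalso
            rw [hqi, hie, hd_def, div_mul_cancel₀ _ hvt, sub_self] at hi
            exact hi rfl
          · rw [hqi] at hi
            have h1 : co p i ≠ 0 ∨ co v i ≠ 0 := by
              by_contra hc
              push_neg at hc
              rw [hc.1, hc.2, mul_zero, sub_zero] at hi
              exact hi rfl
            rcases h1 with h1 | h1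
            · have := hp i h1; omega
            · have := hvs i h1; omega
        have hpe : p = q + d • v := by rw [hq_def]; abel
        rw [hpe]
        exact add_mem (ih q hq_supp) (Submodule.mem_sup_left (Submodule.smul_mem V d hvV))
    refine ⟨SP K (Set.Icc n₀ β), SP_fd (Set.finite_Icc n₀ β), ?_⟩
    intro p hp
    obtain ⟨c, hc⟩ := ((co p).support).finite_toSet.bddBelow
    apply hspan (min n₀ c) (min_le_left _ _) p
    intro i hi
    have h0 : i < 0 := mem_SP.mp hp i hi
    have hic : c ≤ i := hc (Finset.mem_coe.mpr (Finsupp.mem_support_iff.mpr hi))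
    omega

theorem ai_P : AlmostInvariant K (SP K (Set.Ici 0)) := by
  intro x
  obtain ⟨a, b, hab⟩ := exists_Icc_of_fd (Submodule.span K {x}) (FiniteDimensional.span_of_finite K (Set.finite_singleton x))
  have hx : x ∈ SP K (Set.Icc a b) := hab (Submodule.mem_span_singleton_self x)
  set m : ℤ := min a 0 with hm_def
  apply fd_map_of_aleq (F := SP K (Set.Icc m (-1))) (SP_fd (Set.finite_Icc m (-1)))
  have hle : (SP K (Set.Ici 0)).map (LinearMap.mulRight K x) ≤ SP K (Set.Ici m) := by
    rintro - ⟨v, hv, rfl⟩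
    rw [mem_SP]
    intro i hi
    obtain ⟨j, l, hj, hl, hjl⟩ := co_mul_support v x i hi
    have h1 : (0:ℤ) ≤ j := mem_SP.mp hv j hj
    have h2 := Set.mem_Icc.mp (mem_SP.mp hx l hl)
    rw [Set.mem_Ici]; omega
  refine hle.trans ?_
  have hset : Set.Ici m = Set.Ici 0 ∪ Set.Icc m (-1) := by
    ext i; simp only [Set.mem_Ici, Set.mem_union, Set.mem_Icc]; omega
  rw [hset, SP_union]

theorem ai_N : AlmostInvariant K (SP K (Set.Iio 0)) := by
  intro x
  obtain ⟨a, b, hab⟩ := exists_Icc_of_fd (Submodule.span K {x}) (FiniteDimensional.span_of_finite K (Set.finite_singleton x))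
  have hx : x ∈ SP K (Set.Icc a b) := hab (Submodule.mem_span_singleton_self x)
  set m : ℤ := max b 0 with hm_def
  apply fd_map_of_aleq (F := SP K (Set.Icc 0 m)) (SP_fd (Set.finite_Icc 0 m))
  have hle : (SP K (Set.Iio 0)).map (LinearMap.mulRight K x) ≤ SP K (Set.Iic m) := by
    rintro - ⟨v, hv, rfl⟩
    rw [mem_SP]
    intro i hi
    obtain ⟨j, l, hj, hl, hjl⟩ := co_mul_support v x i hi
    have h1 : j < 0 := mem_SP.mp hv j hj
    have h2 := Set.mem_Icc.mp (mem_SP.mp hx l hl)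
    rw [Set.mem_Iic]; omega
  refine hle.trans ?_
  have hset : Set.Iic m = Set.Iio 0 ∪ Set.Icc 0 m := by
    ext i; simp only [Set.mem_Iic, Set.mem_union, Set.mem_Iio, Set.mem_Icc]; omega
  rw [hset, SP_union]

end Cores

/-- The Laurent polynomial algebra `K[x, x⁻¹]` has exactly two ends:
in any direct sum decomposition into three almost invariant subspaces at least one
summand is finite-dimensional, while `K[x, x⁻¹]` is the direct sum of the two
infinite-dimensional almost invariant subspaces `span{xᵏ : k ≥ 0}` and
`span{xᵏ : k < 0}`. -/
theorem laurent_algebra_two_ends (K : Type*) [Field K] :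
    (∀ V₁ V₂ V₃ : Submodule K (LaurentPolynomial K),
      AlmostInvariant K V₁ → AlmostInvariant K V₂ → AlmostInvariant K V₃ →
      (∀ a ∈ V₁, ∀ b ∈ V₂, ∀ c ∈ V₃, a + b + c = 0 → a = 0 ∧ b = 0 ∧ c = 0) →
      V₁ ⊔ V₂ ⊔ V₃ = ⊤ →
      FiniteDimensional K V₁ ∨ FiniteDimensional K V₂ ∨ FiniteDimensional K V₃) ∧
    (IsCompl
        (Submodule.span K {p | ∃ k : ℤ, 0 ≤ k ∧ p = LaurentPolynomial.T (R := K) k})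
        (Submodule.span K {p | ∃ k : ℤ, k < 0 ∧ p = LaurentPolynomial.T (R := K) k}) ∧
      AlmostInvariant K
        (Submodule.span K {p | ∃ k : ℤ, 0 ≤ k ∧ p = LaurentPolynomial.T (R := K) k}) ∧
      AlmostInvariant K
        (Submodule.span K {p | ∃ k : ℤ, k < 0 ∧ p = LaurentPolynomial.T (R := K) k}) ∧
      ¬ FiniteDimensional K
        (Submodule.span K {p | ∃ k : ℤ, 0 ≤ k ∧ p = LaurentPolynomial.T (R := K) k}) ∧
      ¬ FiniteDimensional K
        (Submodule.span K {p | ∃ k : ℤ, k < 0 ∧ p = LaurentPolynomial.T (R := K) k})) := by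
  constructor
  · intro V₁ V₂ V₃ h₁ h₂ h₃ hind _hspan
    by_contra hcon
    push_neg at hcon
    obtain ⟨hnf₁, hnf₂, hnf₃⟩ := hcon
    have mk0 : ∀ {W W' : Submodule K (LaurentPolynomial K)}, W ⊓ W' ≤ ⊥ → W ⊓ W' = ⊥ :=
      fun h => le_bot_iff.mp h
    have h12 : V₁ ⊓ V₂ = ⊥ := by
      rw [eq_bot_iff]
      rintro x ⟨hx1, hx2⟩
      have := hind x hx1 (-x) (neg_mem hx2) 0 (zero_mem V₃) (by ring)
      simpa using this.1
    have h13 : V₁ ⊓ V₃ = ⊥ := by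
      rw [eq_bot_iff]
      rintro x ⟨hx1, hx2⟩
      have := hind x hx1 0 (zero_mem V₂) (-x) (neg_mem hx2) (by ring)
      simpa using this.1
    have h23 : V₂ ⊓ V₃ = ⊥ := by
      rw [eq_bot_iff]
      rintro x ⟨hx1, hx2⟩
      have := hind 0 (zero_mem V₁) x hx1 (-x) (neg_mem hx2) (by ring)
      simpa using this.2.1
    have hNP : SP K (Set.Iio 0) ⊓ SP K (Set.Ici 0) = ⊥ :=
      disjoint_iff.mp (isCompl_PN (K := K)).disjoint.symm
    have dich : ∀ V : Submodule K (LaurentPolynomial K), AlmostInvariant K V →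
        ¬ FiniteDimensional K V →
        (∃ F : Submodule K (LaurentPolynomial K),
            FiniteDimensional K F ∧ SP K (Set.Ici 0) ≤ V ⊔ F) ∨
        (∃ F : Submodule K (LaurentPolynomial K),
            FiniteDimensional K F ∧ SP K (Set.Iio 0) ≤ V ⊔ F) := by
      intro V hV hnf
      rcases core_pos V hV with h | ⟨F₁, hF₁, hle₁⟩
      · exact Or.inl h
      rcases core_neg V hV with h | ⟨F₂, hF₂, hle₂⟩
      · exact Or.inr h
      exact absurd (fd_of_two hF₁ hF₂ hle₁ hle₂ hNP) hnf
    have pig : ∀ (W W' : Submodule K (LaurentPolynomial K)) (s : Set ℤ), s.Infinite →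
        W ⊓ W' = ⊥ →
        (∃ F : Submodule K (LaurentPolynomial K), FiniteDimensional K F ∧ SP K s ≤ W ⊔ F) →
        (∃ F : Submodule K (LaurentPolynomial K), FiniteDimensional K F ∧ SP K s ≤ W' ⊔ F) →
        False := by
      rintro W W' s hs hWW' ⟨F, hF, hle⟩ ⟨F', hF', hle'⟩
      exact not_fd_SP hs (fd_of_two hF hF' hle hle' hWW')
    have hIci : (Set.Ici (0:ℤ)).Infinite := Set.Ici_infinite 0
    have hIio : (Set.Iio (0:ℤ)).Infinite := Set.Iio_infinite 0
    rcases dich V₁ h₁ hnf₁ with d1 | d1 <;>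
      rcases dich V₂ h₂ hnf₂ with d2 | d2 <;>
        rcases dich V₃ h₃ hnf₃ with d3 | d3
    · exact pig V₁ V₂ _ hIci h12 d1 d2
    · exact pig V₁ V₂ _ hIci h12 d1 d2
    · exact pig V₁ V₃ _ hIci h13 d1 d3
    · exact pig V₂ V₃ _ hIio h23 d2 d3
    · exact pig V₂ V₃ _ hIci h23 d2 d3
    · exact pig V₁ V₃ _ hIio h13 d1 d3
    · exact pig V₁ V₂ _ hIio h12 d1 d2
    · exact pig V₁ V₂ _ hIio h12 d1 d2
  · rw [spanP_eq, spanN_eq]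
    exact ⟨isCompl_PN, ai_P, ai_N, not_fd_SP (Set.Ici_infinite 0),
      not_fd_SP (Set.Iio_infinite 0)⟩
end

section
/- Let K be a field, Γ a group, and P ⊆ Γ an almost invariant subset, i.e., for every g ∈ Γ the set Pg \ P is finite. Then the K-linear span of P inside the group algebra KΓ is an almost invariant subspace of KΓ: for every x ∈ KΓ, the quotient (span_K P + (span_K P)·x)/span_K P is finite-dimensional over K. Consequently, if the group Γ has at least k ends then the algebra KΓ has at least k ends. -/
/-- The K-linear span in the group algebra `KΓ` of a subset `P ⊆ Γ`:
the subspace of elements supported in `P`. -/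
noncomputable def spanOfSet (K : Type*) {Γ : Type*} [Field K] [Group Γ] (P : Set Γ) :
    Submodule K (MonoidAlgebra K Γ) :=
  Submodule.span K ((fun p => MonoidAlgebra.single p (1 : K)) '' P)

section Aux
variable {K Γ : Type*} [Field K] [Group Γ]

lemma spanOfSet_eq_supported (P : Set Γ) :
    spanOfSet K P = MonoidAlgebra.supported K K P := by
  rw [MonoidAlgebra.supported_eq_span_single]
  rfl

lemma mem_spanOfSet {P : Set Γ} {f : MonoidAlgebra K Γ} :
    f ∈ spanOfSet K P ↔ ↑f.coeff.support ⊆ P := by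
  rw [spanOfSet_eq_supported]
  exact MonoidAlgebra.mem_supported

lemma almostInvariant_of_set (P : Set Γ)
    (hP : ∀ g : Γ, ((fun p => p * g) '' P \ P).Finite) :
    AlmostInvariant K (spanOfSet K P) := by
  intro x
  set V := spanOfSet K P with hV
  have hS : (⋃ g ∈ (x.coeff.support : Set Γ), ((fun p => p * g) '' P \ P)).Finite :=
    Set.Finite.biUnion x.coeff.support.finite_toSet (fun g _ => hP g)
  set S := ⋃ g ∈ (x.coeff.support : Set Γ), ((fun p => p * g) '' P \ P) with hSdef
  set W := spanOfSet K S with hW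
  have hWfd : FiniteDimensional K W :=
    FiniteDimensional.span_of_finite K (hS.image _)
  have hle : V.map (LinearMap.mulRight K x) ≤ V ⊔ W := by
    rw [hV, spanOfSet, Submodule.map_span, Submodule.span_le]
    rintro _ ⟨_, ⟨p, hp, rfl⟩, rfl⟩
    simp only [LinearMap.mulRight_apply]
    have hmul : MonoidAlgebra.single p (1:K) * x
        = ∑ g ∈ x.coeff.support, (x.coeff g) • MonoidAlgebra.single (p*g) (1:K) := by
      conv_lhs => rw [← MonoidAlgebra.sum_coeff_single x]
      rw [Finsupp.sum, Finset.mul_sum]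
      refine Finset.sum_congr rfl fun g _ => ?_
      rw [MonoidAlgebra.single_mul_single, one_mul, MonoidAlgebra.smul_single', mul_one]
    rw [SetLike.mem_coe, hmul]
    refine Submodule.sum_mem _ fun g hg => Submodule.smul_mem _ _ ?_
    by_cases h : p * g ∈ P
    · exact Submodule.mem_sup_left (Submodule.subset_span ⟨_, h, rfl⟩)
    · refine Submodule.mem_sup_right (Submodule.subset_span ⟨p * g, ?_, rfl⟩)
      exact Set.mem_biUnion hg ⟨⟨p, hp, rfl⟩, h⟩
  have hVbot : V.map V.mkQ ≤ ⊥ := by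
    rw [Submodule.map_le_iff_le_comap, Submodule.comap_bot, Submodule.ker_mkQ]
  have hle2 : (V.map (LinearMap.mulRight K x)).map V.mkQ ≤ W.map V.mkQ := by
    refine (Submodule.map_mono hle).trans ?_
    rw [Submodule.map_sup]
    exact sup_le (hVbot.trans bot_le) le_rfl
  have hWmap : FiniteDimensional K (W.map V.mkQ) := by
    rw [← Submodule.fg_iff_finiteDimensional] at hWfd ⊢
    exact hWfd.map _
  exact Submodule.finiteDimensional_of_le hle2

lemma not_fd_of_infinite (P : Set Γ) (hP : P.Infinite) :
    ¬ FiniteDimensional K (spanOfSet K P) := by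
  intro hfd
  haveI : Infinite P := hP.to_subtype
  have hli : LinearIndependent K
      (fun p : P => (⟨MonoidAlgebra.single (p : Γ) (1:K),
        Submodule.subset_span ⟨p, p.2, rfl⟩⟩ : spanOfSet K P)) := by
    apply LinearIndependent.of_comp (spanOfSet K P).subtype
    have : LinearIndependent K (fun i : Γ => MonoidAlgebra.single i (1:K)) :=
      (MonoidAlgebra.basis Γ K).linearIndependent
    exact this.comp (Subtype.val : P → Γ) Subtype.val_injective
  exact Module.Finite.not_linearIndependent_of_infinite _ hli

end Aux

/-- If `P ⊆ Γ` is an almost invariant subset (for every `g`, `Pg \ P` is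
finite), then `span_K P` is an almost invariant subspace of the group algebra `KΓ`.
Consequently, if `Γ` can be partitioned into `k` disjoint infinite almost invariant
subsets, then `KΓ` is the direct sum of the `k` infinite-dimensional almost invariant
subspaces spanned by them: the group having at least `k` ends implies the algebra
`KΓ` has at least `k` ends. -/
theorem group_ends_give_algebra_ends (K Γ : Type*) [Field K] [Group Γ] :
    (∀ P : Set Γ, (∀ g : Γ, ((fun p => p * g) '' P \ P).Finite) →
      AlmostInvariant K (spanOfSet K P)) ∧
    (∀ (k : ℕ) (P : Fin k → Set Γ),
      (∀ i j, i ≠ j → Disjoint (P i) (P j)) →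
      (⋃ i, P i) = Set.univ →
      (∀ i, (P i).Infinite) →
      (∀ i, ∀ g : Γ, ((fun p => p * g) '' P i \ P i).Finite) →
      (∀ i, AlmostInvariant K (spanOfSet K (P i))) ∧
      (∀ i, ¬ FiniteDimensional K (spanOfSet K (P i))) ∧
      (∀ f : Fin k → MonoidAlgebra K Γ,
        (∀ i, f i ∈ spanOfSet K (P i)) → (∑ i, f i) = 0 → ∀ i, f i = 0) ∧
      (⨆ i, spanOfSet K (P i)) = ⊤) := by
  constructor
  · exact fun P hP => almostInvariant_of_set P hP
  · intro k P hdisj hunion hinf hai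
    refine ⟨fun i => almostInvariant_of_set _ (hai i),
      fun i => not_fd_of_infinite _ (hinf i), ?_, ?_⟩
    · intro f hf hsum i
      ext γ
      by_cases hγ : γ ∈ (f i).coeff.support
      · have hγP : γ ∈ P i := mem_spanOfSet.mp (hf i) hγ
        have hzero : ∀ j, j ≠ i → (f j).coeff γ = 0 := by
          intro j hj
          by_contra h
          have : γ ∈ P j := mem_spanOfSet.mp (hf j) (Finsupp.mem_support_iff.mpr h)
          exact (hdisj j i hj).le_bot ⟨this, hγP⟩ 
        have := congrArg (fun v : MonoidAlgebra K Γ => v.coeff γ) hsum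
        simp only [MonoidAlgebra.coeff_sum, MonoidAlgebra.coeff_zero, Finsupp.coe_zero, Pi.zero_apply] at this
        rw [Finset.sum_apply'] at this
        rw [Finset.sum_eq_single i (fun j _ hj => hzero j hj) (by simp)] at this
        simpa using this
      · simpa using Finsupp.notMem_support_iff.mp hγ
    · have : (⨆ i, spanOfSet K (P i)) = spanOfSet K (⋃ i, P i) := by
        simp only [spanOfSet, Set.image_iUnion, Submodule.span_iUnion]
      rw [this, hunion, spanOfSet_eq_supported]
      exact eq_top_iff.mpr fun x _ => MonoidAlgebra.mem_supported.mpr (Set.subset_univ _)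
end
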